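/- arXiv:1802.06742 — 14 statements merged into one kernel-verified Lean document; each statement's English description precedes it below -/
import Mathlib

section
/- Let G be a finite simple bipartite graph and let k ≥ 1. For any two proper k-colorings s and t of G, there exists a recoloring schedule from s to t of length at most 3 using colors {1,…,k+1}. -/
open SimpleGraph

/-- A proper `m`-coloring: colors in `{1,…,m}`, adjacent vertices get distinct colors. -/
def IsProperColoring {V : Type*} (G : SimpleGraph V) (m : ℕ) (x : V → ℕ) : Prop :=
  (∀ v, x v ∈ Finset.Icc 1 m) ∧ ∀ ⦃u v : V⦄, G.Adj u v → x u ≠ x v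

/-- A recoloring schedule from `s` to `t` of length `ℓ` using colors `{1,…,m}`:
a sequence of proper `m`-colorings `X 0 = s, …, X ℓ = t` such that at each step the set of
vertices that change color is an independent set. -/
def IsRecolorSchedule {V : Type*} (G : SimpleGraph V) (m : ℕ) (s t : V → ℕ)
    (ℓ : ℕ) (X : ℕ → V → ℕ) : Prop :=
  X 0 = s ∧ X ℓ = t ∧ (∀ i ≤ ℓ, IsProperColoring G m (X i)) ∧
  ∀ i, 1 ≤ i → i ≤ ℓ → ∀ ⦃u v : V⦄, G.Adj u v → X (i - 1) u = X i u ∨ X (i - 1) v = X i v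

/-- Recoloring with one extra color in bipartite graphs: schedule of length at most 3. -/
theorem stmt_0 {V : Type*} [Fintype V] (G : SimpleGraph V) (hbip : G.Colorable 2)
    (k : ℕ) (hk : 1 ≤ k) (s t : V → ℕ)
    (hs : IsProperColoring G k s) (ht : IsProperColoring G k t) :
    ∃ ℓ ≤ 3, ∃ X : ℕ → V → ℕ, IsRecolorSchedule G (k + 1) s t ℓ X := by
  obtain ⟨c⟩ := hbip
  obtain ⟨hs1, hs2⟩ := hs
  obtain ⟨ht1, ht2⟩ := ht
  have fin2 : ∀ a b : Fin 2, a ≠ b → a ≠ 0 → b ≠ 0 → False := by decide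
  have hske : ∀ v, s v ≠ k + 1 := fun v => by
    have := hs1 v; simp only [Finset.mem_Icc] at this; omega
  have htke : ∀ v, t v ≠ k + 1 := fun v => by
    have := ht1 v; simp only [Finset.mem_Icc] at this; omega
  have hsub : ∀ v, s v ∈ Finset.Icc 1 (k+1) := fun v => by
    have := hs1 v; simp only [Finset.mem_Icc] at *; omega
  have htub : ∀ v, t v ∈ Finset.Icc 1 (k+1) := fun v => by
    have := ht1 v; simp only [Finset.mem_Icc] at *; omega
  refine ⟨3, le_refl 3, fun i v =>
    if i = 0 then s v
    else if i = 1 then (if c v = 0 then k + 1 else s v)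
    else if i = 2 then (if c v = 0 then k + 1 else t v)
    else t v, ?_, ?_, ?_, ?_⟩
  · simp
  · simp
  · intro i _
    constructor
    · intro v
      dsimp only
      split
      · exact hsub v
      split
      · split
        · simp [Finset.mem_Icc]
        · exact hsub v
      split
      · split
        · simp [Finset.mem_Icc]
        · exact htub v
      · exact htub v
    · intro u v huv
      have hcne : c u ≠ c v := c.valid huv
      rcases Nat.eq_zero_or_pos i with h0 | h0
      · simp only [h0, if_pos rfl]; exact hs2 huv
      have h0' : i ≠ 0 := by omega
      simp only [if_neg h0']
      by_cases h1 : i = 1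
      · simp only [h1, if_pos rfl]
        by_cases hu : c u = 0 <;> by_cases hv : c v = 0 <;> simp [hu, hv]
        · exact (hcne (hu.trans hv.symm)).elim
        · exact (hske v).symm ∘ Eq.symm ∘ Eq.symm
        · exact hske u
        · exact hs2 huv
      simp only [if_neg h1]
      by_cases h2 : i = 2
      · simp only [h2, if_pos rfl]
        by_cases hu : c u = 0 <;> by_cases hv : c v = 0 <;> simp [hu, hv]
        · exact (hcne (hu.trans hv.symm)).elim
        · exact fun h => (htke v) h.symm
        · exact htke u
        · exact ht2 huv
      · simp only [if_neg h2]; exact ht2 huv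
  · intro i hi1 hi3 u v huv
    have hcne : c u ≠ c v := c.valid huv
    have hvne : c u = 0 → c v ≠ 0 := fun h h' => hcne (h.trans h'.symm)
    have hv0 : c u ≠ 0 → c v = 0 := fun h => by
      by_contra h'; exact fin2 _ _ hcne h h'
    interval_cases i
    · by_cases hu : c u = 0
      · right; simp [hvne hu]
      · left; simp [hu]
    · by_cases hu : c u = 0
      · left; simp [hu]
      · right; simp [hv0 hu]
    · by_cases hu : c u = 0
      · right; simp [hvne hu]
      · left; simp [hu]
end

section
/- There is an absolute constant C such that the following holds: for every finite tree T of radius at most p (p ≥ 0) and any two proper 3-colorings α and β of T, there exists a recoloring schedule from α to β of length at most C·(p+1) using colors {1,2,3}. -/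
open SimpleGraph

namespace Stmt1Helper

/-- The 3-cycle `1 ↦ 2 ↦ 3 ↦ 1` on colors (sending garbage to 1). -/
def sig (x : ℕ) : ℕ := if x = 1 then 2 else if x = 2 then 3 else 1

lemma sig_ne (x : ℕ) : sig x ≠ x := by unfold sig; split_ifs <;> omega

lemma sig_sig_ne (x : ℕ) : sig (sig x) ≠ x := by unfold sig; split_ifs <;> omega

lemma sig_mem (x : ℕ) : sig x ∈ Finset.Icc 1 3 := by
  unfold sig; split_ifs <;> decide

lemma sig_inj {x y : ℕ} (hx : x ∈ Finset.Icc 1 3) (hy : y ∈ Finset.Icc 1 3)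
    (h : sig x = sig y) : x = y := by
  simp only [Finset.mem_Icc] at hx hy
  unfold sig at h; split_ifs at h <;> omega

lemma iter_mem {x : ℕ} (hx : x ∈ Finset.Icc 1 3) (k : ℕ) : sig^[k] x ∈ Finset.Icc 1 3 := by
  induction k with
  | zero => simpa using hx
  | succ n ih => rw [Function.iterate_succ_apply']; exact sig_mem _

lemma iter_swap (k : ℕ) (x : ℕ) : sig^[k] (sig x) = sig (sig^[k] x) := by
  rw [← Function.iterate_succ_apply, Function.iterate_succ_apply']

lemma exists_pow {a b : ℕ} (ha : a ∈ Finset.Icc 1 3) (hb : b ∈ Finset.Icc 1 3) :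
    ∃ e ≤ 2, sig^[e] a = b := by
  simp only [Finset.mem_Icc] at ha hb
  obtain ⟨ha1, ha3⟩ := ha
  obtain ⟨hb1, hb3⟩ := hb
  interval_cases a <;> interval_cases b <;>
    first
      | exact ⟨0, by omega, rfl⟩
      | exact ⟨1, by omega, rfl⟩
      | exact ⟨2, by omega, rfl⟩

section Sched

variable {V : Type} {G : SimpleGraph V} {m : ℕ}

lemma comp {s t u : V → ℕ} {ℓ ℓ' : ℕ} {X Y : ℕ → V → ℕ}
    (h1 : IsRecolorSchedule G m s t ℓ X) (h2 : IsRecolorSchedule G m t u ℓ' Y) :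
    IsRecolorSchedule G m s u (ℓ + ℓ') (fun i => if i ≤ ℓ then X i else Y (i - ℓ)) := by
  obtain ⟨hx0, hxl, hxp, hxs⟩ := h1
  obtain ⟨hy0, hyl, hyp, hys⟩ := h2
  set Z : ℕ → V → ℕ := fun i => if i ≤ ℓ then X i else Y (i - ℓ) with hZ
  have hZle : ∀ i, i ≤ ℓ → Z i = X i := by
    intro i hi; simp only [hZ, if_pos hi]
  have hZge : ∀ i, ℓ ≤ i → Z i = Y (i - ℓ) := by
    intro i hi
    by_cases h : i ≤ ℓ
    · have : i = ℓ := le_antisymm h hi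
      subst this
      simp only [hZ, if_pos le_rfl, Nat.sub_self, hy0, hxl]
    · simp only [hZ, if_neg h]
  refine ⟨by rw [hZle 0 (Nat.zero_le _), hx0], ?_, ?_, ?_⟩
  · rw [hZge (ℓ + ℓ') (Nat.le_add_right _ _), Nat.add_sub_cancel_left, hyl]
  · intro i hi
    by_cases h : i ≤ ℓ
    · rw [hZle i h]; exact hxp i h
    · rw [hZge i (by omega)]; exact hyp (i - ℓ) (by omega)
  · intro i hi1 hi2 a b hab
    by_cases h : i ≤ ℓ
    · rw [hZle i h, hZle (i - 1) (by omega)]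
      exact hxs i hi1 h hab
    · rw [hZge i (by omega), hZge (i - 1) (by omega)]
      have key := hys (i - ℓ) (by omega) (by omega) hab
      have e : i - 1 - ℓ = i - ℓ - 1 := by omega
      rw [e]
      exact key

lemma rev {s t : V → ℕ} {ℓ : ℕ} {X : ℕ → V → ℕ}
    (h : IsRecolorSchedule G m s t ℓ X) :
    IsRecolorSchedule G m t s ℓ (fun i => X (ℓ - i)) := by
  obtain ⟨hx0, hxl, hxp, hxs⟩ := h
  refine ⟨by simpa, by simpa [Nat.sub_self], ?_, ?_⟩
  · intro i hi; exact hxp (ℓ - i) (by omega)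
  · intro i hi1 hi2 a b hab
    have key := hxs (ℓ - i + 1) (by omega) (by omega) hab
    have e1 : ℓ - i + 1 - 1 = ℓ - i := by omega
    have e2 : ℓ - (i - 1) = ℓ - i + 1 := by omega
    rw [e1] at key
    simp only [e2]
    rcases key with key | key
    · exact Or.inl key.symm
    · exact Or.inr key.symm

end Sched

section Tree

variable {V : Type} [DecidableEq V] {G : SimpleGraph V}

/-- The pipelined recoloring chain: `chain r par α k v` is the color of `v` after it has
performed `k` moves, each move adopting `sig` of its parent's previous value. -/
def chain (r : V) (par : V → V) (α : V → ℕ) : ℕ → V → ℕ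
  | 0 => α
  | k + 1 => fun v => if v = r then α r else sig (chain r par α k (par v))

lemma chain_root (r : V) (par : V → V) (α : V → ℕ) (k : ℕ) :
    chain r par α k r = α r := by
  cases k <;> simp [chain]

lemma chain_mem (r : V) (par : V → V) (α : V → ℕ)
    (hα : ∀ v, α v ∈ Finset.Icc 1 3) (k : ℕ) (v : V) :
    chain r par α k v ∈ Finset.Icc 1 3 := by
  induction k generalizing v with
  | zero => exact hα v
  | succ n ih =>
    simp only [chain]
    split_ifs
    · exact hα r
    · exact sig_mem _

lemma chain_proper (r : V) (par : V → V) (α : V → ℕ)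
    (hα : IsProperColoring G 3 α)
    (hpadj : ∀ v, v ≠ r → G.Adj (par v) v)
    (horient : ∀ ⦃u v⦄, G.Adj u v → (v ≠ r ∧ par v = u) ∨ (u ≠ r ∧ par u = v))
    (k : ℕ) : IsProperColoring G 3 (chain r par α k) := by
  induction k with
  | zero => exact hα
  | succ n ih =>
    refine ⟨chain_mem r par α hα.1 _, ?_⟩
    have key : ∀ a b : V, G.Adj a b → b ≠ r → par b = a →
        chain r par α (n + 1) a ≠ chain r par α (n + 1) b := by
      intro a b hab hbr hpb
      have hb : chain r par α (n + 1) b = sig (chain r par α n a) := by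
        simp only [chain, if_neg hbr, hpb]
      rw [hb]
      by_cases har : a = r
      · rw [har, chain_root]
        intro hc
        exact sig_ne (chain r par α n r) (by rw [← hc, chain_root])
      · have ha : chain r par α (n + 1) a = sig (chain r par α n (par a)) := by
          simp only [chain, if_neg har]
        rw [ha]
        intro hc
        have := sig_inj (chain_mem r par α hα.1 _ _) (chain_mem r par α hα.1 _ _) hc
        exact ih.2 (hpadj a har) this
    intro u v huv
    rcases horient huv with ⟨h1, h2⟩ | ⟨h1, h2⟩
    · exact key u v huv h1 h2
    · exact (key v u huv.symm h1 h2).symm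

lemma chain_stab (r : V) (par : V → V) (α : V → ℕ) (δ : V → ℕ)
    (hδr : δ r = 0)
    (hpd : ∀ v, v ≠ r → δ (par v) + 1 = δ v) :
    ∀ n v, δ v = n → ∀ k, n ≤ k → chain r par α k v = sig^[n] (α r) := by
  intro n
  induction n using Nat.strong_induction_on with
  | _ n ih =>
    intro v hv k hk
    by_cases hvr : v = r
    · rw [hvr] at hv
      rw [hvr, chain_root]
      obtain rfl : n = 0 := by omega
      rfl
    · have hd := hpd v hvr
      obtain ⟨m, rfl⟩ : ∃ m, n = m + 1 := ⟨δ (par v), by omega⟩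
      obtain ⟨k', rfl⟩ : ∃ k', k = k' + 1 := ⟨k - 1, by omega⟩
      have hstep : chain r par α (k' + 1) v = sig (chain r par α k' (par v)) := by
        simp only [chain, if_neg hvr]
      rw [hstep, ih m (by omega) (par v) (by omega) k' (by omega)]
      exact (Function.iterate_succ_apply' sig m (α r)).symm

lemma phase1 (r : V) (par : V → V) (δ : V → ℕ) (p : ℕ) (α : V → ℕ)
    (hα : IsProperColoring G 3 α)
    (hpadj : ∀ v, v ≠ r → G.Adj (par v) v)
    (hδr : δ r = 0)
    (hpd : ∀ v, v ≠ r → δ (par v) + 1 = δ v)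
    (hdp : ∀ v, δ v ≤ p)
    (horient : ∀ ⦃u v⦄, G.Adj u v →
      (v ≠ r ∧ par v = u ∧ δ u + 1 = δ v) ∨ (u ≠ r ∧ par u = v ∧ δ v + 1 = δ u)) :
    IsRecolorSchedule G 3 α (fun v => sig^[δ v] (α r)) (2 * p)
      (fun t v => chain r par α ((t + δ v + 1 - p) / 2) v) := by
  have horient' : ∀ ⦃u v⦄, G.Adj u v → (v ≠ r ∧ par v = u) ∨ (u ≠ r ∧ par u = v) := by
    intro u v h
    rcases horient h with ⟨h1, h2, _⟩ | ⟨h1, h2, _⟩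
    · exact Or.inl ⟨h1, h2⟩
    · exact Or.inr ⟨h1, h2⟩
  refine ⟨?_, ?_, ?_, ?_⟩
  · funext v
    show chain r par α ((0 + δ v + 1 - p) / 2) v = α v
    have h0 : (0 + δ v + 1 - p) / 2 = 0 := by have := hdp v; omega
    rw [h0]
    rfl
  · funext v
    show chain r par α ((2 * p + δ v + 1 - p) / 2) v = sig^[δ v] (α r)
    exact chain_stab r par α δ hδr hpd (δ v) v rfl _ (by have := hdp v; omega)
  · intro t ht
    refine ⟨fun v => chain_mem r par α hα.1 _ _, ?_⟩
    intro u v huv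
    have key : ∀ a b : V, G.Adj a b → b ≠ r → par b = a → δ a + 1 = δ b →
        chain r par α ((t + δ a + 1 - p) / 2) a ≠ chain r par α ((t + δ b + 1 - p) / 2) b := by
      intro a b hab hbr hpb hd
      have hij : (t + δ b + 1 - p) / 2 = (t + δ a + 1 - p) / 2 ∨
          (t + δ b + 1 - p) / 2 = (t + δ a + 1 - p) / 2 + 1 := by omega
      rcases hij with h | h
      · rw [h]
        exact (chain_proper r par α hα hpadj horient' _).2 hab
      · rw [h]
        have hb : chain r par α ((t + δ a + 1 - p) / 2 + 1) b =
            sig (chain r par α ((t + δ a + 1 - p) / 2) a) := by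
          simp only [chain, if_neg hbr, hpb]
        rw [hb]
        exact (sig_ne _).symm
    rcases horient huv with ⟨h1, h2, h3⟩ | ⟨h1, h2, h3⟩
    · exact key u v huv h1 h2 h3
    · exact (key v u huv.symm h1 h2 h3).symm
  · intro i hi1 hi2 u v huv
    have h3 : δ u + 1 = δ v ∨ δ v + 1 = δ u := by
      rcases horient huv with ⟨_, _, h⟩ | ⟨_, _, h⟩
      · exact Or.inl h
      · exact Or.inr h
    have key : (i - 1 + δ u + 1 - p) / 2 = (i + δ u + 1 - p) / 2 ∨
        (i - 1 + δ v + 1 - p) / 2 = (i + δ v + 1 - p) / 2 := by omega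
    rcases key with h | h
    · left
      show chain r par α ((i - 1 + δ u + 1 - p) / 2) u = chain r par α ((i + δ u + 1 - p) / 2) u
      rw [h]
    · right
      show chain r par α ((i - 1 + δ v + 1 - p) / 2) v = chain r par α ((i + δ v + 1 - p) / 2) v
      rw [h]

omit [DecidableEq V] in
lemma rot (δ : V → ℕ) (p : ℕ) (c : ℕ)
    (hdp : ∀ v, δ v ≤ p)
    (hadj : ∀ ⦃u v⦄, G.Adj u v → δ u + 1 = δ v ∨ δ v + 1 = δ u)
    (hc : c ∈ Finset.Icc 1 3) :
    IsRecolorSchedule G 3 (fun v => sig^[δ v] c) (fun v => sig^[δ v] (sig c)) (p + 1)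
      (fun t v => if p + 1 ≤ t + δ v then sig^[δ v] (sig c) else sig^[δ v] c) := by
  refine ⟨?_, ?_, ?_, ?_⟩
  · funext v
    show (if p + 1 ≤ 0 + δ v then sig^[δ v] (sig c) else sig^[δ v] c) = sig^[δ v] c
    rw [if_neg (by have := hdp v; omega)]
  · funext v
    show (if p + 1 ≤ p + 1 + δ v then sig^[δ v] (sig c) else sig^[δ v] c) = sig^[δ v] (sig c)
    rw [if_pos (by omega)]
  · intro t ht
    constructor
    · intro v
      show (if p + 1 ≤ t + δ v then sig^[δ v] (sig c) else sig^[δ v] c) ∈ Finset.Icc 1 3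
      split_ifs
      · exact iter_mem (sig_mem c) _
      · exact iter_mem hc _
    · intro u v huv
      have key : ∀ a b : V, G.Adj a b → δ a + 1 = δ b →
          (if p + 1 ≤ t + δ a then sig^[δ a] (sig c) else sig^[δ a] c) ≠
          (if p + 1 ≤ t + δ b then sig^[δ b] (sig c) else sig^[δ b] c) := by
        intro a b hab hd
        have hb : δ b = δ a + 1 := hd.symm
        rw [hb]
        split_ifs with h1 h2 h2
        · rw [Function.iterate_succ_apply']
          exact (sig_ne _).symm
        · exact absurd h1 (by omega)
        · rw [Function.iterate_succ_apply', iter_swap]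
          exact (sig_sig_ne _).symm
        · rw [Function.iterate_succ_apply']
          exact (sig_ne _).symm
      rcases hadj huv with hd | hd
      · exact key u v huv hd
      · exact (key v u huv.symm hd).symm
  · intro i hi1 hi2 u v huv
    have key : ∀ a : V, i + δ a ≠ p + 1 →
        (if p + 1 ≤ i - 1 + δ a then sig^[δ a] (sig c) else sig^[δ a] c) =
        (if p + 1 ≤ i + δ a then sig^[δ a] (sig c) else sig^[δ a] c) := by
      intro a ha
      have he : (p + 1 ≤ i - 1 + δ a) = (p + 1 ≤ i + δ a) := by
        apply propext; constructor <;> (intro; omega)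
      simp only [he]
    have hd := hadj huv
    by_cases h : i + δ u = p + 1
    · exact Or.inr (key v (by omega))
    · exact Or.inl (key u h)

end Tree

end Stmt1Helper

open Stmt1Helper in
/-- 3-recoloring of trees of radius at most `p`: there is a schedule of length `O(p)`. -/
theorem stmt_1 :
    ∃ C : ℕ, ∀ (V : Type) [Fintype V] (G : SimpleGraph V), G.IsTree →
      ∀ p : ℕ, (∃ r : V, ∀ v : V, G.dist r v ≤ p) →
      ∀ α β : V → ℕ, IsProperColoring G 3 α → IsProperColoring G 3 β →
      ∃ ℓ ≤ C * (p + 1), ∃ X : ℕ → V → ℕ, IsRecolorSchedule G 3 α β ℓ X := by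
  classical
  refine ⟨8, ?_⟩
  intro V _ G hT p hr α β hα hβ
  obtain ⟨r, hrad⟩ := hr
  have hconn := hT.isConnected
  have hδr : G.dist r r = 0 := dist_self
  -- every non-root vertex has a neighbor strictly closer to the root
  have exists_par : ∀ v, v ≠ r → ∃ u, G.Adj u v ∧ G.dist r u + 1 = G.dist r v := by
    intro v hv
    have hdv : G.dist r v ≠ 0 :=
      dist_ne_zero_iff_ne_and_reachable.mpr ⟨Ne.symm hv, hconn.preconnected r v⟩
    obtain ⟨w, hwp, hwl⟩ := hconn.exists_path_of_dist r v
    have hnil : ¬ w.reverse.Nil := Walk.not_nil_of_ne hv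
    obtain ⟨u, hadj, q, hq⟩ := Walk.not_nil_iff.mp hnil
    refine ⟨u, hadj.symm, ?_⟩
    have hlq : q.length + 1 = G.dist r v := by
      have h := congrArg Walk.length hq
      rw [Walk.length_reverse, hwl, Walk.length_cons] at h
      omega
    have h1 : G.dist r u ≤ q.length := by
      rw [dist_comm]
      exact dist_le q
    have h2 : G.dist r v ≤ G.dist r u + 1 := by
      calc G.dist r v ≤ G.dist r u + G.dist u v := hconn.dist_triangle
        _ = G.dist r u + 1 := by rw [dist_eq_one_iff_adj.mpr hadj.symm]
    omega
  -- the parent function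
  set par : V → V := fun v => if h : v = r then r else (exists_par v h).choose with hpar
  have hpadj : ∀ v, v ≠ r → G.Adj (par v) v := by
    intro v hv
    simp only [hpar, dif_neg hv]
    exact (exists_par v hv).choose_spec.1
  have hpd : ∀ v, v ≠ r → G.dist r (par v) + 1 = G.dist r v := by
    intro v hv
    simp only [hpar, dif_neg hv]
    exact (exists_par v hv).choose_spec.2
  -- adjacent vertices are at different distances from the root (since G is a tree)
  have hne : ∀ ⦃u v⦄, G.Adj u v → G.dist r u ≠ G.dist r v := by
    intro u v h heq
    obtain ⟨w, hwp, hwl⟩ := hconn.exists_path_of_dist r u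
    by_cases hmem : v ∈ w.support
    · have h1 : G.dist r v ≤ (w.takeUntil v hmem).length := dist_le _
      have h2 := Walk.length_takeUntil_le w hmem
      have hspec := Walk.take_spec w hmem
      have hlen : (w.takeUntil v hmem).length + (w.dropUntil v hmem).length = w.length := by
        rw [← Walk.length_append, hspec]
      have h0 : (w.dropUntil v hmem).length = 0 := by omega
      have := Walk.eq_of_length_eq_zero h0
      exact (G.ne_of_adj h) this.symm
    · have hQ : (w.concat h).IsPath := by
        rw [← Walk.isPath_reverse_iff, Walk.reverse_concat]
        exact (hwp.reverse).cons (by rwa [Walk.support_reverse, List.mem_reverse])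
      obtain ⟨w', hwp', hwl'⟩ := hconn.exists_path_of_dist r v
      obtain ⟨P, hP, hPuniq⟩ := hT.existsUnique_path r v
      have e1 := hPuniq _ hQ
      have e2 := hPuniq _ hwp'
      have e3 : (w.concat h).length = w'.length := by rw [e1, e2]
      rw [Walk.length_concat, hwl, hwl'] at e3
      omega
  have hdiff : ∀ ⦃u v⦄, G.Adj u v → G.dist r u + 1 = G.dist r v ∨ G.dist r v + 1 = G.dist r u := by
    intro u v h
    have h1 : G.dist r v ≤ G.dist r u + 1 := by
      calc G.dist r v ≤ G.dist r u + G.dist u v := hconn.dist_triangle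
        _ = G.dist r u + 1 := by rw [dist_eq_one_iff_adj.mpr h]
    have h2 : G.dist r u ≤ G.dist r v + 1 := by
      calc G.dist r u ≤ G.dist r v + G.dist v u := hconn.dist_triangle
        _ = G.dist r v + 1 := by rw [dist_eq_one_iff_adj.mpr h.symm]
    have := hne h
    omega
  -- uniqueness of the closer neighbor (the parent) in a tree
  have huniq : ∀ ⦃u u' v : V⦄, G.Adj u v → G.Adj u' v →
      G.dist r u + 1 = G.dist r v → G.dist r u' + 1 = G.dist r v → u = u' := by
    intro u u' v h h' hd hd'
    obtain ⟨w, hwp, hwl⟩ := hconn.exists_path_of_dist r u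
    obtain ⟨w', hwp', hwl'⟩ := hconn.exists_path_of_dist r u'
    have hv : v ∉ w.support := by
      intro hmem
      have h1 : G.dist r v ≤ (w.takeUntil v hmem).length := dist_le _
      have h2 := Walk.length_takeUntil_le w hmem
      omega
    have hv' : v ∉ w'.support := by
      intro hmem
      have h1 : G.dist r v ≤ (w'.takeUntil v hmem).length := dist_le _
      have h2 := Walk.length_takeUntil_le w' hmem
      omega
    have hQ : (w.concat h).IsPath := by
      rw [← Walk.isPath_reverse_iff, Walk.reverse_concat]
      exact (hwp.reverse).cons (by rwa [Walk.support_reverse, List.mem_reverse])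
    have hQ' : (w'.concat h').IsPath := by
      rw [← Walk.isPath_reverse_iff, Walk.reverse_concat]
      exact (hwp'.reverse).cons (by rwa [Walk.support_reverse, List.mem_reverse])
    obtain ⟨P, hP, hPuniq⟩ := hT.existsUnique_path r v
    have e1 := hPuniq _ hQ
    have e2 := hPuniq _ hQ'
    obtain ⟨hv12, -⟩ := Walk.concat_inj (e1.trans e2.symm)
    exact hv12
  have horient : ∀ ⦃u v⦄, G.Adj u v →
      (v ≠ r ∧ par v = u ∧ G.dist r u + 1 = G.dist r v) ∨
      (u ≠ r ∧ par u = v ∧ G.dist r v + 1 = G.dist r u) := by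
    intro u v h
    rcases hdiff h with hd | hd
    · left
      have hvr : v ≠ r := by
        intro e
        rw [e, hδr] at hd
        omega
      exact ⟨hvr, huniq (hpadj v hvr) h (hpd v hvr) hd, hd⟩
    · right
      have hur : u ≠ r := by
        intro e
        rw [e, hδr] at hd
        omega
      exact ⟨hur, huniq (hpadj u hur) h.symm (hpd u hur) hd, hd⟩
  -- assemble the three phases
  have S1 := phase1 (G := G) r par (fun v => G.dist r v) p α hα hpadj hδr hpd hrad horient
  have S3' := phase1 (G := G) r par (fun v => G.dist r v) p β hβ hpadj hδr hpd hrad horient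
  have S3 := rev S3'
  obtain ⟨e, he2, hee⟩ := exists_pow (hα.1 r) (hβ.1 r)
  interval_cases e
  · -- α r = β r
    simp only [Function.iterate_zero_apply] at hee
    rw [hee] at S1
    exact ⟨2 * p + 2 * p, by omega, _, comp S1 S3⟩
  · simp only [Function.iterate_one] at hee
    have R1 := rot (G := G) (fun v => G.dist r v) p (α r) hrad hdiff (hα.1 r)
    rw [hee] at R1
    exact ⟨2 * p + ((p + 1) + 2 * p), by omega, _, comp S1 (comp R1 S3)⟩
  · have hee2 : sig (sig (α r)) = β r := hee
    have R1 := rot (G := G) (fun v => G.dist r v) p (α r) hrad hdiff (hα.1 r)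
    have R2 := rot (G := G) (fun v => G.dist r v) p (sig (α r)) hrad hdiff (sig_mem _)
    rw [hee2] at R2
    exact ⟨2 * p + ((p + 1) + ((p + 1) + 2 * p)), by omega, _, comp S1 (comp R1 (comp R2 S3))⟩
end

section
/- There is an absolute constant C such that the following holds: for every finite tree T of radius at most p (p ≥ 0), every list assignment L giving each vertex of T a finite set of at least 3 colors, and any two L-colorings α and β of T, there exists an L-recoloring schedule from α to β of length at most C·(p+1). -/
open SimpleGraph

/-- An `L`-coloring for a list assignment `L`: each vertex gets a color from its list,
adjacent vertices get distinct colors. -/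
def IsLColoring {V : Type*} (G : SimpleGraph V) (L : V → Finset ℕ) (c : V → ℕ) : Prop :=
  (∀ v, c v ∈ L v) ∧ ∀ ⦃u v : V⦄, G.Adj u v → c u ≠ c v

/-- An `L`-recoloring schedule from `α` to `β` of length `ℓ`: a sequence of `L`-colorings
`X 0 = α, …, X ℓ = β` such that at each step the set of vertices that change color is an
independent set. -/
def IsLRecolorSchedule {V : Type*} (G : SimpleGraph V) (L : V → Finset ℕ) (α β : V → ℕ)
    (ℓ : ℕ) (X : ℕ → V → ℕ) : Prop :=
  X 0 = α ∧ X ℓ = β ∧ (∀ i ≤ ℓ, IsLColoring G L (X i)) ∧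
  ∀ i, 1 ≤ i → i ≤ ℓ → ∀ ⦃u v : V⦄, G.Adj u v → X (i - 1) u = X i u ∨ X (i - 1) v = X i v

/-- Pick an element of `s` different from `a` and `b` (if possible). -/
noncomputable def pick2 (s : Finset ℕ) (a b : ℕ) : ℕ :=
  if h : (s \ {a, b}).Nonempty then (s \ {a, b}).min' h else 0

lemma pick2_spec {s : Finset ℕ} (h3 : 3 ≤ s.card) (a b : ℕ) :
    pick2 s a b ∈ s ∧ pick2 s a b ≠ a ∧ pick2 s a b ≠ b := by
  have hne : (s \ {a, b}).Nonempty := by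
    rcases Finset.eq_empty_or_nonempty (s \ {a, b}) with h | h
    · exfalso
      have hsub : s ⊆ {a, b} := Finset.sdiff_eq_empty_iff_subset.mp h
      have h1 := Finset.card_le_card hsub
      have h2 : ({a, b} : Finset ℕ).card ≤ 2 := by
        apply le_trans (Finset.card_insert_le _ _)
        simp
      omega
    · exact h
  have hm : pick2 s a b ∈ s \ {a, b} := by
    rw [pick2, dif_pos hne]
    exact (s \ {a, b}).min'_mem hne
  rw [Finset.mem_sdiff, Finset.mem_insert, Finset.mem_singleton] at hm
  exact ⟨hm.1, fun h => hm.2 (Or.inl h), fun h => hm.2 (Or.inr h)⟩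

/-- The color sequence of a vertex `v` over time, defined by recursion on the level of `v`.
Until time `p - lev v` the vertex keeps its initial color `al v`; from time `p + lev v + 3`
on it has its final color `be v`; in between, at each of its "turns" it picks a color of its
list avoiding the current and the next color of its parent. -/
noncomputable def seqv {V : Type} (p : ℕ) (L : V → Finset ℕ) (al be : V → ℕ)
    (par : V → V) (lev : V → ℕ) (hpar : ∀ v, lev v ≠ 0 → lev (par v) < lev v)
    (v : V) (t : ℕ) : ℕ :=
  if t + lev v ≤ p then al v
  else if p + lev v + 3 ≤ t then be v
  else if h0 : lev v = 0 then pick2 (L v) 0 0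
  else
    pick2 (L v)
      (seqv p L al be par lev hpar (par v) (t - (t + lev v + p + 1) % 2))
      (seqv p L al be par lev hpar (par v) (t - (t + lev v + p + 1) % 2 + 1))
termination_by lev v
decreasing_by all_goals exact hpar v h0

section SeqvLemmas

variable {V : Type} {p : ℕ} {L : V → Finset ℕ} {al be : V → ℕ}
  {par : V → V} {lev : V → ℕ}

lemma seqv_eq (hpar : ∀ v, lev v ≠ 0 → lev (par v) < lev v) (v : V) (t : ℕ) :
    seqv p L al be par lev hpar v t =
      if t + lev v ≤ p then al v
      else if p + lev v + 3 ≤ t then be v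
      else if lev v = 0 then pick2 (L v) 0 0
      else
        pick2 (L v)
          (seqv p L al be par lev hpar (par v) (t - (t + lev v + p + 1) % 2))
          (seqv p L al be par lev hpar (par v) (t - (t + lev v + p + 1) % 2 + 1)) := by
  rw [seqv]
  split_ifs <;> rfl

lemma seqv_alpha (hpar : ∀ v, lev v ≠ 0 → lev (par v) < lev v) {v : V} {t : ℕ}
    (h : t + lev v ≤ p) : seqv p L al be par lev hpar v t = al v := by
  rw [seqv_eq, if_pos h]

lemma seqv_beta (hpar : ∀ v, lev v ≠ 0 → lev (par v) < lev v) {v : V} {t : ℕ}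
    (h : p + lev v + 3 ≤ t) : seqv p L al be par lev hpar v t = be v := by
  rw [seqv_eq, if_neg (by omega), if_pos h]

lemma seqv_mid (hpar : ∀ v, lev v ≠ 0 → lev (par v) < lev v) {v : V} {t : ℕ}
    (h0 : lev v ≠ 0) (h1 : p < t + lev v) (h2 : t < p + lev v + 3) :
    seqv p L al be par lev hpar v t =
      pick2 (L v)
        (seqv p L al be par lev hpar (par v) (t - (t + lev v + p + 1) % 2))
        (seqv p L al be par lev hpar (par v) (t - (t + lev v + p + 1) % 2 + 1)) := by
  rw [seqv_eq, if_neg (by omega), if_neg (by omega), if_neg h0]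

lemma seqv_mid_root (hpar : ∀ v, lev v ≠ 0 → lev (par v) < lev v) {v : V} {t : ℕ}
    (h0 : lev v = 0) (h1 : p < t + lev v) (h2 : t < p + lev v + 3) :
    seqv p L al be par lev hpar v t = pick2 (L v) 0 0 := by
  rw [seqv_eq, if_neg (by omega), if_neg (by omega), if_pos h0]

lemma seqv_mem (hpar : ∀ v, lev v ≠ 0 → lev (par v) < lev v) {v : V}
    (h3 : 3 ≤ (L v).card) (ha : al v ∈ L v) (hb : be v ∈ L v) (t : ℕ) :
    seqv p L al be par lev hpar v t ∈ L v := by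
  rw [seqv_eq]
  split_ifs
  · exact ha
  · exact hb
  · exact (pick2_spec h3 _ _).1
  · exact (pick2_spec h3 _ _).1

/-- Key properness lemma: the sequence of a vertex differs from the one of its parent
at all times. -/
lemma seqv_parent_ne (hpar : ∀ v, lev v ≠ 0 → lev (par v) < lev v) {v : V}
    (h3 : 3 ≤ (L v).card) (h0 : lev v ≠ 0)
    (hlp : lev (par v) + 1 = lev v) (hlv : lev v ≤ p)
    (hal : al (par v) ≠ al v) (hbe : be (par v) ≠ be v) (t : ℕ) :
    seqv p L al be par lev hpar (par v) t ≠ seqv p L al be par lev hpar v t := by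
  rcases le_or_gt (t + lev v) p with h1 | h1
  · rw [seqv_alpha hpar h1, seqv_alpha hpar (show t + lev (par v) ≤ p by omega)]
    exact hal
  · rcases le_or_gt (p + lev v + 3) t with h2 | h2
    · rw [seqv_beta hpar h2, seqv_beta hpar (show p + lev (par v) + 3 ≤ t by omega)]
      exact hbe
    · rw [seqv_mid hpar h0 h1 h2]
      have hr : (t + lev v + p + 1) % 2 = 0 ∨ (t + lev v + p + 1) % 2 = 1 := by omega
      have ht1 : 1 ≤ t := by omega
      have ht : t = t - (t + lev v + p + 1) % 2 ∨
          t = t - (t + lev v + p + 1) % 2 + 1 := by omega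
      rcases ht with ht | ht
      · intro h
        apply (pick2_spec h3
          (seqv p L al be par lev hpar (par v) (t - (t + lev v + p + 1) % 2))
          (seqv p L al be par lev hpar (par v) (t - (t + lev v + p + 1) % 2 + 1))).2.1
        rw [← h, ← ht]
      · intro h
        apply (pick2_spec h3
          (seqv p L al be par lev hpar (par v) (t - (t + lev v + p + 1) % 2))
          (seqv p L al be par lev hpar (par v) (t - (t + lev v + p + 1) % 2 + 1))).2.2
        rw [← h, ← ht]

/-- A vertex only changes color at times of its own parity. -/
lemma seqv_const (hpar : ∀ v, lev v ≠ 0 → lev (par v) < lev v) {v : V}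
    (hlv : lev v ≤ p) {t : ℕ} (hodd : (t + 1 + lev v + p + 1) % 2 = 1) :
    seqv p L al be par lev hpar v (t + 1) = seqv p L al be par lev hpar v t := by
  rcases le_or_gt (t + 1 + lev v) p with h1 | h1
  · rw [seqv_alpha hpar h1, seqv_alpha hpar (by omega)]
  · rcases le_or_gt (p + lev v + 3) (t + 1) with h2 | h2
    · have h2' : p + lev v + 3 ≤ t := by omega
      rw [seqv_beta hpar h2, seqv_beta hpar h2']
    · have h1' : p < t + lev v := by omega
      have h2'' : t < p + lev v + 3 := by omega
      by_cases h0 : lev v = 0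
      · rw [seqv_mid_root hpar h0 (by omega) h2, seqv_mid_root hpar h0 h1' h2'']
      · rw [seqv_mid hpar h0 (by omega) h2, seqv_mid hpar h0 h1' h2'']
        have hσ : t + 1 - (t + 1 + lev v + p + 1) % 2 = t - (t + lev v + p + 1) % 2 := by
          omega
        rw [hσ]

end SeqvLemmas

/-- Main auxiliary result, stated with an abstract level/parent structure. -/
theorem recolor_aux {V : Type} (G : SimpleGraph V) (p : ℕ) (L : V → Finset ℕ)
    (α β : V → ℕ) (lev : V → ℕ) (par : V → V)
    (hlev : ∀ v, lev v ≤ p)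
    (hL : ∀ v, 3 ≤ (L v).card)
    (hα : IsLColoring G L α) (hβ : IsLColoring G L β)
    (hpar : ∀ v, lev v ≠ 0 → G.Adj (par v) v ∧ lev (par v) + 1 = lev v)
    (hadj_lev : ∀ u v, G.Adj u v → lev u ≤ lev v → lev v = lev u + 1 ∧ u = par v) :
    ∃ ℓ ≤ 3 * (p + 1), ∃ X : ℕ → V → ℕ, IsLRecolorSchedule G L α β ℓ X := by
  have hpar0 : ∀ v, lev v ≠ 0 → lev (par v) < lev v := by
    intro v hv
    have h := (hpar v hv).2
    omega
  have mem : ∀ v t, seqv p L α β par lev hpar0 v t ∈ L v :=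
    fun v t => seqv_mem hpar0 (hL v) (hα.1 v) (hβ.1 v) t
  have half : ∀ u v : V, G.Adj u v → lev u ≤ lev v → ∀ t,
      seqv p L α β par lev hpar0 u t ≠ seqv p L α β par lev hpar0 v t := by
    intro u v huv hle t
    obtain ⟨hdv, hu_par⟩ := hadj_lev u v huv hle
    have h0 : lev v ≠ 0 := by omega
    rw [hu_par]
    exact seqv_parent_ne hpar0 (hL v) h0 (hpar v h0).2 (hlev v)
      (hα.2 (hpar v h0).1) (hβ.2 (hpar v h0).1) t
  have edge_ne : ∀ u v : V, G.Adj u v → ∀ t,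
      seqv p L α β par lev hpar0 u t ≠ seqv p L α β par lev hpar0 v t := by
    intro u v huv t
    rcases le_total (lev u) (lev v) with hle | hle
    · exact half u v huv hle t
    · exact (half v u huv.symm hle t).symm
  refine ⟨2 * p + 3, by omega, fun t v => seqv p L α β par lev hpar0 v t, ?_, ?_, ?_, ?_⟩
  · funext v
    exact seqv_alpha hpar0 (by have := hlev v; omega)
  · funext v
    exact seqv_beta hpar0 (by have := hlev v; omega)
  · intro i _
    exact ⟨fun v => mem v i, fun u v huv => edge_ne u v huv i⟩
  · intro i h1 hi u v huv
    by_contra hcon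
    push_neg at hcon
    obtain ⟨hu, hv⟩ := hcon
    have key : ∀ w : V, seqv p L α β par lev hpar0 w (i - 1) ≠ seqv p L α β par lev hpar0 w i →
        (i + lev w + p + 1) % 2 = 0 := by
      intro w hw
      by_contra h
      have hodd : (i - 1 + 1 + lev w + p + 1) % 2 = 1 := by omega
      have hc := seqv_const (L := L) (al := α) (be := β) hpar0 (hlev w) hodd
      rw [show i - 1 + 1 = i from by omega] at hc
      exact hw hc.symm
    have pu := key u hu
    have pv := key v hv
    rcases le_total (lev u) (lev v) with hle | hle
    · have := (hadj_lev u v huv hle).1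
      omega
    · have := (hadj_lev v u huv.symm hle).1
      omega

/-- List-recoloring with lists of size at least 3 in trees of radius at most `p`:
there is a schedule of length `O(p)`. -/
theorem stmt_2 :
    ∃ C : ℕ, ∀ (V : Type) [Fintype V] (G : SimpleGraph V), G.IsTree →
      ∀ p : ℕ, (∃ r : V, ∀ v : V, G.dist r v ≤ p) →
      ∀ L : V → Finset ℕ, (∀ v, 3 ≤ (L v).card) →
      ∀ α β : V → ℕ, IsLColoring G L α → IsLColoring G L β →
      ∃ ℓ ≤ C * (p + 1), ∃ X : ℕ → V → ℕ, IsLRecolorSchedule G L α β ℓ X := by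
  refine ⟨3, ?_⟩
  intro V _ G hT p hrad L hL α β hα hβ
  classical
  obtain ⟨r, hrp⟩ := hrad
  have hconn : G.Connected := hT.isConnected
  -- adjacency increases the distance from `r` by at most one
  have L1 : ∀ u v : V, G.Adj u v → G.dist r v ≤ G.dist r u + 1 := by
    intro u v huv
    obtain ⟨w, hw⟩ := hconn.exists_walk_length_eq_dist r u
    have h := SimpleGraph.dist_le (w.concat huv)
    rwa [SimpleGraph.Walk.length_concat, hw] at h
  -- adjacent vertices have distances from `r` differing by exactly one
  have L2 : ∀ u v : V, G.Adj u v → G.dist r u ≤ G.dist r v →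
      G.dist r v = G.dist r u + 1 := by
    intro u v huv hle
    have hub := L1 u v huv
    rcases eq_or_lt_of_le hle with heq | hlt
    · exfalso
      obtain ⟨wu, hwu⟩ := hconn.exists_walk_length_eq_dist r u
      have hPu : wu.IsPath := wu.isPath_of_length_eq_dist hwu
      have hvs : v ∉ wu.support := by
        intro hv
        have hd1 : G.dist r v ≤ (wu.takeUntil v hv).length := SimpleGraph.dist_le _
        have hd2 : G.dist v u ≤ (wu.dropUntil v hv).length := SimpleGraph.dist_le _
        have hsum : (wu.takeUntil v hv).length + (wu.dropUntil v hv).length = wu.length := by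
          have h := congrArg SimpleGraph.Walk.length (wu.take_spec hv)
          rwa [SimpleGraph.Walk.length_append] at h
        have hvu : G.dist v u ≠ 0 := by
          rw [ne_eq, hconn.dist_eq_zero_iff]
          exact huv.ne'
        omega
      have hQ : (wu.concat huv).IsPath := by
        rw [← SimpleGraph.Walk.isPath_reverse_iff, SimpleGraph.Walk.reverse_concat]
        exact SimpleGraph.Walk.IsPath.cons hPu.reverse
          (by rwa [SimpleGraph.Walk.support_reverse, List.mem_reverse])
      obtain ⟨wv, hwv⟩ := hconn.exists_walk_length_eq_dist r v
      have hPv : wv.IsPath := wv.isPath_of_length_eq_dist hwv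
      have hEq := (hT.existsUnique_path r v).unique hQ hPv
      have hlen := congrArg SimpleGraph.Walk.length hEq
      rw [SimpleGraph.Walk.length_concat, hwu, hwv] at hlen
      omega
    · omega
  -- existence of a parent
  have L3 : ∀ v : V, G.dist r v ≠ 0 → ∃ u, G.Adj u v ∧ G.dist r u + 1 = G.dist r v := by
    intro v hv
    obtain ⟨w, hw⟩ := hconn.exists_walk_length_eq_dist r v
    have hne : v ≠ r := by
      intro h
      subst h
      rw [SimpleGraph.dist_self] at hv
      exact hv rfl
    obtain ⟨u, hadj, w', hw'⟩ := SimpleGraph.Walk.exists_eq_cons_of_ne hne w.reverse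
    have hlen : w'.length + 1 = G.dist r v := by
      have h := congrArg SimpleGraph.Walk.length hw'
      rw [SimpleGraph.Walk.length_reverse, SimpleGraph.Walk.length_cons] at h
      omega
    have h1 : G.dist r u ≤ w'.length := by
      have h := SimpleGraph.dist_le w'.reverse
      rwa [SimpleGraph.Walk.length_reverse] at h
    have h2 := L1 u v hadj.symm
    exact ⟨u, hadj.symm, by omega⟩
  -- uniqueness of the parent
  have L4 : ∀ u u' v : V, G.Adj u v → G.Adj u' v → G.dist r u + 1 = G.dist r v →
      G.dist r u' + 1 = G.dist r v → u = u' := by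
    intro u u' v hu hu' hdu hdu'
    have mk : ∀ a : V, ∀ ha : G.Adj a v, G.dist r a + 1 = G.dist r v →
        ∃ wa : G.Walk r a, (wa.concat ha).IsPath := by
      intro a ha hda
      obtain ⟨wa, hwa⟩ := hconn.exists_walk_length_eq_dist r a
      have hPa : wa.IsPath := wa.isPath_of_length_eq_dist hwa
      have hvs : v ∉ wa.support := by
        intro hv
        have hd1 : G.dist r v ≤ (wa.takeUntil v hv).length := SimpleGraph.dist_le _
        have hd2 := SimpleGraph.Walk.length_takeUntil_le wa hv
        omega
      refine ⟨wa, ?_⟩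
      rw [← SimpleGraph.Walk.isPath_reverse_iff, SimpleGraph.Walk.reverse_concat]
      exact SimpleGraph.Walk.IsPath.cons hPa.reverse
        (by rwa [SimpleGraph.Walk.support_reverse, List.mem_reverse])
    obtain ⟨wu, hQu⟩ := mk u hu hdu
    obtain ⟨wu', hQu'⟩ := mk u' hu' hdu'
    have hEq := (hT.existsUnique_path r v).unique hQu hQu'
    obtain ⟨hv, -⟩ := SimpleGraph.Walk.concat_inj hEq
    exact hv
  -- choose the parent function
  have hex : ∀ v : V, ∃ u : V, G.dist r v ≠ 0 → G.Adj u v ∧ G.dist r u + 1 = G.dist r v := by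
    intro v
    by_cases hv : G.dist r v = 0
    · exact ⟨v, fun h => absurd hv h⟩
    · obtain ⟨u, h⟩ := L3 v hv
      exact ⟨u, fun _ => h⟩
  choose par hparspec using hex
  -- apply the auxiliary theorem
  refine recolor_aux G p L α β (fun v => G.dist r v) par hrp hL hα hβ ?_ ?_
  · intro v hv
    exact hparspec v hv
  · intro u v huv hle
    have hdv := L2 u v huv hle
    have h0 : G.dist r v ≠ 0 := by omega
    refine ⟨hdv, L4 u (par v) v huv (hparspec v h0).1 (by omega) (hparspec v h0).2⟩
end

section
/- Let G be a finite simple graph of maximum degree at most Δ, let k ≥ Δ+2, let c ≥ 0, and let L ≥ 0. Suppose that for every pair of proper (k−1)-colorings s', t' of G there exists a recoloring schedule from s' to t' of length at most L using colors {1,…,k+c}. Then for every pair of proper k-colorings s, t of G there exists a recoloring schedule from s to t of length at most L+2 using colors {1,…,k+c}. -/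
open SimpleGraph

lemma isProperColoring_mono {V : Type*} (G : SimpleGraph V) {m m' : ℕ} (h : m ≤ m')
    {x : V → ℕ} (hx : IsProperColoring G m x) : IsProperColoring G m' x := by
  refine ⟨fun v => ?_, hx.2⟩
  have := hx.1 v
  simp only [Finset.mem_Icc] at *
  omega

/-- From a proper `k`-coloring, produce a proper `(k-1)`-coloring changing only
vertices colored `k`. -/
lemma step_down {V : Type*} [Fintype V] (G : SimpleGraph V) [DecidableRel G.Adj]
    (Δ : ℕ) (hΔ : ∀ v : V, G.degree v ≤ Δ) (k : ℕ) (hk : Δ + 2 ≤ k)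
    (x : V → ℕ) (hx : IsProperColoring G k x) :
    ∃ x', IsProperColoring G (k - 1) x' ∧ ∀ v, x v ≠ k → x' v = x v := by
  have free : ∀ v : V, ∃ a, a ∈ Finset.Icc 1 (k - 1) ∧
      ∀ u ∈ G.neighborFinset v, x u ≠ a := by
    intro v
    have hcard : ((G.neighborFinset v).image x).card < (Finset.Icc 1 (k - 1)).card := by
      have h1 : ((G.neighborFinset v).image x).card ≤ G.degree v :=
        (Finset.card_image_le).trans_eq (G.card_neighborFinset_eq_degree v)
      have h2 := hΔ v
      rw [Nat.card_Icc]
      omega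
    have hns : ¬ Finset.Icc 1 (k - 1) ⊆ (G.neighborFinset v).image x := by
      intro hsub
      exact absurd (Finset.card_le_card hsub) (by omega)
    obtain ⟨a, ha, hna⟩ := Finset.not_subset.1 hns
    exact ⟨a, ha, fun u hu hua => hna (Finset.mem_image.2 ⟨u, hu, hua⟩)⟩
  choose f hf1 hf2 using free
  classical
  refine ⟨fun v => if x v = k then f v else x v, ⟨fun v => ?_, ?_⟩, fun v hv => if_neg hv⟩
  · by_cases h : x v = k
    · simpa [h] using hf1 v
    · have := hx.1 v
      simp only [Finset.mem_Icc] at *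
      simp only [if_neg h]
      omega
  · intro u v huv
    by_cases hu : x u = k <;> by_cases hv : x v = k
    · exact absurd (hu.trans hv.symm) (hx.2 huv)
    · simp only [if_pos hu, if_neg hv]
      exact fun h => hf2 u v ((G.mem_neighborFinset u v).2 huv) h.symm
    · simp only [if_neg hu, if_pos hv]
      exact fun h => hf2 v u ((G.mem_neighborFinset v u).2 huv.symm) h
    · simpa [if_neg hu, if_neg hv] using hx.2 huv

/-- If `k ≥ Δ + 2`, then `k`-recoloring with `c` extra colors reduces to `(k-1)`-recoloring
with `c + 1` extra colors, at the cost of two extra steps in the schedule. -/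
theorem stmt_4 {V : Type*} [Fintype V] (G : SimpleGraph V) [DecidableRel G.Adj]
    (Δ : ℕ) (hΔ : ∀ v : V, G.degree v ≤ Δ)
    (k : ℕ) (hk : Δ + 2 ≤ k) (c : ℕ) (L : ℕ)
    (hyp : ∀ s' t' : V → ℕ, IsProperColoring G (k - 1) s' → IsProperColoring G (k - 1) t' →
      ∃ ℓ ≤ L, ∃ X : ℕ → V → ℕ, IsRecolorSchedule G (k + c) s' t' ℓ X) :
    ∀ s t : V → ℕ, IsProperColoring G k s → IsProperColoring G k t →
      ∃ ℓ ≤ L + 2, ∃ X : ℕ → V → ℕ, IsRecolorSchedule G (k + c) s t ℓ X := by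
  intro s t hs ht
  obtain ⟨s', hs', hss⟩ := step_down G Δ hΔ k hk s hs
  obtain ⟨t', ht', htt⟩ := step_down G Δ hΔ k hk t ht
  obtain ⟨ℓ, hℓ, X, hX0, hXℓ, hXp, hXind⟩ := hyp s' t' hs' ht'
  classical
  refine ⟨ℓ + 2, by omega, fun i => if i = 0 then s else if i ≤ ℓ + 1 then X (i - 1) else t,
    ?_, ?_, ?_, ?_⟩
  · simp
  · simp
  · intro i hi
    by_cases h0 : i = 0
    · simpa [h0] using isProperColoring_mono G (by omega) hs
    · by_cases h1 : i ≤ ℓ + 1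
      · simp only [if_neg h0, if_pos h1]
        exact hXp (i - 1) (by omega)
      · simp only [if_neg h0, if_neg h1]
        exact isProperColoring_mono G (by omega) ht
  · intro i hi1 hiℓ u v huv
    by_cases h1 : i = 1
    · subst h1
      simp only [Nat.sub_self, if_pos rfl, if_neg (by omega : (1:ℕ) ≠ 0),
        if_pos (by omega : (1:ℕ) ≤ ℓ + 1), Nat.sub_self, hX0]
      by_cases hu : s u = k
      · right
        have hv : s v ≠ k := fun h => hs.2 huv (hu.trans h.symm)
        exact (hss v hv).symm
      · exact Or.inl (hss u hu).symm
    · by_cases h2 : i ≤ ℓ + 1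
      · have e1 : (if i - 1 = 0 then s else if i - 1 ≤ ℓ + 1 then X (i - 1 - 1) else t)
            = X (i - 1 - 1) := by
          rw [if_neg (by omega), if_pos (by omega)]
        have e2 : (if i = 0 then s else if i ≤ ℓ + 1 then X (i - 1) else t) = X (i - 1) := by
          rw [if_neg (by omega), if_pos h2]
        simp only [e1, e2]
        have := hXind (i - 1) (by omega) (by omega) huv
        simpa using this
      · have hi : i = ℓ + 2 := by omega
        subst hi
        have e1 : (if ℓ + 2 - 1 = 0 then s else if ℓ + 2 - 1 ≤ ℓ + 1 then X (ℓ + 2 - 1 - 1) else t)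
            = t' := by
          rw [if_neg (by omega), if_pos (by omega)]
          simpa using hXℓ
        have e2 : (if ℓ + 2 = 0 then s else if ℓ + 2 ≤ ℓ + 1 then X (ℓ + 2 - 1) else t) = t := by
          rw [if_neg (by omega), if_neg (by omega)]
        simp only [e1, e2]
        by_cases hu : t u = k
        · right
          have hv : t v ≠ k := fun h => ht.2 huv (hu.trans h.symm)
          exact htt v hv
        · exact Or.inl (htt u hu)
end

section
/- There is an absolute constant C such that for every finite simple graph G of maximum degree at most 3 and any two proper 4-colorings s and t of G, there exists a recoloring schedule from s to t of length at most C using colors {1,2,3,4,5}. -/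
open SimpleGraph

section Aux

variable {V : Type} [Fintype V]

/-- Step A of round `c`: vertices currently colored `c` whose target is not `c` move to 5. -/
def stepA (t : V → ℕ) (c : ℕ) (x : V → ℕ) : V → ℕ :=
  fun v => if x v = c ∧ t v ≠ c then 5 else x v

/-- Step B of round `c`: all vertices with target color `c` move to `c`. -/
def stepB (t : V → ℕ) (c : ℕ) (x : V → ℕ) : V → ℕ :=
  fun v => if t v = c then c else x v

/-- A color in `{1,…,4}` avoiding all current colors of neighbors of `v`. -/
noncomputable def pick (G : SimpleGraph V) [DecidableRel G.Adj] (x : V → ℕ) (v : V) : ℕ :=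
  if h : (Finset.Icc 1 4 \ (G.neighborFinset v).image x).Nonempty then h.choose else 1

/-- Step C: clear color 5 greedily. -/
noncomputable def stepC (G : SimpleGraph V) [DecidableRel G.Adj] (x : V → ℕ) : V → ℕ :=
  fun v => if x v = 5 then pick G x v else x v

/-- Invariant at the start of round `c`. -/
def RecolInv (G : SimpleGraph V) (t : V → ℕ) (c : ℕ) (x : V → ℕ) : Prop :=
  IsProperColoring G 5 x ∧ (∀ v, x v ≠ 5) ∧ ∀ v, t v < c → x v = t v

lemma pick_spec (G : SimpleGraph V) [DecidableRel G.Adj] (x : V → ℕ) (v : V)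
    (hdeg : G.degree v ≤ 3) :
    pick G x v ∈ Finset.Icc 1 4 ∧ ∀ u, G.Adj v u → x u ≠ pick G x v := by
  have hne : (Finset.Icc 1 4 \ (G.neighborFinset v).image x).Nonempty := by
    rw [← Finset.card_pos]
    have h1 : ((G.neighborFinset v).image x).card ≤ 3 := by
      refine le_trans Finset.card_image_le ?_
      rw [SimpleGraph.card_neighborFinset_eq_degree]; exact hdeg
    have h2 : (Finset.Icc 1 4 : Finset ℕ).card = 4 := by rw [Nat.card_Icc]
    have h3 := Finset.le_card_sdiff ((G.neighborFinset v).image x) (Finset.Icc 1 4)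
    omega
  have hmem : pick G x v ∈ Finset.Icc 1 4 \ (G.neighborFinset v).image x := by
    rw [pick, dif_pos hne]
    exact hne.choose_spec
  rw [Finset.mem_sdiff] at hmem
  refine ⟨hmem.1, fun u hu hx => hmem.2 ?_⟩
  exact Finset.mem_image.mpr ⟨u, by simpa [SimpleGraph.mem_neighborFinset] using hu, hx⟩

lemma round_step (G : SimpleGraph V) [DecidableRel G.Adj]
    (hdeg : ∀ v, G.degree v ≤ 3) (t : V → ℕ) (ht : IsProperColoring G 4 t)
    (c : ℕ) (hc1 : 1 ≤ c) (hc4 : c ≤ 4) (x : V → ℕ) (hx : RecolInv G t c x) :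
    IsProperColoring G 5 (stepA t c x) ∧
    IsProperColoring G 5 (stepB t c (stepA t c x)) ∧
    RecolInv G t (c + 1) (stepC G (stepB t c (stepA t c x))) ∧
    (∀ ⦃u v⦄, G.Adj u v → x u = stepA t c x u ∨ x v = stepA t c x v) ∧
    (∀ ⦃u v⦄, G.Adj u v →
      stepA t c x u = stepB t c (stepA t c x) u ∨ stepA t c x v = stepB t c (stepA t c x) v) ∧
    (∀ ⦃u v⦄, G.Adj u v →
      stepB t c (stepA t c x) u = stepC G (stepB t c (stepA t c x)) u ∨
      stepB t c (stepA t c x) v = stepC G (stepB t c (stepA t c x)) v) := by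
  obtain ⟨⟨hxm, hxp⟩, hx5, hxfix⟩ := hx
  set x1 := stepA t c x with hx1def
  set x2 := stepB t c x1 with hx2def
  set x3 := stepC G x2 with hx3def
  -- basic facts about x1
  have hA : ∀ v, x1 v = 5 ∨ x1 v = x v := by
    intro v
    by_cases h : x v = c ∧ t v ≠ c
    · left; simp [hx1def, stepA, h]
    · right; simp [hx1def, stepA, h]
  have hA5 : ∀ v, x1 v = 5 → x v = c := by
    intro v h
    by_cases hc : x v = c ∧ t v ≠ c
    · exact hc.1
    · exfalso; rw [hx1def] at h; simp only [stepA, if_neg hc] at h; exact hx5 v h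
  have hAc : ∀ v, x1 v = c → t v = c := by
    intro v h
    by_cases hc : x v = c ∧ t v ≠ c
    · exfalso; rw [hx1def] at h; simp only [stepA, if_pos hc] at h; omega
    · rw [hx1def] at h; simp only [stepA, if_neg hc] at h
      push_neg at hc; exact hc h
  -- x1 is proper
  have hp1 : IsProperColoring G 5 x1 := by
    constructor
    · intro v
      rcases hA v with h | h <;> rw [h]
      · simp
      · exact hxm v
    · intro u v huv
      rcases hA u with hu | hu <;> rcases hA v with hv | hv <;> rw [hu, hv]
      · exact fun h => hxp huv (by rw [hA5 u hu, hA5 v hv])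
      · exact fun h => hx5 v h.symm
      · exact fun h => hx5 u h
      · exact hxp huv
  -- x2 facts
  have hB : ∀ v, (t v = c ∧ x2 v = c) ∨ (t v ≠ c ∧ x2 v = x1 v) := by
    intro v
    by_cases h : t v = c
    · left; exact ⟨h, by simp [hx2def, stepB, h]⟩
    · right; exact ⟨h, by simp [hx2def, stepB, h]⟩
  -- x2 is proper
  have hp2 : IsProperColoring G 5 x2 := by
    constructor
    · intro v
      rcases hB v with ⟨_, h⟩ | ⟨_, h⟩ <;> rw [h]
      · simp; omega
      · exact hp1.1 v
    · intro u v huv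
      rcases hB u with ⟨htu, hu⟩ | ⟨htu, hu⟩ <;> rcases hB v with ⟨htv, hv⟩ | ⟨htv, hv⟩ <;>
        rw [hu, hv]
      · exact absurd (htu.trans htv.symm) (ht.2 huv)
      · exact fun h => htv (hAc v h.symm)
      · exact fun h => htu (hAc u h)
      · exact hp1.2 huv
  -- x3 facts
  have hC : ∀ v, (x2 v = 5 ∧ x3 v = pick G x2 v) ∨ (x2 v ≠ 5 ∧ x3 v = x2 v) := by
    intro v
    by_cases h : x2 v = 5
    · left; exact ⟨h, by simp [hx3def, stepC, h]⟩
    · right; exact ⟨h, by simp [hx3def, stepC, h]⟩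
  have hp3 : IsProperColoring G 5 x3 := by
    constructor
    · intro v
      rcases hC v with ⟨_, h⟩ | ⟨_, h⟩ <;> rw [h]
      · have := (pick_spec G x2 v (hdeg v)).1
        simp only [Finset.mem_Icc] at this ⊢; omega
      · exact hp2.1 v
    · intro u v huv
      rcases hC u with ⟨h5u, hu⟩ | ⟨h5u, hu⟩ <;> rcases hC v with ⟨h5v, hv⟩ | ⟨h5v, hv⟩ <;>
        rw [hu, hv]
      · exact absurd (h5u.trans h5v.symm) (hp2.2 huv)
      · exact fun h => (pick_spec G x2 u (hdeg u)).2 v huv h.symm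
      · exact fun h => (pick_spec G x2 v (hdeg v)).2 u huv.symm h
      · exact hp2.2 huv
  refine ⟨hp1, hp2, ⟨hp3, ?_, ?_⟩, ?_, ?_, ?_⟩
  · -- no color 5 in x3
    intro v
    rcases hC v with ⟨_, h⟩ | ⟨h5, h⟩ <;> rw [h]
    · have := (pick_spec G x2 v (hdeg v)).1
      simp only [Finset.mem_Icc] at this; omega
    · exact h5
  · -- vertices with target < c + 1 are fixed
    intro v hv
    have hvc : t v = c ∨ t v < c := by omega
    have hx2v : x2 v = t v := by
      rcases hvc with h | h
      · rcases hB v with ⟨_, h2⟩ | ⟨htv, _⟩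
        · rw [h2, h]
        · exact absurd h htv
      · have hxv : x v = t v := hxfix v h
        have hx1v : x1 v = x v := by
          rw [hx1def]; simp only [stepA]
          rw [if_neg]; rintro ⟨h1, _⟩; omega
        rcases hB v with ⟨htv, _⟩ | ⟨_, h2⟩
        · omega
        · rw [h2, hx1v, hxv]
    rcases hC v with ⟨h5, h⟩ | ⟨_, h⟩
    · have : t v ≤ 4 := by
        have := (ht.1 v); simp only [Finset.mem_Icc] at this; omega
      omega
    · rw [h, hx2v]
  · -- step A changes an independent set
    intro u v huv
    by_cases hu : x u = c ∧ t u ≠ c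
    · by_cases hv : x v = c ∧ t v ≠ c
      · exact absurd (hu.1.trans hv.1.symm) (hxp huv)
      · right; rw [hx1def]; simp [stepA, hv]
    · left; rw [hx1def]; simp [stepA, hu]
  · -- step B changes an independent set
    intro u v huv
    by_cases hu : t u = c
    · by_cases hv : t v = c
      · exact absurd (hu.trans hv.symm) (ht.2 huv)
      · right; rw [hx2def]; simp [stepB, hv]
    · left; rw [hx2def]; simp [stepB, hu]
  · -- step C changes an independent set
    intro u v huv
    by_cases hu : x2 u = 5
    · right
      have hv : x2 v ≠ 5 := fun h => hp2.2 huv (hu.trans h.symm)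
      rw [hx3def]; simp [stepC, hv]
    · left; rw [hx3def]; simp [stepC, hu]

end Aux

/-- 4+1 recoloring in subcubic graphs: a schedule of constant length always exists. -/
theorem stmt_5 :
    ∃ C : ℕ, ∀ (V : Type) [Fintype V] (G : SimpleGraph V) [DecidableRel G.Adj],
      (∀ v : V, G.degree v ≤ 3) →
      ∀ s t : V → ℕ, IsProperColoring G 4 s → IsProperColoring G 4 t →
      ∃ ℓ ≤ C, ∃ X : ℕ → V → ℕ, IsRecolorSchedule G 5 s t ℓ X := by
  refine ⟨12, fun V _ G _ hdeg s t hs ht => ?_⟩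
  have hs5 : IsProperColoring G 5 s := by
    refine ⟨fun v => ?_, hs.2⟩
    have := hs.1 v; simp only [Finset.mem_Icc] at this ⊢; omega
  have inv1 : RecolInv G t 1 s := by
    refine ⟨hs5, fun v h => ?_, fun v hv => ?_⟩
    · have := hs.1 v; simp only [Finset.mem_Icc] at this; omega
    · have := ht.1 v; simp only [Finset.mem_Icc] at this; omega
  obtain ⟨p1, p2, inv2, d1, d2, d3⟩ :=
    round_step G hdeg t ht 1 (by norm_num) (by norm_num) s inv1
  set x1 := stepA t 1 s
  set x2 := stepB t 1 x1
  set x3 := stepC G x2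
  obtain ⟨p4, p5, inv3, d4, d5, d6⟩ :=
    round_step G hdeg t ht 2 (by norm_num) (by norm_num) x3 inv2
  set x4 := stepA t 2 x3
  set x5 := stepB t 2 x4
  set x6 := stepC G x5
  obtain ⟨p7, p8, inv4, d7, d8, d9⟩ :=
    round_step G hdeg t ht 3 (by norm_num) (by norm_num) x6 inv3
  set x7 := stepA t 3 x6
  set x8 := stepB t 3 x7
  set x9 := stepC G x8
  obtain ⟨p10, p11, inv5, d10, d11, d12⟩ :=
    round_step G hdeg t ht 4 (by norm_num) (by norm_num) x9 inv4
  set x10 := stepA t 4 x9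
  set x11 := stepB t 4 x10
  set x12 := stepC G x11
  have hx12 : x12 = t := by
    funext v
    refine inv5.2.2 v ?_
    have := ht.1 v; simp only [Finset.mem_Icc] at this; omega
  refine ⟨12, le_rfl, fun i => match i with
    | 0 => s | 1 => x1 | 2 => x2 | 3 => x3 | 4 => x4 | 5 => x5 | 6 => x6
    | 7 => x7 | 8 => x8 | 9 => x9 | 10 => x10 | 11 => x11 | _ + 12 => x12,
    rfl, hx12, ?_, ?_⟩
  · intro i hi
    interval_cases i
    · exact hs5
    · exact p1
    · exact p2
    · exact inv2.1
    · exact p4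
    · exact p5
    · exact inv3.1
    · exact p7
    · exact p8
    · exact inv4.1
    · exact p10
    · exact p11
    · exact inv5.1
  · intro i hi1 hi2
    interval_cases i
    · exact fun u v h => d1 h
    · exact fun u v h => d2 h
    · exact fun u v h => d3 h
    · exact fun u v h => d4 h
    · exact fun u v h => d5 h
    · exact fun u v h => d6 h
    · exact fun u v h => d7 h
    · exact fun u v h => d8 h
    · exact fun u v h => d9 h
    · exact fun u v h => d10 h
    · exact fun u v h => d11 h
    · exact fun u v h => d12 h
end

section
/- Let G be the triangular prism: the graph on vertices u_1,u_2,u_3,v_1,v_2,v_3 where u_1u_2u_3 and v_1v_2v_3 are triangles and u_i is adjacent to v_i for i = 1,2,3. Define proper 3-colorings s and t by s(u_i) = i, s(v_i) = (i mod 3) + 1, and t(x) = (s(x) mod 3) + 1 for every vertex x. Then there is no recoloring schedule from s to t using colors {1,2,3}. -/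
open SimpleGraph

/-- The triangular prism: vertices `(0, j)` form one triangle (`u_{j+1}`), vertices `(1, j)`
form the other triangle (`v_{j+1}`), and `u_i` is adjacent to `v_i`. -/
def prismG : SimpleGraph (Fin 2 × ZMod 3) where
  Adj x y := (x.1 = y.1 ∧ x.2 ≠ y.2) ∨ (x.1 ≠ y.1 ∧ x.2 = y.2)
  symm := by
    constructor
    rintro x y (⟨h1, h2⟩ | ⟨h1, h2⟩)
    · exact Or.inl ⟨h1.symm, h2.symm⟩
    · exact Or.inr ⟨h1.symm, h2.symm⟩
  loopless := by
    constructor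
    rintro x (⟨_, h⟩ | ⟨h, _⟩) <;> exact h rfl

/-- The coloring `s` of the prism: `s(u_i) = i` and `s(v_i) = (i mod 3) + 1` for `i = 1, 2, 3`,
where `u_i = (0, i - 1)` and `v_i = (1, i - 1)`. -/
def prismS : Fin 2 × ZMod 3 → ℕ :=
  fun x => if x.1 = 0 then x.2.val + 1 else (x.2.val + 1) % 3 + 1

/-- The coloring `t` of the prism: `t(x) = (s(x) mod 3) + 1`. -/
def prismT : Fin 2 × ZMod 3 → ℕ :=
  fun x => prismS x % 3 + 1

/-!
An `m`-clique is frozen in every `m`-recoloring schedule. Its vertices use all `m` colors, and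
at most one of them changes per step; the new color of that vertex would have to be the color
of another clique vertex, which keeps it. The coloring `t` moves the triangle `u₁u₂u₃` off `s`.
-/

namespace IsProperColoring

variable {V : Type*} {G : SimpleGraph V} {m : ℕ} {x : V → ℕ} {K : Finset V}

theorem image_eq_Icc_of_isNClique (hx : IsProperColoring G m x) (hK : G.IsNClique m K) :
    K.image x = Finset.Icc 1 m := by
  have hinj : Set.InjOn x K := fun a ha b hb hab ↦ by
    by_contra hne
    exact hx.2 (hK.isClique ha hb hne) hab
  refine Finset.eq_of_subset_of_card_le (Finset.image_subset_iff.2 fun v _ ↦ hx.1 v) ?_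
  rw [Finset.card_image_of_injOn hinj, hK.card_eq, Nat.card_Icc, Nat.add_sub_cancel]

theorem eqOn_isNClique_of_step {y : V → ℕ} (hx : IsProperColoring G m x)
    (hy : IsProperColoring G m y) (hK : G.IsNClique m K)
    (hstep : ∀ ⦃u v : V⦄, G.Adj u v → x u = y u ∨ x v = y v) : ∀ v ∈ K, x v = y v := by
  intro v hv
  by_contra hne
  obtain ⟨w, hw, hxw⟩ := Finset.mem_image.1 (hx.image_eq_Icc_of_isNClique hK ▸ hy.1 v)
  have hwv : w ≠ v := by rintro rfl; exact hne hxw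
  have hadj : G.Adj v w := hK.isClique hv hw hwv.symm
  have hfixed : x w = y w := (hstep hadj).resolve_left hne
  exact hy.2 hadj (hxw.symm.trans hfixed)

end IsProperColoring

namespace IsRecolorSchedule

variable {V : Type*} {G : SimpleGraph V} {m ℓ : ℕ} {s t : V → ℕ} {X : ℕ → V → ℕ} {K : Finset V}

theorem eqOn_isNClique (hX : IsRecolorSchedule G m s t ℓ X) (hK : G.IsNClique m K) :
    ∀ i ≤ ℓ, ∀ v ∈ K, X i v = s v := by
  obtain ⟨h0, -, hproper, hstep⟩ := hX
  intro i
  induction i with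
  | zero => intro _ v _; rw [h0]
  | succ i ih =>
    intro hi v hv
    rw [← ih (by omega) v hv]
    exact ((hproper i (by omega)).eqOn_isNClique_of_step (hproper (i + 1) hi) hK
      (hstep (i + 1) (by omega) hi) v hv).symm

theorem source_eqOn_target_of_isNClique (hX : IsRecolorSchedule G m s t ℓ X)
    (hK : G.IsNClique m K) : ∀ v ∈ K, s v = t v := fun v hv ↦
  hX.2.1 ▸ (hX.eqOn_isNClique hK ℓ le_rfl v hv).symm

end IsRecolorSchedule

theorem prismG_isNClique_three : prismG.IsNClique 3 {(0, 0), (0, 1), (0, 2)} :=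
  is3Clique_triple_iff.2 ⟨.inl ⟨rfl, by decide⟩, .inl ⟨rfl, by decide⟩, .inl ⟨rfl, by decide⟩⟩

/-- There is no 3-recoloring schedule between the two given colorings of the prism. -/
theorem stmt_6 :
    ¬ ∃ (ℓ : ℕ) (X : ℕ → Fin 2 × ZMod 3 → ℕ),
      IsRecolorSchedule prismG 3 prismS prismT ℓ X := by
  rintro ⟨ℓ, X, hX⟩
  have hu₁ := hX.source_eqOn_target_of_isNClique prismG_isNClique_three (0, 0) (by simp)
  exact absurd hu₁ (by decide)
end

section
/- Let P_n be the path on vertices v_1, …, v_n (n ≥ 2) and define proper 3-colorings s and t by s(v_i) = ((i−1) mod 3) + 1 and t(v_i) = (i mod 3) + 1. Then every recoloring schedule from s to t using colors {1,2,3} has length at least (n−1)/2. -/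
open SimpleGraph

/-- The path on `n` vertices: vertex `a : Fin n` represents `v_{a+1}`, and `v_i` is adjacent
to `v_{i+1}`. -/
def pathG (n : ℕ) : SimpleGraph (Fin n) where
  Adj a b := a.val + 1 = b.val ∨ b.val + 1 = a.val
  symm := by
    constructor
    rintro a b (h | h)
    · exact Or.inr h
    · exact Or.inl h
  loopless := by
    constructor
    rintro a (h | h) <;> omega

/-!
A vertex of the path whose two neighbours carry the two colours other than its own is frozen:
with three colours it can only be recoloured after a neighbour has been. Since `s` uses three
distinct colours on any three consecutive vertices, after `i` steps every vertex at distance at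
least `i` from both ends still has its initial colour (a light cone spreading from the ends).
The middle vertex has different colours in `s` and `t`, so the cone must have reached it.
-/

theorem IsRecolorSchedule.apply_succ_eq_of_adj {V : Type*} {G : SimpleGraph V} {m : ℕ}
    {s t : V → ℕ} {ℓ : ℕ} {X : ℕ → V → ℕ} (h : IsRecolorSchedule G m s t ℓ X) {i : ℕ}
    (hi : i < ℓ) {u v : V} (huv : G.Adj u v) (hv : X (i + 1) v ≠ X i v) :
    X (i + 1) u = X i u :=
  (h.2.2.2 (i + 1) (by omega) hi huv).resolve_right (Ne.symm hv) |>.symm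

namespace pathG

variable {n ℓ : ℕ} {s t : Fin n → ℕ} {X : ℕ → Fin n → ℕ}

theorem adj_of_val_succ_eq {a b : Fin n} (h : a.val + 1 = b.val) : (pathG n).Adj a b :=
  Or.inl h

theorem apply_eq_initial_of_le_of_add_lt (h : IsRecolorSchedule (pathG n) 3 s t ℓ X)
    (hs : ∀ a c : Fin n, a.val + 2 = c.val → s a ≠ s c) :
    ∀ i ≤ ℓ, ∀ a : Fin n, i ≤ a.val → a.val + i < n → X i a = s a := by
  have h0 : X 0 = s := h.1
  have hproper := h.2.2.1
  intro i
  induction i with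
  | zero => intro _ a _ _; rw [h0]
  | succ i ih =>
    intro hi a ha hna
    let u : Fin n := ⟨a.val - 1, by omega⟩
    let w : Fin n := ⟨a.val + 1, by omega⟩
    have hua : (pathG n).Adj u a := adj_of_val_succ_eq (by simp only [u]; omega)
    have haw : (pathG n).Adj a w := adj_of_val_succ_eq rfl
    have hXu : X i u = s u := ih (by omega) u (by simp only [u]; omega) (by simp only [u]; omega)
    have hXa : X i a = s a := ih (by omega) a (by omega) (by omega)
    have hXw : X i w = s w := ih (by omega) w (by simp only [w]; omega) (by simp only [w]; omega)
    by_contra hne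
    have hchange : X (i + 1) a ≠ X i a := by rwa [hXa]
    have hu := h.apply_succ_eq_of_adj hi hua hchange
    have hw := h.apply_succ_eq_of_adj hi haw.symm hchange
    -- `X (i + 1) a` and `s a` both avoid the two distinct colours `s u`, `s w` in `{1, 2, 3}`.
    have hsuw : s u ≠ s w := hs u w (by simp only [u, w]; omega)
    obtain ⟨hrange₀, hadj₀⟩ := h0 ▸ hproper 0 (Nat.zero_le _)
    obtain ⟨hrange, hadj⟩ := hproper (i + 1) hi
    have hXa_ne_u := hadj hua
    have hXa_ne_w := hadj haw
    have hsa_ne_u := hadj₀ hua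
    have hsa_ne_w := hadj₀ haw
    have hXa_mem := Finset.mem_Icc.mp (hrange a)
    have hsa_mem := Finset.mem_Icc.mp (hrange₀ a)
    have hsu_mem := Finset.mem_Icc.mp (hrange₀ u)
    have hsw_mem := Finset.mem_Icc.mp (hrange₀ w)
    rw [hu, hXu] at hXa_ne_u
    rw [hw, hXw] at hXa_ne_w
    omega

theorem final_eq_initial_of_length_le (h : IsRecolorSchedule (pathG n) 3 s t ℓ X)
    (hs : ∀ a c : Fin n, a.val + 2 = c.val → s a ≠ s c) {a : Fin n} (ha : ℓ ≤ a.val)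
    (hna : a.val + ℓ < n) : t a = s a :=
  h.2.1 ▸ apply_eq_initial_of_le_of_add_lt h hs ℓ le_rfl a ha hna

end pathG

/-- Every 3-recoloring schedule between the colorings `s(v_i) = ((i-1) mod 3) + 1` and
`t(v_i) = (i mod 3) + 1` of the path on `n` vertices has length at least `(n-1)/2`. -/
theorem stmt_7 (n : ℕ) (hn : 2 ≤ n) (ℓ : ℕ) (X : ℕ → Fin n → ℕ)
    (h : IsRecolorSchedule (pathG n) 3
      (fun a => a.val % 3 + 1) (fun a => (a.val + 1) % 3 + 1) ℓ X) :
    ((n : ℝ) - 1) / 2 ≤ ℓ := by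
  have hs : ∀ a c : Fin n, a.val + 2 = c.val → a.val % 3 + 1 ≠ c.val % 3 + 1 := by
    intro a c hac
    omega
  let mid : Fin n := ⟨(n - 1) / 2, by omega⟩
  have hmid : (mid.val + 1) % 3 + 1 ≠ mid.val % 3 + 1 := by omega
  have hℓ : n ≤ 2 * ℓ + 1 := by
    by_contra! hlt
    exact hmid (pathG.final_eq_initial_of_length_le h hs (a := mid) (by simp only [mid]; omega)
      (by simp only [mid]; omega))
  have hℓ' : (n : ℝ) ≤ 2 * ℓ + 1 := by exact_mod_cast hℓ
  linarith
end

section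
/- There exists a constant c > 0 such that for every N there exist a tree T on n ≥ N vertices and two proper 4-colorings s and t of T such that every recoloring schedule from s to t using colors {1,2,3,4} has length at least c·log₂ n. -/
open SimpleGraph

/-!
Take the complete ternary tree of depth `k`, address its vertices by words `j₁ ⋯ j_d` over
`{0, 1, 2}` read from the vertex up to the root, and give the vertex the color
`1 + ((a + ∑ (jᵢ + 1)) mod 4)`. For `a = 0` and `a = 1` this yields proper colorings `s` and `t`
that differ at the root. In `s` the three children of every internal vertex carry the three colors
other than its own, so a vertex cannot move while its children are still in their initial
colors. By induction, a vertex at depth `d` keeps its color during the first `k - d` steps; hence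
the root needs more than `k` steps, while the tree has fewer than `4 ^ (k + 1)` vertices.
-/

section

variable {V : Type*}

def parentGraph (r : V) (p : V → V) : SimpleGraph V :=
  SimpleGraph.fromRel fun u v => u ≠ r ∧ p u = v

section ParentGraph

variable {r : V} {p : V → V} {f : V → ℕ}

lemma parentGraph_adj_parent (hf : ∀ v ≠ r, f (p v) < f v) {v : V} (hv : v ≠ r) :
    (parentGraph r p).Adj v (p v) :=
  (fromRel_adj _ _ _).2 ⟨fun h => (hf v hv).ne (congrArg f h).symm, .inl ⟨hv, rfl⟩⟩

lemma ne_of_parentGraph_adj {α : Type*} {c : V → α} (h : ∀ v ≠ r, c v ≠ c (p v)) {u v : V}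
    (huv : (parentGraph r p).Adj u v) : c u ≠ c v := by
  rcases ((fromRel_adj _ _ _).1 huv).2 with ⟨hu, rfl⟩ | ⟨hv, rfl⟩
  exacts [h u hu, (h v hv).symm]

lemma parentGraph_connected (hf : ∀ v ≠ r, f (p v) < f v) : (parentGraph r p).Connected := by
  have reach : ∀ n, ∀ v, f v = n → (parentGraph r p).Reachable v r := by
    intro n
    induction n using Nat.strong_induction_on with
    | _ n ih =>
      rintro v rfl
      by_cases hv : v = r
      · exact hv ▸ .rfl
      · exact (parentGraph_adj_parent hf hv).reachable.trans (ih _ (hf v hv) _ rfl)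
  have : Nonempty V := ⟨r⟩
  exact ⟨fun u v => (reach _ u rfl).trans (reach _ v rfl).symm⟩

/-- Each edge is `s(v, p v)` for exactly one `v ≠ r`: an edge `s(u, p u) = s(p v, v)` would
make the rank decrease around a loop `v ↦ p v ↦ p (p v) = v`. -/
lemma parentGraph_card_edgeSet (hf : ∀ v ≠ r, f (p v) < f v) :
    Nat.card (parentGraph r p).edgeSet = Nat.card {v // v ≠ r} := by
  refine (Nat.card_eq_of_bijective (fun v : {v // v ≠ r} =>
    (⟨s(v.1, p v.1), parentGraph_adj_parent hf v.2⟩ : (parentGraph r p).edgeSet)) ⟨?_, ?_⟩).symm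
  · rintro ⟨u, hu⟩ ⟨v, hv⟩ huv
    rcases Sym2.eq_iff.1 (congrArg Subtype.val huv) with ⟨rfl, -⟩ | ⟨rfl, hvu⟩
    · rfl
    · have hlt := (hf _ hu).trans (hf _ hv)
      rw [hvu] at hlt
      exact absurd hlt (lt_irrefl _)
  · rintro ⟨e, he⟩
    induction e using Sym2.ind with
    | _ u v =>
      rcases ((fromRel_adj _ _ _).1 ((mem_edgeSet _).1 he)).2 with ⟨hu, rfl⟩ | ⟨hv, rfl⟩
      · exact ⟨⟨u, hu⟩, rfl⟩
      · exact ⟨⟨v, hv⟩, Subtype.ext Sym2.eq_swap⟩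

theorem parentGraph_isTree [Finite V] (hf : ∀ v ≠ r, f (p v) < f v) :
    (parentGraph r p).IsTree := by
  have := Fintype.ofFinite V
  classical
  refine isTree_iff_connected_and_card.2 ⟨parentGraph_connected hf, ?_⟩
  rw [parentGraph_card_edgeSet hf, Nat.card_eq_fintype_card, Nat.card_eq_fintype_card]
  have hne : Fintype.card {v // v ≠ r} = Fintype.card V - 1 := Set.card_ne_eq r
  have hpos : 0 < Fintype.card V := Fintype.card_pos_iff.2 ⟨r⟩
  omega

end ParentGraph

lemma IsProperColoring.eq_of_step_of_neighbors_cover {G : SimpleGraph V} {m : ℕ} {x y : V → ℕ}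
    (hy : IsProperColoring G m y) (hstep : ∀ ⦃u w : V⦄, G.Adj u w → x u = y u ∨ x w = y w)
    {v : V} (hcover : ∀ c ∈ Finset.Icc 1 m, c ≠ x v → ∃ u, G.Adj u v ∧ x u = c) :
    y v = x v := by
  by_contra hne
  obtain ⟨u, huv, hxu⟩ := hcover (y v) (hy.1 v) hne
  have hu : x u = y u := (hstep huv).resolve_right fun h => hne h.symm
  exact hy.2 huv (hu ▸ hxu)

lemma IsRecolorSchedule.step {G : SimpleGraph V} {m ℓ : ℕ} {s t : V → ℕ} {X : ℕ → V → ℕ}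
    (hX : IsRecolorSchedule G m s t ℓ X) {i : ℕ} (hi : i < ℓ) :
    ∀ ⦃u w : V⦄, G.Adj u w → X i u = X (i + 1) u ∨ X i w = X (i + 1) w := by
  simpa using hX.2.2.2 (i + 1) (by omega) hi

end

lemma Real.logb_two_le_of_le_four_pow {n ℓ : ℕ} (h : n ≤ 4 ^ ℓ) : Real.logb 2 n ≤ 2 * ℓ := by
  rcases n.eq_zero_or_pos with rfl | hn
  · simp
  rw [Real.logb_le_iff_le_rpow one_lt_two (by exact_mod_cast hn),
    show (2 * ℓ : ℝ) = ((2 * ℓ : ℕ) : ℝ) by push_cast; ring, Real.rpow_natCast, pow_mul]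
  exact_mod_cast h

abbrev TernaryTree (k : ℕ) := {l : List (Fin 3) // l.length ≤ k}

namespace TernaryTree

variable {k : ℕ}

def root : TernaryTree k := ⟨[], Nat.zero_le k⟩

def parent (v : TernaryTree k) : TernaryTree k := ⟨v.1.tail, v.1.tail_sublist.length_le.trans v.2⟩

def child (v : TernaryTree k) (hv : v.1.length < k) (j : Fin 3) : TernaryTree k := ⟨j :: v.1, hv⟩

variable (k) in
def graph : SimpleGraph (TernaryTree k) := parentGraph root parent

lemma length_parent_lt (v : TernaryTree k) (hv : v ≠ root) : v.parent.1.length < v.1.length := by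
  have : v.1 ≠ [] := fun h => hv (Subtype.ext h)
  simpa [parent] using List.length_pos_iff.2 this

lemma child_adj (v : TernaryTree k) (hv : v.1.length < k) (j : Fin 3) :
    (graph k).Adj (v.child hv j) v :=
  parentGraph_adj_parent (f := fun v => v.1.length) length_parent_lt
    (fun h => List.cons_ne_nil _ _ (congrArg Subtype.val h))

lemma getElem?_injective :
    Function.Injective fun (v : TernaryTree k) (i : Fin (k + 1)) => v.1[(i : ℕ)]? := by
  intro u v huv
  refine Subtype.ext (List.ext_getElem? fun i => ?_)
  by_cases hi : i < k + 1
  · exact congrFun huv ⟨i, hi⟩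
  · rw [List.getElem?_eq_none (by omega), List.getElem?_eq_none (by omega)]

noncomputable instance : Fintype (TernaryTree k) := Fintype.ofInjective _ getElem?_injective

theorem isTree : (graph k).IsTree := parentGraph_isTree (f := fun v => v.1.length) length_parent_lt

lemma card_le : Fintype.card (TernaryTree k) ≤ 4 ^ (k + 1) := by
  simpa using Fintype.card_le_of_injective _ getElem?_injective

lemma le_card : k + 1 ≤ Fintype.card (TernaryTree k) := by
  have : Function.Injective fun i : Fin (k + 1) =>
      (⟨List.replicate i 0, by simpa using Nat.lt_succ_iff.1 i.2⟩ : TernaryTree k) := by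
    intro i j hij
    simpa using Fin.ext (by simpa using congrArg (fun v : TernaryTree k => v.1.length) hij)
  simpa using Fintype.card_le_of_injective _ this

def label (a : ZMod 4) : List (Fin 3) → ZMod 4
  | [] => a
  | j :: l => label a l + ((j : ℕ) + 1)

def coloring (a : ZMod 4) (v : TernaryTree k) : ℕ := (label a v.1).val + 1

lemma exists_label_cons_eq (a : ZMod 4) (l : List (Fin 3)) {c : ℕ} (hc : c ∈ Finset.Icc 1 4)
    (hne : c ≠ (label a l).val + 1) : ∃ j : Fin 3, c = (label a (j :: l)).val + 1 := by
  have key : ∀ z : ZMod 4, ∀ c ∈ Finset.Icc 1 4, c ≠ z.val + 1 →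
      ∃ j : Fin 3, c = (z + ((j : ℕ) + 1)).val + 1 := by decide
  exact key _ c hc hne

lemma coloring_isProper (a : ZMod 4) : IsProperColoring (graph k) 4 (coloring a) := by
  refine ⟨fun v => by simpa [coloring] using (label a v.1).val_lt,
    fun u v huv => ne_of_parentGraph_adj ?_ huv⟩
  rintro ⟨_ | ⟨j, l⟩, _⟩ hroot hcol
  · exact hroot rfl
  have hshift : ((j : ℕ) + 1 : ZMod 4) ≠ 0 := by fin_cases j <;> decide
  apply hshift
  simpa [coloring, label, parent] using ZMod.val_injective _ (Nat.succ_injective hcol)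

theorem coloring_frozen {a : ZMod 4} {t : TernaryTree k → ℕ} {ℓ : ℕ} {X : ℕ → TernaryTree k → ℕ}
    (hX : IsRecolorSchedule (graph k) 4 (coloring a) t ℓ X) :
    ∀ i ≤ ℓ, ∀ v : TernaryTree k, i + v.1.length ≤ k → X i v = coloring a v := by
  intro i
  induction i with
  | zero => intro _ v _; rw [hX.1]
  | succ i ih =>
    intro hi v hv
    calc X (i + 1) v = X i v := by
          refine (hX.2.2.1 (i + 1) hi).eq_of_step_of_neighbors_cover (hX.step hi) ?_
          intro c hc hne
          rw [ih (by omega) v (by omega)] at hne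
          obtain ⟨j, rfl⟩ := exists_label_cons_eq a v.1 hc hne
          exact ⟨v.child (by omega) j, child_adj v _ j, ih (by omega) _ (by simp [child]; omega)⟩
      _ = coloring a v := ih (by omega) v (by omega)

end TernaryTree

/-- There are trees on arbitrarily many vertices with pairs of proper 4-colorings such that
every 4-recoloring schedule between them has length `Ω(log n)`. -/
theorem stmt_8 :
    ∃ c : ℝ, 0 < c ∧ ∀ N : ℕ, ∃ (V : Type) (_ : Fintype V) (G : SimpleGraph V),
      G.IsTree ∧ N ≤ Fintype.card V ∧
      ∃ s t : V → ℕ, IsProperColoring G 4 s ∧ IsProperColoring G 4 t ∧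
        ∀ (ℓ : ℕ) (X : ℕ → V → ℕ), IsRecolorSchedule G 4 s t ℓ X →
          c * Real.logb 2 (Fintype.card V) ≤ (ℓ : ℝ) := by
  refine ⟨1 / 2, by norm_num, fun N => ⟨TernaryTree N, inferInstance, TernaryTree.graph N,
    TernaryTree.isTree, N.le_succ.trans TernaryTree.le_card, TernaryTree.coloring 0,
    TernaryTree.coloring 1, TernaryTree.coloring_isProper 0, TernaryTree.coloring_isProper 1,
    fun ℓ X hX => ?_⟩⟩
  have hℓ : N + 1 ≤ ℓ := by
    by_contra! h
    have hroot := TernaryTree.coloring_frozen hX ℓ le_rfl TernaryTree.root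
      (by simp [TernaryTree.root]; omega)
    rw [hX.2.1] at hroot
    exact absurd hroot (by simp [TernaryTree.coloring, TernaryTree.label, TernaryTree.root]; decide)
  have hlog := Real.logb_two_le_of_le_four_pow
    (TernaryTree.card_le.trans (Nat.pow_le_pow_right (by norm_num) hℓ))
  linarith
end

section
/- Every finite tree T has a maximal independent set S such that every connected component of the subgraph of T induced by V(T) \ S has at most 2 vertices. -/
open SimpleGraph

/-- In a tree, every path realizes the distance between its endpoints. -/
lemma tree_path_length_eq_dist {V : Type*} {G : SimpleGraph V} (hT : G.IsTree)
    {a b : V} (p : G.Walk a b) (hp : p.IsPath) : p.length = G.dist a b := by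
  classical
  obtain ⟨w, hw⟩ := hT.isConnected.exists_walk_length_eq_dist a b
  have hbp : w.bypass.IsPath := w.bypass_isPath
  have h1 : w.bypass.length ≤ w.length := w.length_bypass_le
  have h2 : G.dist a b ≤ w.bypass.length := SimpleGraph.dist_le _
  have hlen : w.bypass.length = G.dist a b := by omega
  have := hT.IsAcyclic.path_unique ⟨p, hp⟩ ⟨w.bypass, hbp⟩
  have : p = w.bypass := congrArg Subtype.val this
  rw [this, hlen]

/-- In a tree, adjacent vertices have distances from `r` differing by exactly one. -/
lemma tree_adj_dist {V : Type*} {G : SimpleGraph V} (hT : G.IsTree)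
    (r : V) {u v : V} (huv : G.Adj u v) :
    G.dist r u + 1 = G.dist r v ∨ G.dist r v + 1 = G.dist r u := by
  classical
  obtain ⟨w, hw⟩ := hT.isConnected.exists_walk_length_eq_dist r u
  set p := w.bypass with hpdef
  have hp : p.IsPath := w.bypass_isPath
  have hplen : p.length = G.dist r u := tree_path_length_eq_dist hT p hp
  by_cases hv : v ∈ p.support
  · right
    have htake : (p.takeUntil v hv).IsPath := hp.takeUntil hv
    have hdrop : (p.dropUntil v hv).IsPath := hp.dropUntil hv
    have hdroplen : (p.dropUntil v hv).length = G.dist v u :=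
      tree_path_length_eq_dist hT _ hdrop
    have hdvu : G.dist v u = 1 := SimpleGraph.dist_eq_one_iff_adj.mpr huv.symm
    have htakelen : (p.takeUntil v hv).length = G.dist r v :=
      tree_path_length_eq_dist hT _ htake
    have hsplit : (p.takeUntil v hv).length + (p.dropUntil v hv).length = p.length := by
      rw [← SimpleGraph.Walk.length_append, p.take_spec hv]
    omega
  · left
    have hq : (p.concat huv).IsPath := by
      rw [← SimpleGraph.Walk.isPath_reverse_iff, SimpleGraph.Walk.reverse_concat]
      exact (hp.reverse).cons (by simpa using hv)
    have hqlen : (p.concat huv).length = G.dist r v :=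
      tree_path_length_eq_dist hT _ hq
    rw [SimpleGraph.Walk.length_concat] at hqlen
    omega

/-- Every finite tree has a maximal independent set `S` such that every connected component of
the subgraph induced on the complement of `S` has at most 2 vertices. -/
theorem stmt_10 {V : Type*} [Fintype V] (G : SimpleGraph V) (hT : G.IsTree) :
    ∃ S : Set V,
      (∀ u ∈ S, ∀ v ∈ S, ¬ G.Adj u v) ∧
      (∀ v ∉ S, ∃ u ∈ S, G.Adj u v) ∧
      (∀ c : (G.induce Sᶜ).ConnectedComponent, c.supp.ncard ≤ 2) := by
  have hconn := hT.isConnected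
  obtain ⟨r⟩ := hconn.nonempty
  refine ⟨{v | Even (G.dist r v)}, ?_, ?_, ?_⟩
  · intro u hu v hv hadj
    simp only [Set.mem_setOf_eq] at hu hv
    rcases hu with ⟨a, ha⟩
    rcases hv with ⟨b, hb⟩
    rcases tree_adj_dist hT r hadj with h | h <;> omega
  · intro v hv
    simp only [Set.mem_setOf_eq] at hv
    have hne : v ≠ r := by
      rintro rfl; exact hv (by simp [SimpleGraph.dist_self])
    have hpos : 0 < G.dist r v := hconn.pos_dist_of_ne (Ne.symm hne)
    obtain ⟨w, hw⟩ := hconn.exists_walk_length_eq_dist r v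
    -- look at the last edge of w
    cases hwr : w.reverse with
    | nil =>
        exfalso
        have : w.length = 0 := by
          have := congrArg SimpleGraph.Walk.length hwr
          simpa [SimpleGraph.Walk.length_reverse] using this
        omega
    | cons hadj q =>
        rename_i u
        -- hadj : G.Adj v u, q : G.Walk u r
        have hlen : q.length + 1 = G.dist r v := by
          have := congrArg SimpleGraph.Walk.length hwr
          simp only [SimpleGraph.Walk.length_reverse, SimpleGraph.Walk.length_cons] at this
          omega
        have hle : G.dist r u ≤ q.length := by
          have := SimpleGraph.dist_le q.reverse
          simpa [SimpleGraph.Walk.length_reverse] using this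
        have hge : G.dist r v ≤ G.dist r u + 1 := by
          rcases tree_adj_dist hT r hadj.symm with h | h <;> omega
        have hdu : G.dist r u + 1 = G.dist r v := by omega
        refine ⟨u, ?_, hadj.symm⟩
        simp only [Set.mem_setOf_eq]
        rcases Nat.even_or_odd (G.dist r u) with h | h
        · exact h
        · exfalso; apply hv
          rcases h with ⟨k, hk⟩
          exact ⟨k + 1, by omega⟩
  · intro c
    -- the induced graph on the complement is edgeless
    have hbot : ∀ (x y : ↥({v | Even (G.dist r v)}ᶜ : Set V)),
        ¬ (G.induce {v | Even (G.dist r v)}ᶜ).Adj x y := by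
      rintro ⟨x, hx⟩ ⟨y, hy⟩ hadj
      simp only [SimpleGraph.comap_adj, Function.Embedding.coe_subtype] at hadj
      simp only [Set.mem_compl_iff, Set.mem_setOf_eq] at hx hy
      rcases tree_adj_dist hT r hadj with h | h
      · exact hy (by rw [← h]; exact (Nat.not_even_iff_odd.mp hx).add_one)
      · exact hx (by rw [← h]; exact (Nat.not_even_iff_odd.mp hy).add_one)
    have hsub : c.supp.Subsingleton := by
      intro a ha b hb
      simp only [SimpleGraph.ConnectedComponent.mem_supp_iff] at ha hb
      have hr : (G.induce {v | Even (G.dist r v)}ᶜ).Reachable a b :=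
        SimpleGraph.ConnectedComponent.exact (ha.trans hb.symm)
      obtain ⟨p⟩ := hr
      cases p with
      | nil => rfl
      | cons h _ => exact absurd h (hbot _ _)
    have h1 : c.supp.ncard ≤ 1 := (Set.ncard_le_one_iff (Set.toFinite _)).mpr fun ha hb => hsub ha hb
    omega
end

section
/- For every tree T on n ≥ 2 vertices, |V₁| + |W| ≥ n/6, where V₁ is the set of vertices of T of degree 1 and W is the set of vertices of T of degree 2 both of whose neighbors have degree 2. -/
open SimpleGraph Finset

/-- In every tree on `n ≥ 2` vertices, the number of degree-1 vertices plus the number of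
degree-2 vertices both of whose neighbors have degree 2 is at least `n / 6`. -/
theorem stmt_11 {V : Type*} [Fintype V] (G : SimpleGraph V) [DecidableRel G.Adj]
    (hT : G.IsTree) (hn : 2 ≤ Fintype.card V) :
    (Fintype.card V : ℝ) / 6 ≤
      ({v : V | G.degree v = 1}.ncard : ℝ) +
      ({v : V | G.degree v = 2 ∧ ∀ u : V, G.Adj v u → G.degree u = 2}.ncard : ℝ) := by
  classical
  set n := Fintype.card V with hncard
  -- every vertex has positive degree
  have hdeg : ∀ v : V, 1 ≤ G.degree v := by
    intro v
    rw [Nat.one_le_iff_ne_zero, Ne, ← Nat.le_zero, Nat.not_le, G.degree_pos_iff_exists_adj]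
    obtain ⟨w, hw⟩ := Fintype.exists_ne_of_one_lt_card hn v
    obtain ⟨p⟩ := hT.isConnected.preconnected v w
    cases p with
    | nil => exact absurd rfl hw
    | cons h q => exact ⟨_, h⟩
  set A : Finset V := Finset.univ.filter (fun v => G.degree v = 1) with hA
  set B : Finset V := Finset.univ.filter
      (fun v => G.degree v = 2 ∧ ∀ u : V, G.Adj v u → G.degree u = 2) with hB
  set C : Finset V := Finset.univ.filter
      (fun v => G.degree v = 2 ∧ ¬ ∀ u : V, G.Adj v u → G.degree u = 2) with hC
  set D : Finset V := Finset.univ.filter (fun v => 3 ≤ G.degree v) with hD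
  set S : ℕ := ∑ v ∈ D, G.degree v with hS
  -- partition of the vertex set
  have hpart : ∀ f : V → ℕ, ∑ v, f v = ∑ v ∈ A, f v + ∑ v ∈ B, f v + ∑ v ∈ C, f v
      + ∑ v ∈ D, f v := by
    intro f
    have h1 := Finset.sum_filter_add_sum_filter_not Finset.univ
      (fun v => G.degree v = 1) f
    have h2 := Finset.sum_filter_add_sum_filter_not
      (Finset.univ.filter (fun v => ¬ G.degree v = 1)) (fun v => G.degree v = 2) f
    have h3 := Finset.sum_filter_add_sum_filter_not
      ((Finset.univ.filter (fun v => ¬ G.degree v = 1)).filter (fun v => G.degree v = 2))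
      (fun v => ∀ u : V, G.Adj v u → G.degree u = 2) f
    have e1 : ((Finset.univ.filter (fun v => ¬ G.degree v = 1)).filter
        (fun v => G.degree v = 2)).filter (fun v => ∀ u : V, G.Adj v u → G.degree u = 2)
        = B := by
      ext v
      simp only [hB, Finset.mem_filter, Finset.mem_univ, true_and]
      exact ⟨fun ⟨⟨_, h2⟩, h3⟩ => ⟨h2, h3⟩, fun ⟨h2, h3⟩ => ⟨⟨by omega, h2⟩, h3⟩⟩
    have e2 : ((Finset.univ.filter (fun v => ¬ G.degree v = 1)).filter
        (fun v => G.degree v = 2)).filter (fun v => ¬ ∀ u : V, G.Adj v u → G.degree u = 2)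
        = C := by
      ext v
      simp only [hC, Finset.mem_filter, Finset.mem_univ, true_and]
      exact ⟨fun ⟨⟨_, h2⟩, h3⟩ => ⟨h2, h3⟩, fun ⟨h2, h3⟩ => ⟨⟨by omega, h2⟩, h3⟩⟩
    have e3 : (Finset.univ.filter (fun v => ¬ G.degree v = 1)).filter
        (fun v => ¬ G.degree v = 2) = D := by
      ext v
      simp only [hD, Finset.mem_filter, Finset.mem_univ, true_and]
      have := hdeg v; omega
    rw [e1, e2] at h3
    rw [← h3, e3] at h2
    rw [← h2] at h1
    rw [← h1, hA]
    ring
  -- handshake: sum of degrees is 2(n-1)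
  have hhand : ∑ v, G.degree v + 2 = 2 * n := by
    have h1 := G.sum_degrees_eq_twice_card_edges
    have h2 := hT.card_edgeFinset
    omega
  have hsum : A.card + 2 * B.card + 2 * C.card + S + 2 = 2 * n := by
    rw [← hhand, hpart (fun v => G.degree v)]
    have hAs : ∑ v ∈ A, G.degree v = A.card := by
      rw [show ∑ v ∈ A, G.degree v = ∑ _v ∈ A, 1 from
        Finset.sum_congr rfl fun v hv => (Finset.mem_filter.mp hv).2,
        Finset.sum_const, smul_eq_mul, mul_one]
    have hBs : ∑ v ∈ B, G.degree v = 2 * B.card := by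
      rw [show ∑ v ∈ B, G.degree v = ∑ _v ∈ B, 2 from
        Finset.sum_congr rfl fun v hv => ((Finset.mem_filter.mp hv).2).1,
        Finset.sum_const, smul_eq_mul, mul_comm]
    have hCs : ∑ v ∈ C, G.degree v = 2 * C.card := by
      rw [show ∑ v ∈ C, G.degree v = ∑ _v ∈ C, 2 from
        Finset.sum_congr rfl fun v hv => ((Finset.mem_filter.mp hv).2).1,
        Finset.sum_const, smul_eq_mul, mul_comm]
    rw [hAs, hBs, hCs, hS]
  have hncount : A.card + B.card + C.card + D.card = n := by
    have := hpart (fun _ => 1)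
    simp only [Finset.sum_const, smul_eq_mul, mul_one, Finset.card_univ] at this
    omega
  have hDS : 3 * D.card ≤ S := by
    rw [hS]
    calc 3 * D.card = ∑ _v ∈ D, 3 := by simp [mul_comm]
    _ ≤ ∑ v ∈ D, G.degree v := Finset.sum_le_sum (fun v hv =>
        (Finset.mem_filter.mp hv).2)
  -- bound |C| by mapping each bad degree-2 vertex to a neighbor of degree ≠ 2
  have hCbound : C.card ≤ A.card + S := by
    set f : V → V := fun v =>
      if h : ∃ u, G.Adj v u ∧ G.degree u ≠ 2 then h.choose else v with hf
    have hfspec : ∀ v ∈ C, G.Adj v (f v) ∧ G.degree (f v) ≠ 2 := by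
      intro v hv
      obtain ⟨hv2, hvbad⟩ := (Finset.mem_filter.mp hv).2
      push_neg at hvbad
      obtain ⟨u, hu1, hu2⟩ := hvbad
      have hex : ∃ u, G.Adj v u ∧ G.degree u ≠ 2 := ⟨u, hu1, hu2⟩
      have hfv : f v = hex.choose := by rw [hf]; exact dif_pos hex
      rw [hfv]; exact hex.choose_spec
    have hmaps : ∀ v ∈ C, f v ∈ A ∪ D := by
      intro v hv
      obtain ⟨h1, h2⟩ := hfspec v hv
      have := hdeg (f v)
      simp only [hA, hD, Finset.mem_union, Finset.mem_filter, Finset.mem_univ, true_and]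
      omega
    have hkey := Finset.card_eq_sum_card_fiberwise hmaps
    have hub : ∀ u ∈ A ∪ D, (C.filter (fun v => f v = u)).card ≤ G.degree u := by
      intro u _
      rw [← G.card_neighborFinset_eq_degree]
      apply Finset.card_le_card
      intro v hv
      obtain ⟨hvC, hvf⟩ := Finset.mem_filter.mp hv
      have := (hfspec v hvC).1
      rw [hvf] at this
      simpa [SimpleGraph.mem_neighborFinset] using this.symm
    have hdisj : Disjoint A D := by
      rw [Finset.disjoint_left]
      intro v hvA hvD
      simp only [hA, hD, Finset.mem_filter] at hvA hvD
      omega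
    calc C.card = ∑ u ∈ A ∪ D, (C.filter (fun v => f v = u)).card := hkey
    _ ≤ ∑ u ∈ A ∪ D, G.degree u := Finset.sum_le_sum hub
    _ = ∑ u ∈ A, G.degree u + ∑ u ∈ D, G.degree u := Finset.sum_union hdisj
    _ ≤ A.card + S := by
        rw [hS]
        have : ∑ u ∈ A, G.degree u = A.card := by
          rw [show ∑ v ∈ A, G.degree v = ∑ _v ∈ A, 1 from
            Finset.sum_congr rfl fun v hv => (Finset.mem_filter.mp hv).2,
            Finset.sum_const, smul_eq_mul, mul_one]
        omega
  -- conclude in ℕ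
  have hmain : n ≤ 6 * A.card + B.card := by omega
  -- convert to the real-number statement
  have hAset : {v : V | G.degree v = 1}.ncard = A.card := by
    rw [Set.ncard_eq_toFinset_card']
    congr 1
    ext v; simp [hA]
  have hBset : {v : V | G.degree v = 2 ∧ ∀ u : V, G.Adj v u → G.degree u = 2}.ncard
      = B.card := by
    rw [Set.ncard_eq_toFinset_card']
    congr 1
    ext v; simp [hB]
  rw [hAset, hBset]
  rw [div_le_iff₀ (by norm_num : (0:ℝ) < 6)]
  have : (n : ℝ) ≤ 6 * A.card + B.card := by exact_mod_cast hmain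
  nlinarith [Nat.cast_nonneg (α := ℝ) A.card, Nat.cast_nonneg (α := ℝ) B.card]
end

section
/- Every tree on n ≥ 2 vertices admits a light h-labeling with h = ⌈log_{6/5} n⌉ + 1. -/
/-!
Root the tree at a vertex `r` and label each vertex `v` by `⌊log₂ |T_v|⌋ + 1`, where `T_v` is the
subtree hanging from `v`. Subtrees shrink away from the root, so labels weakly increase towards
it and the only neighbour that can carry a larger label is the parent. A child with the same
label as `v` holds more than half of `T_v`, so there is at most one such child. The labels are at
most `log₂ n + 1 ≤ ⌈log_{6/5} n⌉ + 1`.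
-/

open SimpleGraph

/-- A light `h`-labeling of a graph `G`: labels in `{1,…,h}` such that every vertex labeled `i`
has at most two neighbors with label `≥ i`, at most one of which has label `≥ i + 1`, and no two
adjacent vertices labeled `i` both have a neighbor with label `≥ i + 1`. -/
def IsLightLabeling {V : Type*} (G : SimpleGraph V) (h : ℕ) (lab : V → ℕ) : Prop :=
  (∀ v, lab v ∈ Finset.Icc 1 h) ∧
  (∀ v : V, {u : V | G.Adj v u ∧ lab v ≤ lab u}.ncard ≤ 2) ∧
  (∀ v : V, {u : V | G.Adj v u ∧ lab v + 1 ≤ lab u}.ncard ≤ 1) ∧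
  (∀ v w : V, G.Adj v w → lab v = lab w →
    ¬ ((∃ u, G.Adj v u ∧ lab v + 1 ≤ lab u) ∧ (∃ u, G.Adj w u ∧ lab w + 1 ≤ lab u)))

namespace SimpleGraph

variable {V : Type*} {G : SimpleGraph V} {r u v w x y c₁ c₂ : V}

theorem IsTree.eq_of_dist_add_dist_eq (hG : G.IsTree)
    (hx : G.dist u x + G.dist x w = G.dist u w) (hy : G.dist u y + G.dist y w = G.dist u w)
    (hxy : G.dist u x = G.dist u y) : x = y := by
  -- Both concatenated geodesics are the unique path from `u` to `w`, passing `x` and `y` at the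
  -- same position.
  obtain ⟨p, hp⟩ := hG.connected.exists_walk_length_eq_dist u x
  obtain ⟨q, hq⟩ := hG.connected.exists_walk_length_eq_dist x w
  obtain ⟨p', hp'⟩ := hG.connected.exists_walk_length_eq_dist u y
  obtain ⟨q', hq'⟩ := hG.connected.exists_walk_length_eq_dist y w
  have hpq : (p.append q).IsPath := (p.append q).isPath_of_length_eq_dist (by simp [hp, hq, hx])
  have hpq' : (p'.append q').IsPath :=
    (p'.append q').isPath_of_length_eq_dist (by simp [hp', hq', hy])
  have heq : p.append q = p'.append q' :=
    congrArg Subtype.val ((hG.isAcyclic.subsingleton_path u w).elim ⟨_, hpq⟩ ⟨_, hpq'⟩)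
  have hlen : p.length = p'.length := by rw [hp, hp', hxy]
  have := congrArg (·.getVert p.length) heq
  rwa [Walk.getVert_append', if_pos le_rfl, Walk.getVert_length, hlen, Walk.getVert_append',
    if_pos le_rfl, Walk.getVert_length] at this

/-- In a tree rooted at `r`, the subtree hanging from `v`. -/
def subtree (G : SimpleGraph V) (r v : V) : Set V :=
  {u | G.dist r u = G.dist r v + G.dist v u}

theorem self_mem_subtree : v ∈ G.subtree r v := by
  simp [subtree]

theorem notMem_subtree_of_adj (hadj : G.Adj v w) (hw : G.dist r w = G.dist r v + 1) :
    v ∉ G.subtree r w := by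
  simp only [subtree, Set.mem_ofPred_eq, dist_comm (u := w), dist_eq_one_iff_adj.2 hadj]
  omega

theorem subtree_subset_of_adj (hG : G.Connected) (hadj : G.Adj v w)
    (hw : G.dist r w = G.dist r v + 1) : G.subtree r w ⊆ G.subtree r v := by
  intro u hu
  have h₁ : G.dist r u ≤ G.dist r v + G.dist v u := hG.dist_triangle
  have h₂ : G.dist v u ≤ G.dist v w + G.dist w u := hG.dist_triangle
  simp only [subtree, Set.mem_ofPred_eq, dist_eq_one_iff_adj.2 hadj] at hu h₂ ⊢
  omega

theorem subtree_ssubset_of_adj (hG : G.Connected) (hadj : G.Adj v w)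
    (hw : G.dist r w = G.dist r v + 1) : G.subtree r w ⊂ G.subtree r v :=
  Set.ssubset_iff_exists.2
    ⟨subtree_subset_of_adj hG hadj hw, v, self_mem_subtree, notMem_subtree_of_adj hadj hw⟩

theorem IsTree.disjoint_subtree (hG : G.IsTree) (hne : x ≠ y)
    (hxy : G.dist r x = G.dist r y) : Disjoint (G.subtree r x) (G.subtree r y) := by
  refine Set.disjoint_left.2 fun u hx hy =>
    hne (hG.eq_of_dist_add_dist_eq (u := u) (w := r) ?_ ?_ ?_)
  all_goals simp only [subtree, Set.mem_ofPred_eq] at hx hy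
  all_goals simp only [dist_comm (u := u), dist_comm (v := r)]
  all_goals omega

theorem IsTree.eq_of_adj_of_dist_add_one (hG : G.IsTree) (hx : G.Adj v x) (hy : G.Adj v y)
    (hxv : G.dist r x + 1 = G.dist r v) (hyv : G.dist r y + 1 = G.dist r v) : x = y := by
  refine hG.eq_of_dist_add_dist_eq (u := v) (w := r) ?_ ?_ ?_
  all_goals simp only [dist_eq_one_iff_adj.2 hx, dist_eq_one_iff_adj.2 hy, dist_comm (v := r)]
  all_goals omega

theorem IsTree.ncard_subtree_add_ncard_subtree_lt [Finite V] (hG : G.IsTree)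
    (hadj₁ : G.Adj v c₁) (hadj₂ : G.Adj v c₂) (hc₁ : G.dist r c₁ = G.dist r v + 1)
    (hc₂ : G.dist r c₂ = G.dist r v + 1) (hne : c₁ ≠ c₂) :
    (G.subtree r c₁).ncard + (G.subtree r c₂).ncard < (G.subtree r v).ncard := by
  have hunion : G.subtree r c₁ ∪ G.subtree r c₂ ⊂ G.subtree r v :=
    Set.ssubset_iff_exists.2
      ⟨Set.union_subset (subtree_subset_of_adj hG.connected hadj₁ hc₁)
        (subtree_subset_of_adj hG.connected hadj₂ hc₂), v, self_mem_subtree,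
        by simp [notMem_subtree_of_adj hadj₁ hc₁, notMem_subtree_of_adj hadj₂ hc₂]⟩
  rw [← Set.ncard_union_eq (hG.disjoint_subtree hne (hc₁.trans hc₂.symm))]
  exact Set.ncard_lt_ncard hunion

noncomputable def subtreeLabel (G : SimpleGraph V) (r v : V) : ℕ :=
  Nat.log 2 (G.subtree r v).ncard + 1

theorem subtreeLabel_le_of_adj [Finite V] (hG : G.Connected) (hadj : G.Adj v w)
    (hw : G.dist r w = G.dist r v + 1) : G.subtreeLabel r w ≤ G.subtreeLabel r v :=
  Nat.add_le_add_right
    (Nat.log_mono_right (Set.ncard_lt_ncard (subtree_ssubset_of_adj hG hadj hw)).le) 1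

theorem IsTree.dist_eq_add_one_of_subtreeLabel_lt [Finite V] (hG : G.IsTree) (hadj : G.Adj v u)
    (h : G.subtreeLabel r v < G.subtreeLabel r u) : G.dist r v = G.dist r u + 1 := by
  refine (hG.dist_eq_dist_add_one_of_adj r hadj).resolve_right fun hu => ?_
  exact h.not_ge (subtreeLabel_le_of_adj hG.connected hadj hu)

theorem IsTree.eq_of_subtreeLabel_le [Finite V] (hG : G.IsTree)
    (hadj₁ : G.Adj v c₁) (hadj₂ : G.Adj v c₂) (hc₁ : G.dist r c₁ = G.dist r v + 1)
    (hc₂ : G.dist r c₂ = G.dist r v + 1) (hl₁ : G.subtreeLabel r v ≤ G.subtreeLabel r c₁)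
    (hl₂ : G.subtreeLabel r v ≤ G.subtreeLabel r c₂) : c₁ = c₂ := by
  by_contra hne
  have hsum := hG.ncard_subtree_add_ncard_subtree_lt hadj₁ hadj₂ hc₁ hc₂ hne
  have hpow (c : V) (hl : G.subtreeLabel r v ≤ G.subtreeLabel r c) :
      2 ^ Nat.log 2 (G.subtree r v).ncard ≤ (G.subtree r c).ncard :=
    (Nat.pow_le_pow_right two_pos (by unfold subtreeLabel at hl; omega)).trans
      (Nat.pow_log_le_self 2 (Set.nonempty_of_mem self_mem_subtree).ncard_pos.ne')
  have hlt := Nat.lt_pow_succ_log_self one_lt_two (G.subtree r v).ncard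
  have h₁ := hpow c₁ hl₁
  have h₂ := hpow c₂ hl₂
  rw [pow_succ] at hlt
  omega

theorem IsTree.not_exists_adj_subtreeLabel_lt [Finite V] (hG : G.IsTree) (hadj : G.Adj v w)
    (hv : G.dist r v = G.dist r w + 1) (hl : G.subtreeLabel r v = G.subtreeLabel r w) :
    ¬∃ u, G.Adj v u ∧ G.subtreeLabel r v + 1 ≤ G.subtreeLabel r u := by
  rintro ⟨u, hu, hlu⟩
  have huv := hG.dist_eq_add_one_of_subtreeLabel_lt hu hlu
  obtain rfl : u = w := hG.eq_of_adj_of_dist_add_one hu hadj huv.symm hv.symm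
  omega

theorem IsTree.isLightLabeling_subtreeLabel [Finite V] (hG : G.IsTree) (r : V) :
    IsLightLabeling G (Nat.log 2 (Nat.card V) + 1) (G.subtreeLabel r) := by
  refine ⟨fun v => ?_, fun v => ?_, fun v => ?_, fun v w hadj hl => ?_⟩
  · exact Finset.mem_Icc.2 ⟨Nat.le_add_left 1 _,
      Nat.add_le_add_right (Nat.log_mono_right (Set.ncard_le_card _)) 1⟩
  · have hsub : {u | G.Adj v u ∧ G.subtreeLabel r v ≤ G.subtreeLabel r u} ⊆
        {u | G.Adj v u ∧ G.dist r v = G.dist r u + 1} ∪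
          {u | G.Adj v u ∧ G.dist r u = G.dist r v + 1 ∧
            G.subtreeLabel r v ≤ G.subtreeLabel r u} := by
      rintro u ⟨hu, hl⟩
      exact (hG.dist_eq_dist_add_one_of_adj r hu).imp (⟨hu, ·⟩) (⟨hu, ·, hl⟩)
    have hparent : {u | G.Adj v u ∧ G.dist r v = G.dist r u + 1}.ncard ≤ 1 :=
      (Set.ncard_le_one (Set.toFinite _)).2 fun a ha b hb =>
        hG.eq_of_adj_of_dist_add_one ha.1 hb.1 ha.2.symm hb.2.symm
    have hchild : {u | G.Adj v u ∧ G.dist r u = G.dist r v + 1 ∧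
        G.subtreeLabel r v ≤ G.subtreeLabel r u}.ncard ≤ 1 :=
      (Set.ncard_le_one (Set.toFinite _)).2 fun a ha b hb =>
        hG.eq_of_subtreeLabel_le ha.1 hb.1 ha.2.1 hb.2.1 ha.2.2 hb.2.2
    calc _ ≤ _ := Set.ncard_le_ncard hsub
      _ ≤ _ := Set.ncard_union_le _ _
      _ ≤ 2 := by omega
  · exact (Set.ncard_le_one (Set.toFinite _)).2 fun a ha b hb =>
      hG.eq_of_adj_of_dist_add_one ha.1 hb.1
        (hG.dist_eq_add_one_of_subtreeLabel_lt ha.1 ha.2).symm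
        (hG.dist_eq_add_one_of_subtreeLabel_lt hb.1 hb.2).symm
  · rcases hG.dist_eq_dist_add_one_of_adj r hadj with hv | hw
    · exact fun h => hG.not_exists_adj_subtreeLabel_lt hadj hv hl h.1
    · exact fun h => hG.not_exists_adj_subtreeLabel_lt hadj.symm hw hl.symm h.2

end SimpleGraph

theorem IsLightLabeling.mono {V : Type*} {G : SimpleGraph V} {h h' : ℕ} {lab : V → ℕ}
    (hlab : IsLightLabeling G h lab) (hh : h ≤ h') : IsLightLabeling G h' lab :=
  ⟨fun v => Finset.Icc_subset_Icc le_rfl hh (hlab.1 v), hlab.2⟩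

theorem natLog_two_le_logb {b : ℝ} (hb : 1 < b) (hb₂ : b ≤ 2) (n : ℕ) :
    (Nat.log 2 n : ℝ) ≤ Real.logb b n :=
  calc (Nat.log 2 n : ℝ) ≤ Real.logb 2 n := by exact_mod_cast Real.natLog_le_logb n 2
    _ ≤ Real.logb b n :=
      div_le_div_of_nonneg_left (Real.log_natCast_nonneg n) (Real.log_pos hb)
        (Real.log_le_log (by linarith) hb₂)

theorem stmt_12_general {V : Type*} [Fintype V] (G : SimpleGraph V) (hT : G.IsTree) :
    ∃ lab : V → ℕ,
      IsLightLabeling G (⌈Real.logb (6 / 5) (Fintype.card V)⌉₊ + 1) lab := by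
  obtain ⟨r⟩ := hT.connected.nonempty
  refine ⟨G.subtreeLabel r, (hT.isLightLabeling_subtreeLabel r).mono ?_⟩
  rw [Nat.card_eq_fintype_card]
  gcongr
  exact_mod_cast (natLog_two_le_logb (by norm_num) (by norm_num) _).trans (Nat.le_ceil _)

/-- Every tree on `n ≥ 2` vertices admits a light `h`-labeling with
`h = ⌈log_{6/5} n⌉ + 1`. -/
theorem stmt_12 {V : Type*} [Fintype V] (G : SimpleGraph V) (hT : G.IsTree)
    (hn : 2 ≤ Fintype.card V) :
    ∃ lab : V → ℕ,
      IsLightLabeling G (⌈Real.logb (6 / 5) (Fintype.card V)⌉₊ + 1) lab :=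
  stmt_12_general G hT
end

section
/- There is an absolute constant C such that every tree T on n ≥ 2 vertices has an independent set S with the following properties: no vertex of T has two neighbors in S, and every connected component of the subgraph of T induced by V(T) \ S has radius at most C·log₂ n. -/
/-!
Root the tree at `r` and give each vertex `x` the level `⌊log₂ |T_x|⌋`, where `T_x` is the
subtree below `x`. Levels do not increase going down, and a vertex has at most one child of its
own level (two would give `|T_x| ≥ 2 ^ (level x + 1)`), so every level class splits into
descending chains. Let `S` consist of the vertices whose position in their chain is divisible
by 3; since positions grow by one along a chain and restart at 1 below a level change, no two
vertices of `S` are at distance 1 or 2. A descending path avoiding `S` meets each of the at most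
`log₂ n + 1` levels at most twice, and a path avoiding `S` splits into two descending paths at
its vertex nearest the root, so every component of `T - S` has diameter at most `4 log₂ n + 2`.
-/

namespace SimpleGraph

variable {V : Type*} {G : SimpleGraph V} {r a b u v x y z : V}

theorem IsAcyclic.length_eq_dist (hG : G.IsAcyclic) {p : G.Walk u v} (hp : p.IsPath) :
    p.length = G.dist u v := by
  obtain ⟨q, hq, hql⟩ := p.reachable.exists_path_of_dist
  rw [← hql, Subtype.mk.inj <| (hG.subsingleton_path u v).elim ⟨p, hp⟩ ⟨q, hq⟩]

/-- With the tree rooted at `r`, `x` is an ancestor of `y`: it lies on the geodesic from `r`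
to `y`. -/
def IsAncestor (G : SimpleGraph V) (r x y : V) : Prop :=
  G.dist r x + G.dist x y = G.dist r y

def IsParent (G : SimpleGraph V) (r x y : V) : Prop :=
  G.Adj x y ∧ G.IsAncestor r x y

theorem isAncestor_refl (G : SimpleGraph V) (r x : V) : G.IsAncestor r x x := by
  simp [IsAncestor]

theorem IsAncestor.trans (hG : G.Connected) (hxy : G.IsAncestor r x y)
    (hyz : G.IsAncestor r y z) : G.IsAncestor r x z := by
  have := hG.dist_triangle (u := r) (v := x) (w := z)
  have := hG.dist_triangle (u := x) (v := y) (w := z)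
  unfold IsAncestor at *
  omega

theorem IsAncestor.antisymm (hG : G.Connected) (hxy : G.IsAncestor r x y)
    (hyx : G.IsAncestor r y x) : x = y := by
  have := G.dist_comm (u := x) (v := y)
  unfold IsAncestor at hxy hyx
  exact hG.dist_eq_zero_iff.mp (by omega)

theorem IsAcyclic.isAncestor_of_mem_support (hG : G.IsAcyclic) {p : G.Walk r y}
    (hp : p.IsPath) (hx : x ∈ p.support) : G.IsAncestor r x y := by
  classical
  have hlen := congrArg Walk.length (p.take_spec hx)
  rw [Walk.length_append, hG.length_eq_dist hp, hG.length_eq_dist (hp.takeUntil hx),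
    hG.length_eq_dist (hp.dropUntil hx)] at hlen
  exact hlen

theorem IsAncestor.of_mem_support (hG : G.IsTree) (hab : G.IsAncestor r a b)
    {p : G.Walk a b} (hp : p.IsPath) (hx : x ∈ p.support) :
    G.IsAncestor r a x ∧ G.IsAncestor r x b := by
  have hsplit := hG.isAcyclic.isAncestor_of_mem_support hp hx
  have := hG.connected.dist_triangle (u := r) (v := a) (w := x)
  have := hG.connected.dist_triangle (u := r) (v := x) (w := b)
  unfold IsAncestor at *
  omega

theorem IsTree.mem_support_of_isAncestor (hG : G.IsTree) {p : G.Walk r y} (hp : p.IsPath)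
    (hx : G.IsAncestor r x y) : x ∈ p.support := by
  obtain ⟨q₁, -, hq₁⟩ := hG.connected.exists_path_of_dist r x
  obtain ⟨q₂, -, hq₂⟩ := hG.connected.exists_path_of_dist x y
  have hq : (q₁.append q₂).IsPath := by
    refine Walk.isPath_of_length_eq_dist _ ?_
    rw [Walk.length_append, hq₁, hq₂, hx]
  rw [Subtype.mk.inj <| (hG.isAcyclic.subsingleton_path r y).elim ⟨p, hp⟩ ⟨_, hq⟩]
  exact (Walk.mem_support_append_iff _ _).mpr (Or.inl q₁.end_mem_support)

theorem IsTree.isAncestor_total (hG : G.IsTree) (hx : G.IsAncestor r x v)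
    (hy : G.IsAncestor r y v) : G.IsAncestor r x y ∨ G.IsAncestor r y x := by
  classical
  obtain ⟨p, hp, -⟩ := hG.connected.exists_path_of_dist r v
  have hyp := hG.mem_support_of_isAncestor hp hy
  have hxp := hG.mem_support_of_isAncestor hp hx
  rw [← p.take_spec hyp, Walk.mem_support_append_iff] at hxp
  rcases hxp with hxp | hxp
  · exact Or.inl (hG.isAcyclic.isAncestor_of_mem_support (hp.takeUntil hyp) hxp)
  · have hyxv := hG.isAcyclic.isAncestor_of_mem_support (hp.dropUntil hyp) hxp
    right
    unfold IsAncestor at *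
    omega

theorem IsTree.isParent_or_isParent (hG : G.IsTree) (h : G.Adj u v) :
    G.IsParent r u v ∨ G.IsParent r v u := by
  obtain ⟨p, hp, -⟩ := hG.connected.exists_path_of_dist r v
  by_cases hu : u ∈ p.support
  · exact Or.inl ⟨h, hG.isAcyclic.isAncestor_of_mem_support hp hu⟩
  · exact Or.inr ⟨h.symm, hG.isAcyclic.isAncestor_of_mem_support (hp.concat hu h.symm)
      (p.support_subset_support_concat _ p.end_mem_support)⟩

theorem IsParent.isAncestor_iff (hG : G.IsTree) (h : G.IsParent r x y) :
    G.IsAncestor r u y ↔ u = y ∨ G.IsAncestor r u x := by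
  refine ⟨fun hu => ?_, ?_⟩
  · rcases hG.isAncestor_total hu h.2 with hux | hxu
    · exact Or.inr hux
    have hsum : G.dist x u + G.dist u y = 1 := by
      have := dist_eq_one_iff_adj.mpr h.1
      have := h.2
      unfold IsAncestor at *
      omega
    rcases (show G.dist x u = 0 ∨ G.dist u y = 0 by omega) with h0 | h0
    · exact Or.inr (hG.connected.dist_eq_zero_iff.mp h0 ▸ isAncestor_refl G r x)
    · exact Or.inl (hG.connected.dist_eq_zero_iff.mp h0)
  · rintro (rfl | hu)
    · exact isAncestor_refl G r u
    · exact hu.trans hG.connected h.2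

theorem IsParent.unique (hG : G.IsTree) (hx : G.IsParent r x v) (hy : G.IsParent r y v) :
    x = y := by
  have hxy := ((hx.isAncestor_iff hG).mp hy.2).resolve_left hy.1.ne
  have hyx := ((hy.isAncestor_iff hG).mp hx.2).resolve_left hx.1.ne
  exact hxy.antisymm hG.connected hyx |>.symm

theorem IsTree.isAncestor_of_forall_dist_le (hG : G.IsTree) {p : G.Walk a b} (hp : p.IsPath)
    (hmin : ∀ x ∈ p.support, G.dist r a ≤ G.dist r x) : G.IsAncestor r a b := by
  obtain ⟨q, hq, hql⟩ := hG.connected.exists_path_of_dist r a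
  have hqp : (q.append p).IsPath := by
    rw [Walk.isPath_def, Walk.support_append, List.nodup_append]
    refine ⟨hq.support_nodup, hp.support_nodup.sublist (List.tail_sublist _), ?_⟩
    rintro x hxq _ hxp rfl
    have hxa := hG.isAcyclic.isAncestor_of_mem_support hq hxq
    have := hmin x (List.mem_of_mem_tail hxp)
    have hx : x = a := hG.connected.dist_eq_zero_iff.mp (by unfold IsAncestor at hxa; omega)
    have hnodup := hp.support_nodup
    rw [← p.cons_tail_support, List.nodup_cons] at hnodup
    exact hnodup.1 (hx ▸ hxp)
  have := hG.isAcyclic.length_eq_dist hqp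
  rw [Walk.length_append, hql, hG.isAcyclic.length_eq_dist hp] at this
  exact this

noncomputable def subtreeCard (G : SimpleGraph V) (r x : V) : ℕ :=
  {y | G.IsAncestor r x y}.ncard

noncomputable def level (G : SimpleGraph V) (r x : V) : ℕ :=
  Nat.log 2 (G.subtreeCard r x)

/-- The position of `x`, counted from `1`, in the chain of its ancestors of the same level. -/
noncomputable def levelIndex (G : SimpleGraph V) (r x : V) : ℕ :=
  {u | G.IsAncestor r u x ∧ G.level r u = G.level r x}.ncard

def separator (G : SimpleGraph V) (r : V) : Set V :=
  {x | G.levelIndex r x % 3 = 0}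

section Finite

variable [Finite V]

theorem subtreeCard_pos (G : SimpleGraph V) (r x : V) : 0 < G.subtreeCard r x :=
  (Set.ncard_pos (Set.toFinite _)).mpr ⟨x, isAncestor_refl G r x⟩

theorem IsAncestor.subtreeCard_le (hG : G.Connected) (h : G.IsAncestor r x y) :
    G.subtreeCard r y ≤ G.subtreeCard r x :=
  Set.ncard_le_ncard fun _ hu => h.trans hG hu

theorem IsAncestor.level_le (hG : G.Connected) (h : G.IsAncestor r x y) :
    G.level r y ≤ G.level r x :=
  Nat.log_mono_right (h.subtreeCard_le hG)

theorem level_le_log_card (G : SimpleGraph V) (r x : V) :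
    G.level r x ≤ Nat.log 2 (Nat.card V) :=
  Nat.log_mono_right (Set.ncard_le_card _)

theorem IsParent.levelIndex_eq_succ_or_eq_one (hG : G.IsTree) (h : G.IsParent r x y) :
    (G.level r y = G.level r x ∧ G.levelIndex r y = G.levelIndex r x + 1) ∨
      (G.level r y < G.level r x ∧ G.levelIndex r y = 1) := by
  have hset : {u | G.IsAncestor r u y ∧ G.level r u = G.level r y} =
      insert y {u | G.IsAncestor r u x ∧ G.level r u = G.level r y} := by
    ext u
    simp only [Set.mem_ofPred_eq, Set.mem_insert_iff, h.isAncestor_iff hG]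
    constructor
    · rintro ⟨rfl | hu, hl⟩
      exacts [Or.inl rfl, Or.inr ⟨hu, hl⟩]
    · rintro (rfl | ⟨hu, hl⟩)
      exacts [⟨Or.inl rfl, rfl⟩, ⟨Or.inr hu, hl⟩]
  rw [levelIndex, levelIndex, hset]
  rcases (h.2.level_le hG.connected).eq_or_lt with heq | hlt
  · have hy : y ∉ {u | G.IsAncestor r u x ∧ G.level r u = G.level r y} :=
      fun hy => h.1.ne (h.2.antisymm hG.connected hy.1)
    exact Or.inl ⟨heq, by rw [Set.ncard_insert_of_notMem hy, heq]⟩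
  · have hempty : {u | G.IsAncestor r u x ∧ G.level r u = G.level r y} = ∅ :=
      Set.eq_empty_of_forall_notMem fun u hu => by
        have := hu.1.level_le hG.connected
        have := hu.2
        omega
    exact Or.inr ⟨hlt, by rw [hempty, insert_empty_eq, Set.ncard_singleton]⟩

/-- Two children of the same level as their parent would make the parent's subtree too large. -/
theorem IsParent.eq_of_level_eq (hG : G.IsTree) (hy : G.IsParent r x y) (hz : G.IsParent r x z)
    (hly : G.level r y = G.level r x) (hlz : G.level r z = G.level r x) : y = z := by
  have incomparable : ∀ {y z}, G.IsParent r x y → G.IsParent r x z → G.IsAncestor r y z →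
      y = z := fun hy hz hyz =>
    ((hz.isAncestor_iff hG).mp hyz).resolve_right fun hyx =>
      hy.1.ne (hy.2.antisymm hG.connected hyx)
  by_contra hne
  have hdisj : Disjoint {u | G.IsAncestor r y u} {u | G.IsAncestor r z u} :=
    Set.disjoint_left.mpr fun u hyu hzu => hne <|
      (hG.isAncestor_total hyu hzu).elim (incomparable hy hz) fun hzy =>
        (incomparable hz hy hzy).symm
  have hsub : {u | G.IsAncestor r y u} ∪ {u | G.IsAncestor r z u} ⊆ {u | G.IsAncestor r x u} :=
    Set.union_subset (fun _ hu => hy.2.trans hG.connected hu)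
      (fun _ hu => hz.2.trans hG.connected hu)
  have hcard : G.subtreeCard r y + G.subtreeCard r z ≤ G.subtreeCard r x := by
    rw [subtreeCard, subtreeCard, ← Set.ncard_union_eq hdisj]
    exact Set.ncard_le_ncard hsub
  have hpy := Nat.pow_log_le_self 2 (G.subtreeCard_pos r y).ne'
  have hpz := Nat.pow_log_le_self 2 (G.subtreeCard_pos r z).ne'
  have hpx := Nat.lt_pow_succ_log_self one_lt_two (G.subtreeCard r x)
  simp only [level] at hly hlz
  rw [hly] at hpy
  rw [hlz] at hpz
  rw [pow_succ] at hpx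
  omega

theorem IsParent.notMem_separator (hG : G.IsTree) (h : G.IsParent r x y)
    (hx : x ∈ G.separator r) : y ∉ G.separator r := by
  simp only [separator, Set.mem_ofPred_eq] at hx ⊢
  rcases h.levelIndex_eq_succ_or_eq_one hG with ⟨-, h⟩ | ⟨-, h⟩ <;> omega

theorem IsParent.notMem_separator_of_isParent (hG : G.IsTree) (hxy : G.IsParent r x y)
    (hyz : G.IsParent r y z) (hx : x ∈ G.separator r) : z ∉ G.separator r := by
  simp only [separator, Set.mem_ofPred_eq] at hx ⊢
  rcases hxy.levelIndex_eq_succ_or_eq_one hG with ⟨-, h⟩ | ⟨-, h⟩ <;>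
    rcases hyz.levelIndex_eq_succ_or_eq_one hG with ⟨-, h'⟩ | ⟨-, h'⟩ <;> omega

theorem IsParent.eq_of_mem_separator (hG : G.IsTree) (hy : G.IsParent r x y)
    (hz : G.IsParent r x z) (hy' : y ∈ G.separator r) (hz' : z ∈ G.separator r) : y = z := by
  simp only [separator, Set.mem_ofPred_eq] at hy' hz'
  refine hy.eq_of_level_eq hG hz ?_ ?_
  · rcases hy.levelIndex_eq_succ_or_eq_one hG with ⟨h, -⟩ | ⟨-, h⟩
    exacts [h, by omega]
  · rcases hz.levelIndex_eq_succ_or_eq_one hG with ⟨h, -⟩ | ⟨-, h⟩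
    exacts [h, by omega]

theorem IsTree.not_adj_of_mem_separator (hG : G.IsTree) (hx : x ∈ G.separator r)
    (hy : y ∈ G.separator r) : ¬G.Adj x y := fun h =>
  (hG.isParent_or_isParent h).elim (fun h => h.notMem_separator hG hx hy)
    (fun h => h.notMem_separator hG hy hx)

theorem IsTree.eq_of_adj_of_adj_of_mem_separator (hG : G.IsTree) (hx : x ∈ G.separator r)
    (hz : z ∈ G.separator r) (hxy : G.Adj x y) (hyz : G.Adj y z) : x = z := by
  rcases hG.isParent_or_isParent (r := r) hxy with hxy | hyx <;>
    rcases hG.isParent_or_isParent (r := r) hyz with hyz | hzy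
  · exact (hxy.notMem_separator_of_isParent hG hyz hx hz).elim
  · exact hxy.unique hG hzy
  · exact hyx.eq_of_mem_separator hG hyz hx hz
  · exact (hzy.notMem_separator_of_isParent hG hyx hz hx).elim

/-- Along a descending path off the separator, `2 * level - levelIndex % 3` drops by at least
one per edge. -/
theorem IsAncestor.length_add_two_mul_level_le (hG : G.IsTree) (hab : G.IsAncestor r a b)
    {p : G.Walk a b} (hp : p.IsPath) (hS : ∀ x ∈ p.support, x ∉ G.separator r) :
    p.length + 2 * G.level r b + G.levelIndex r a % 3 ≤
      2 * G.level r a + G.levelIndex r b % 3 := by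
  induction p with
  | nil => simp
  | @cons a x b h q ih =>
    have hxq : x ∈ (Walk.cons h q).support := List.mem_cons_of_mem _ q.start_mem_support
    obtain ⟨hax, hxb⟩ := hab.of_mem_support hG hp hxq
    have ih := ih hxb hp.of_cons fun y hy => hS y (List.mem_cons_of_mem _ hy)
    have ha := hS a (Walk.cons h q).start_mem_support
    have hx := hS x hxq
    simp only [separator, Set.mem_ofPred_eq, Walk.length_cons] at ha hx ⊢
    rcases IsParent.levelIndex_eq_succ_or_eq_one hG ⟨h, hax⟩ with ⟨h₁, h₂⟩ | ⟨h₁, h₂⟩ <;>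
      omega

theorem IsAncestor.length_le (hG : G.IsTree) (hab : G.IsAncestor r a b)
    {p : G.Walk a b} (hp : p.IsPath) (hS : ∀ x ∈ p.support, x ∉ G.separator r) :
    p.length ≤ 2 * Nat.log 2 (Nat.card V) + 1 := by
  have := hab.length_add_two_mul_level_le hG hp hS
  have := G.level_le_log_card r a
  have ha := hS a p.start_mem_support
  simp only [separator, Set.mem_ofPred_eq] at ha
  omega

theorem IsTree.length_le_of_forall_notMem_separator (hG : G.IsTree) {p : G.Walk a b}
    (hp : p.IsPath) (hS : ∀ x ∈ p.support, x ∉ G.separator r) :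
    p.length ≤ 4 * Nat.log 2 (Nat.card V) + 2 := by
  classical
  obtain ⟨m, hm, hmin⟩ := p.support.toFinset.exists_min_image (G.dist r) ⟨a, by simp⟩
  rw [List.mem_toFinset] at hm
  have hsplit := congrArg Walk.length (p.take_spec hm)
  rw [Walk.length_append] at hsplit
  have h₁ : ((p.takeUntil m hm).reverse).length ≤ 2 * Nat.log 2 (Nat.card V) + 1 := by
    have hsub : ∀ x ∈ (p.takeUntil m hm).reverse.support, x ∈ p.support := fun x hx =>
      p.support_takeUntil_subset_support hm (by simpa using hx)
    refine (hG.isAncestor_of_forall_dist_le (r := r) (hp.takeUntil hm).reverse fun x hx =>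
      hmin x (List.mem_toFinset.mpr (hsub x hx))).length_le hG (hp.takeUntil hm).reverse
      fun x hx => hS x (hsub x hx)
  have h₂ : (p.dropUntil m hm).length ≤ 2 * Nat.log 2 (Nat.card V) + 1 := by
    have hsub : ∀ x ∈ (p.dropUntil m hm).support, x ∈ p.support := fun x hx =>
      p.support_dropUntil_subset_support hm hx
    refine (hG.isAncestor_of_forall_dist_le (r := r) (hp.dropUntil hm) fun x hx =>
      hmin x (List.mem_toFinset.mpr (hsub x hx))).length_le hG (hp.dropUntil hm)
      fun x hx => hS x (hsub x hx)
  rw [Walk.length_reverse] at h₁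
  omega

theorem IsTree.dist_induce_compl_separator_le (hG : G.IsTree) {s t : ↥(G.separator r)ᶜ}
    (h : (G.induce (G.separator r)ᶜ).Reachable s t) :
    (G.induce (G.separator r)ᶜ).dist s t ≤ 4 * Nat.log 2 (Nat.card V) + 2 := by
  obtain ⟨p, hp, hpl⟩ := h.exists_path_of_dist
  rw [← hpl, ← p.length_map (Embedding.induce (G := G) _).toHom]
  refine hG.length_le_of_forall_notMem_separator (r := r)
    (hp.map (Embedding.induce (G := G) _).injective) ?_
  intro x hx
  rw [Walk.support_map] at hx
  obtain ⟨y, -, rfl⟩ := List.mem_map.mp hx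
  exact y.2

end Finite

end SimpleGraph

/-- Every tree on `n ≥ 2` vertices has an independent set `S` such that no vertex has two
neighbors in `S` and every connected component of the subgraph induced on the complement of `S`
has radius `O(log n)`. -/
theorem stmt_13 :
    ∃ C : ℝ, ∀ (V : Type) [Fintype V] (G : SimpleGraph V), G.IsTree → 2 ≤ Fintype.card V →
      ∃ S : Set V,
        (∀ u ∈ S, ∀ v ∈ S, ¬ G.Adj u v) ∧
        (∀ v : V, ∀ u ∈ S, ∀ w ∈ S, u ≠ w → G.Adj v u → ¬ G.Adj v w) ∧
        (∀ c : (G.induce Sᶜ).ConnectedComponent, ∃ r ∈ c.supp, ∀ v ∈ c.supp,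
          ((G.induce Sᶜ).dist r v : ℝ) ≤ C * Real.logb 2 (Fintype.card V)) := by
  refine ⟨6, fun V _ G hG hn => ?_⟩
  obtain ⟨r⟩ : Nonempty V := Fintype.card_pos_iff.mp (by omega)
  refine ⟨G.separator r, fun u hu v hv => hG.not_adj_of_mem_separator hu hv,
    fun v u hu w hw huw hvu hvw => huw (hG.eq_of_adj_of_adj_of_mem_separator hu hw hvu.symm hvw),
    fun c => ?_⟩
  obtain ⟨t, rfl⟩ := c.exists_rep
  refine ⟨t, rfl, fun v hv => ?_⟩
  have hdist := hG.dist_induce_compl_separator_le (SimpleGraph.ConnectedComponent.exact hv.symm)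
  rw [Nat.card_eq_fintype_card] at hdist
  have hlog : 1 ≤ Nat.log 2 (Fintype.card V) := Nat.log_pos one_lt_two hn
  have hlogb := Real.natLog_le_logb (Fintype.card V) 2
  calc ((G.induce (G.separator r)ᶜ).dist t v : ℝ)
      ≤ 4 * Nat.log 2 (Fintype.card V) + 2 := by exact_mod_cast hdist
    _ ≤ 6 * Real.logb 2 (Fintype.card V) := by
      have : (1 : ℝ) ≤ Nat.log 2 (Fintype.card V) := by exact_mod_cast hlog
      push_cast at hlogb
      linarith
end

section
/- Let G be a finite simple graph on n ≥ 2 vertices with maximum degree at most 3, and let u be a vertex of G. Then the set B of vertices at distance at most 2·⌈log₂ n⌉ from u either contains a vertex whose degree in G is at most 2, or contains all vertices of a theta of G. -/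
open SimpleGraph

/-!
Suppose every vertex within distance `N = 2⌈log₂ n⌉` of `u` has degree 3 and no theta lies in
this ball. Then two cycles in the ball through a common vertex have the same edges: otherwise an
ear of one attached to the other closes a theta, or their common vertex has degree 4.

Call `y` a private child of `v` if `v` is the only neighbour of `y` closer to `u`. A neighbour `x`
of `v` that is not a private child reaches `u` avoiding `v` and never moving farther from `u`
than `v`, except at `x` itself; two such neighbours thus close a cycle through `v`. Comparing such
cycles shows that every vertex `v` in the ball has a private child, and that if it has only one,
`z`, then `z` has two. So `v` has two private grandchildren, and these are distinct for distinct
`v`: the sphere of radius `j + 2` is at least twice as large as that of radius `j`. The sphere of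
radius `2t + 1` then has at least `3 · 2^t` vertices, which for `t = ⌈log₂ n⌉ - 1` exceeds
`n - 1`.
-/

/-- A theta of `G`: two distinct vertices `a` and `b` together with three pairwise distinct
paths from `a` to `b` that pairwise share no vertices other than `a` and `b`. -/
def IsTheta {V : Type*} (G : SimpleGraph V) (a b : V) (p₁ p₂ p₃ : G.Walk a b) : Prop :=
  a ≠ b ∧ p₁.IsPath ∧ p₂.IsPath ∧ p₃.IsPath ∧
  p₁ ≠ p₂ ∧ p₁ ≠ p₃ ∧ p₂ ≠ p₃ ∧
  (∀ x ∈ p₁.support, x ∈ p₂.support → x = a ∨ x = b) ∧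
  (∀ x ∈ p₁.support, x ∈ p₃.support → x = a ∨ x = b) ∧
  (∀ x ∈ p₂.support, x ∈ p₃.support → x = a ∨ x = b)

namespace SimpleGraph.Walk

variable {V : Type*} {G : SimpleGraph V}

theorem exists_eq_append_of_end_mem (S : Set V) {a b : V} (p : G.Walk a b) (hb : b ∈ S) :
    ∃ (m : V) (q : G.Walk a m) (r : G.Walk m b), p = q.append r ∧ m ∈ S ∧
      ∀ x ∈ q.support, x ∈ S → x = m := by
  induction p with
  | nil => exact ⟨_, nil, nil, rfl, hb, by simp⟩
  | @cons a c b h p ih =>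
    by_cases ha : a ∈ S
    · exact ⟨a, nil, cons h p, rfl, ha, by simp⟩
    · obtain ⟨m, q, r, rfl, hm, hq⟩ := ih hb
      refine ⟨m, cons h q, r, rfl, hm, ?_⟩
      simp only [support_cons, List.mem_cons, forall_eq_or_imp]
      exact ⟨fun h => absurd h ha, hq⟩

variable [DecidableEq V]

theorem IsCycle.exists_adj_ne_of_mem_support {v x : V} {c : G.Walk v v} (hc : c.IsCycle)
    (hx : x ∈ c.support) :
    ∃ y z, y ≠ z ∧ G.Adj x y ∧ G.Adj x z ∧ y ∈ c.support ∧ z ∈ c.support := by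
  have hc' := hc.rotate hx
  exact ⟨_, _, hc'.snd_ne_penultimate, adj_snd hc'.not_nil, (adj_penultimate hc'.not_nil).symm,
    (mem_support_rotate_iff ..).mp (getVert_mem_support ..),
    (mem_support_rotate_iff ..).mp (getVert_mem_support ..)⟩

theorem IsCycle.exists_isPath_ne {v a b : V} {c : G.Walk v v} (hc : c.IsCycle)
    (ha : a ∈ c.support) (hb : b ∈ c.support) (hab : a ≠ b) :
    ∃ q₁ q₂ : G.Walk a b, q₁.IsPath ∧ q₂.IsPath ∧ q₁ ≠ q₂ ∧
      (∀ x ∈ q₁.support, x ∈ q₂.support → x = a ∨ x = b) ∧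
      (∀ x, x ∈ c.support ↔ x ∈ q₁.support ∨ x ∈ q₂.support) ∧
      (∀ e, e ∈ c.edges ↔ e ∈ q₁.edges ∨ e ∈ q₂.edges) := by
  obtain ⟨q₁, q₂, hspec⟩ : ∃ (q₁ : G.Walk a b) (q₂ : G.Walk b a), q₁.append q₂ = c.rotate a ha :=
    ⟨_, _, take_spec _ ((mem_support_rotate_iff ..).mpr hb)⟩
  have hc' : (q₁.append q₂).IsCycle := hspec ▸ hc.rotate ha
  have hq₁ : ¬ q₁.Nil := not_nil_of_ne hab
  have hq₂ : ¬ q₂.Nil := not_nil_of_ne hab.symm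
  have htail := hc'.support_nodup
  rw [tail_support_append, List.nodup_append'] at htail
  have hedges := hc'.edges_nodup
  rw [edges_append] at hedges
  refine ⟨q₁, q₂.reverse, hc'.isPath_of_append_left hq₂,
    (hc'.isPath_of_append_right hq₁).reverse, ?_, ?_, fun x => ?_, fun e => ?_⟩
  · rintro rfl
    obtain ⟨e, he⟩ := List.exists_mem_of_ne_nil _ (edges_eq_nil.not.mpr hq₂)
    exact List.disjoint_of_nodup_append hedges (by simpa using he) he
  · intro x hx₁ hx₂
    rw [support_reverse, List.mem_reverse] at hx₂
    by_contra! hx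
    rw [← cons_tail_support] at hx₁ hx₂
    exact htail.2.2 ((List.mem_cons.mp hx₁).resolve_left hx.1)
      ((List.mem_cons.mp hx₂).resolve_left hx.2)
  · rw [← mem_support_rotate_iff c a ha, ← hspec, mem_support_append_iff, support_reverse,
      List.mem_reverse]
  · rw [← (rotate_edges c a ha).perm.mem_iff, ← hspec, edges_append, edges_reverse,
      List.mem_append, List.mem_reverse]

theorem exists_isCycle_of_adj_of_adj {v a b : V} (hva : G.Adj v a) (hvb : G.Adj v b)
    (hab : a ≠ b) (p : G.Walk a b) (hv : v ∉ p.support) :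
    ∃ K : G.Walk v v, K.IsCycle ∧ s(v, a) ∈ K.edges ∧ s(v, b) ∈ K.edges ∧
      (∀ e ∈ K.edges, v ∈ e → e = s(v, a) ∨ e = s(v, b)) ∧
      ∀ x ∈ K.support, x = v ∨ x ∈ p.support := by
  have hvq : v ∉ p.bypass.support := fun h => hv (p.support_bypass_subset_support h)
  have hbv : s(b, v) = s(v, b) := Sym2.eq_swap
  refine ⟨cons hva (p.bypass.concat hvb.symm), ?_, by simp, by simp [hbv], ?_, ?_⟩
  · refine (cons_isCycle_iff _ hva).mpr ⟨p.bypass_isPath.concat hvq hvb.symm, ?_⟩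
    rw [edges_concat, List.concat_eq_append, List.mem_append, List.mem_singleton, hbv]
    rintro (h | h)
    · exact hvq (p.bypass.fst_mem_support_of_mem_edges h)
    · exact hab (Sym2.congr_right.mp h)
  · intro e he hve
    rw [edges_cons, edges_concat, List.concat_eq_append, List.mem_cons, List.mem_append,
      List.mem_singleton, hbv] at he
    rcases he with h | h | h
    · exact .inl h
    · exact absurd (mem_support_of_mem_edges h hve) hvq
    · exact .inr h
  · intro x hx
    rw [support_cons, support_concat, List.mem_cons, List.mem_append,
      List.mem_singleton] at hx
    rcases hx with h | h | h
    · exact .inl h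
    · exact .inr (p.support_bypass_subset_support h)
    · exact .inl h

end SimpleGraph.Walk

namespace SimpleGraph

variable {V : Type*} {G : SimpleGraph V}

def ThetaFreeOn (G : SimpleGraph V) (S : Set V) : Prop :=
  ∀ ⦃a b : V⦄ (p₁ p₂ p₃ : G.Walk a b), IsTheta G a b p₁ p₂ p₃ →
    ∃ x, (x ∈ p₁.support ∨ x ∈ p₂.support ∨ x ∈ p₃.support) ∧ x ∉ S

namespace ThetaFreeOn

variable [DecidableEq V] {S : Set V} {c : V} {C : G.Walk c c}

theorem edges_subset_of_ear (hS : G.ThetaFreeOn S) (hC : C.IsCycle)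
    (hCS : ∀ x ∈ C.support, x ∈ S) {a b : V} (ha : a ∈ C.support) (hb : b ∈ C.support)
    (hab : a ≠ b) {q : G.Walk a b} (hq : q.IsPath) (hqS : ∀ x ∈ q.support, x ∈ S)
    (hqC : ∀ x ∈ q.support, x ∈ C.support → x = a ∨ x = b) : q.edges ⊆ C.edges := by
  intro e he
  by_contra heC
  obtain ⟨q₁, q₂, hq₁, hq₂, hne, hdisj, hsupp, hedges⟩ := hC.exists_isPath_ne ha hb hab
  have hq₁C : ∀ x ∈ q₁.support, x ∈ C.support := fun x hx => (hsupp x).mpr (.inl hx)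
  have hq₂C : ∀ x ∈ q₂.support, x ∈ C.support := fun x hx => (hsupp x).mpr (.inr hx)
  obtain ⟨x, hx, hxS⟩ := hS q₁ q₂ q ⟨hab, hq₁, hq₂, hq, hne,
    by rintro rfl; exact heC ((hedges e).mpr (.inl he)),
    by rintro rfl; exact heC ((hedges e).mpr (.inr he)), hdisj,
    fun x hx₁ hx₂ => hqC x hx₂ (hq₁C x hx₁), fun x hx₂ hx₃ => hqC x hx₃ (hq₂C x hx₂)⟩
  rcases hx with hx | hx | hx
  exacts [hxS (hCS x (hq₁C x hx)), hxS (hCS x (hq₂C x hx)), hxS (hqS x hx)]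

theorem edges_subset_of_isPath (hS : G.ThetaFreeOn S) (hC : C.IsCycle)
    (hCS : ∀ x ∈ C.support, x ∈ S) {a b : V} {p : G.Walk a b} (hp : p.IsPath)
    (hpS : ∀ x ∈ p.support, x ∈ S) (ha : a ∈ C.support) (hb : b ∈ C.support) :
    p.edges ⊆ C.edges := by
  induction p with
  | nil => simp
  | @cons a a' b h p ih =>
    by_cases hedge : s(a, a') ∈ C.edges
    · rw [Walk.edges_cons, List.cons_subset]
      exact ⟨hedge, ih hp.of_cons (fun x hx => hpS x (by simp [hx]))
        (C.snd_mem_support_of_mem_edges hedge) hb⟩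
    · exfalso
      obtain ⟨m, q, r, rfl, hm, hqC⟩ := p.exists_eq_append_of_end_mem {x | x ∈ C.support} hb
      rw [← Walk.cons_append] at hp hpS
      have ham : a ≠ m := by
        rintro rfl
        exact ((Walk.cons_isPath_iff h _).mp (Walk.cons_append h q r ▸ hp)).2
          (Walk.support_subset_support_append_left q r q.end_mem_support)
      refine hedge (edges_subset_of_ear hS hC hCS ha hm ham hp.of_append_left
        (fun x hx => hpS x (Walk.support_subset_support_append_left _ r hx)) ?_ (by simp))
      intro x hx hxC
      rw [Walk.support_cons, List.mem_cons] at hx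
      exact hx.imp id (hqC x · hxC)

theorem edges_subset_of_mem_support (hS : G.ThetaFreeOn S) {x : V} [Fintype (G.neighborSet x)]
    (hx : G.degree x ≤ 3) {c₁ c₂ : V} {K₁ : G.Walk c₁ c₁} {K₂ : G.Walk c₂ c₂}
    (hK₁ : K₁.IsCycle) (hK₂ : K₂.IsCycle) (hK₁S : ∀ y ∈ K₁.support, y ∈ S)
    (hK₂S : ∀ y ∈ K₂.support, y ∈ S) (hx₁ : x ∈ K₁.support) (hx₂ : x ∈ K₂.support) :
    K₁.edges ⊆ K₂.edges := by
  by_cases h : ∃ y ∈ K₁.support, y ∈ K₂.support ∧ y ≠ x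
  · obtain ⟨y, hy₁, hy₂, hyx⟩ := h
    obtain ⟨q₁, q₂, hq₁, hq₂, -, -, hsupp, hedges⟩ := hK₁.exists_isPath_ne hx₁ hy₁ hyx.symm
    intro e he
    rcases (hedges e).mp he with he | he
    · exact edges_subset_of_isPath hS hK₂ hK₂S hq₁
        (fun z hz => hK₁S z ((hsupp z).mpr (.inl hz))) hx₂ hy₂ he
    · exact edges_subset_of_isPath hS hK₂ hK₂S hq₂
        (fun z hz => hK₁S z ((hsupp z).mpr (.inr hz))) hx₂ hy₂ he
  · -- the cycles meet only in `x`, which then has four distinct neighbours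
    push Not at h
    obtain ⟨y₁, y₂, hy, hxy₁, hxy₂, hy₁, hy₂⟩ := hK₁.exists_adj_ne_of_mem_support hx₁
    obtain ⟨z₁, z₂, hz, hxz₁, hxz₂, hz₁, hz₂⟩ := hK₂.exists_adj_ne_of_mem_support hx₂
    have hyz : ∀ y ∈ K₁.support, G.Adj x y → ∀ z ∈ K₂.support, y ≠ z :=
      fun y hy hxy z hz hyz => hxy.ne (h y hy (hyz ▸ hz)).symm
    have hsub : ({y₁, y₂, z₁, z₂} : Finset V) ⊆ G.neighborFinset x := by
      intro w hw
      simp only [Finset.mem_insert, Finset.mem_singleton] at hw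
      rcases hw with rfl | rfl | rfl | rfl <;> simpa
    have hcard := Finset.card_le_card hsub
    rw [card_neighborFinset_eq_degree, Finset.card_insert_of_notMem, Finset.card_insert_of_notMem,
      Finset.card_pair hz] at hcard
    · omega
    · simp [hyz y₂ hy₂ hxy₂ z₁ hz₁, hyz y₂ hy₂ hxy₂ z₂ hz₂]
    · simp [hy, hyz y₁ hy₁ hxy₁ z₁ hz₁, hyz y₁ hy₁ hxy₁ z₂ hz₂]

end ThetaFreeOn

theorem Reachable.exists_walk_dist_lt {u x : V} (h : G.Reachable u x) :
    ∃ p : G.Walk x u, ∀ y ∈ p.support, y = x ∨ (G.Reachable u y ∧ G.dist u y < G.dist u x) := by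
  obtain ⟨p, hp⟩ := h.exists_walk_length_eq_dist
  refine ⟨p.reverse, fun y hy => or_iff_not_imp_left.mpr fun hyx => ?_⟩
  rw [Walk.support_reverse, List.mem_reverse] at hy
  obtain ⟨q, r, rfl⟩ := Walk.mem_support_iff_exists_append.mp hy
  have hr : r.length ≠ 0 := fun h => hyx (Walk.eq_of_length_eq_zero h)
  have hq := dist_le q
  rw [Walk.length_append] at hp
  exact ⟨⟨q⟩, by omega⟩

variable [Fintype V] {u : V}

-- For `j = 0` this also contains the vertices not reachable from `u`, whose `dist` is `0`.
variable (G) in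
noncomputable def distLayer (u : V) (j : ℕ) : Finset V :=
  Finset.univ.filter fun v => G.dist u v = j

theorem mem_distLayer {v : V} {j : ℕ} : v ∈ G.distLayer u j ↔ G.dist u v = j := by
  simp [distLayer]

variable [DecidableRel G.Adj]

variable (G) in
noncomputable def parents (u v : V) : Finset V :=
  Finset.univ.filter fun w => G.Adj v w ∧ G.dist u w + 1 = G.dist u v

theorem mem_parents {v w : V} : w ∈ G.parents u v ↔ G.Adj v w ∧ G.dist u w + 1 = G.dist u v := by
  simp [parents]

variable [DecidableEq V]

variable (G) in
noncomputable def privateChildren (u v : V) : Finset V :=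
  Finset.univ.filter fun y => G.parents u y = {v}

theorem mem_privateChildren {v y : V} : y ∈ G.privateChildren u v ↔ G.parents u y = {v} := by
  simp [privateChildren]

theorem adj_and_dist_of_mem_privateChildren {v y : V} (hy : y ∈ G.privateChildren u v) :
    G.Adj v y ∧ G.dist u y = G.dist u v + 1 := by
  have hv : v ∈ G.parents u y := by simp [mem_privateChildren.mp hy]
  obtain ⟨hyv, hd⟩ := mem_parents.mp hv
  exact ⟨hyv.symm, hd.symm⟩

theorem exists_walk_of_not_mem_privateChildren {v x : V} (hv : G.Reachable u v)
    (hvx : G.Adj v x) (hx : x ∉ G.privateChildren u v) :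
    ∃ p : G.Walk x u, v ∉ p.support ∧
      ∀ y ∈ p.support, y = x ∨ (G.Reachable u y ∧ G.dist u y ≤ G.dist u v) := by
  by_cases hxv : G.dist u x ≤ G.dist u v
  · obtain ⟨p, hp⟩ := (hv.trans hvx.reachable).exists_walk_dist_lt
    refine ⟨p, fun hvp => ?_, fun y hy => (hp y hy).imp_right fun h => ⟨h.1, by omega⟩⟩
    rcases hp v hvp with h | h
    exacts [hvx.ne h, by omega]
  · -- `x` is a child of `v` with a second parent `w`, through which it escapes
    have hdx : G.dist u x = G.dist u v + 1 := by
      have := hvx.diff_dist_adj (u := u)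
      omega
    obtain ⟨w, hw, hwv⟩ : ∃ w ∈ G.parents u x, w ≠ v := by
      by_contra! h
      exact hx (mem_privateChildren.mpr (Finset.eq_singleton_iff_unique_mem.mpr
        ⟨mem_parents.mpr ⟨hvx.symm, hdx.symm⟩, h⟩))
    obtain ⟨hxw, hdw⟩ := mem_parents.mp hw
    have hrw : G.Reachable u w := hv.trans (hvx.reachable.trans hxw.reachable)
    obtain ⟨p, hp⟩ := hrw.exists_walk_dist_lt
    have hp' : ∀ y ∈ p.support, G.Reachable u y ∧ G.dist u y ≤ G.dist u v := fun y hy => by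
      rcases hp y hy with rfl | h
      exacts [⟨hrw, by omega⟩, ⟨h.1, by omega⟩]
    refine ⟨Walk.cons hxw p, ?_, fun y hy => ?_⟩
    · rw [Walk.support_cons, List.mem_cons, not_or]
      refine ⟨hvx.ne, fun hvp => ?_⟩
      rcases hp v hvp with h | h
      exacts [hwv h.symm, by omega]
    · rw [Walk.support_cons, List.mem_cons] at hy
      exact hy.imp_right (hp' y)

theorem exists_isCycle_of_not_mem_privateChildren {v a b : V} (hv : G.Reachable u v)
    (hva : G.Adj v a) (hvb : G.Adj v b) (hab : a ≠ b) (ha : a ∉ G.privateChildren u v)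
    (hb : b ∉ G.privateChildren u v) :
    ∃ K : G.Walk v v, K.IsCycle ∧ s(v, a) ∈ K.edges ∧ s(v, b) ∈ K.edges ∧
      (∀ e ∈ K.edges, v ∈ e → e = s(v, a) ∨ e = s(v, b)) ∧
      ∀ y ∈ K.support, G.Reachable u y ∧ G.dist u y ≤ G.dist u v + 1 ∧
        (G.dist u y = G.dist u v + 1 → y = a ∨ y = b) := by
  obtain ⟨pa, hvpa, hpa⟩ := exists_walk_of_not_mem_privateChildren hv hva ha
  obtain ⟨pb, hvpb, hpb⟩ := exists_walk_of_not_mem_privateChildren hv hvb hb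
  obtain ⟨K, hK, hKa, hKb, hKv, hKsupp⟩ := Walk.exists_isCycle_of_adj_of_adj hva hvb hab
    (pa.append pb.reverse) (by simp [Walk.mem_support_append_iff, hvpa, hvpb])
  refine ⟨K, hK, hKa, hKb, hKv, fun y hy => ?_⟩
  have hnbr {x : V} (hvx : G.Adj v x) : G.Reachable u x ∧ G.dist u x ≤ G.dist u v + 1 :=
    ⟨hv.trans hvx.reachable, by have := hvx.diff_dist_adj (u := u); omega⟩
  rcases hKsupp y hy with rfl | hy
  · exact ⟨hv, by omega, by omega⟩
  rw [Walk.mem_support_append_iff, Walk.support_reverse, List.mem_reverse] at hy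
  rcases hy with hy | hy
  · rcases hpa y hy with rfl | h
    exacts [⟨(hnbr hva).1, (hnbr hva).2, fun _ => .inl rfl⟩, ⟨h.1, by omega, by omega⟩]
  · rcases hpb y hy with rfl | h
    exacts [⟨(hnbr hvb).1, (hnbr hvb).2, fun _ => .inr rfl⟩, ⟨h.1, by omega, by omega⟩]

namespace ThetaFreeOn

variable {S : Set V}

theorem privateChildren_nonempty (hS : G.ThetaFreeOn S) {v : V} (hv : G.Reachable u v)
    (hSv : ∀ y, G.Reachable u y → G.dist u y ≤ G.dist u v + 1 → y ∈ S) (hdeg : G.degree v = 3) :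
    (G.privateChildren u v).Nonempty := by
  by_contra! hempty
  have hnot (x : V) : x ∉ G.privateChildren u v := by simp [hempty]
  obtain ⟨a, b, c, hab, hac, hbc, hN⟩ :=
    Finset.card_eq_three.mp (hdeg ▸ card_neighborFinset_eq_degree G v)
  have hadj {x : V} (hx : x ∈ ({a, b, c} : Finset V)) : G.Adj v x :=
    (mem_neighborFinset G v x).mp (hN ▸ hx)
  obtain ⟨K₁, hK₁, -, -, hK₁v, hK₁S⟩ := exists_isCycle_of_not_mem_privateChildren hv
    (hadj (by simp)) (hadj (by simp)) hab (hnot a) (hnot b)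
  obtain ⟨K₂, hK₂, -, hK₂c, -, hK₂S⟩ := exists_isCycle_of_not_mem_privateChildren hv
    (hadj (by simp)) (hadj (by simp)) hac (hnot a) (hnot c)
  have hc := hS.edges_subset_of_mem_support hdeg.le hK₂ hK₁
    (fun y hy => hSv y (hK₂S y hy).1 (hK₂S y hy).2.1)
    (fun y hy => hSv y (hK₁S y hy).1 (hK₁S y hy).2.1)
    K₂.start_mem_support K₁.start_mem_support hK₂c
  rcases hK₁v _ hc (Sym2.mem_mk_left v c) with h | h
  exacts [hac (Sym2.congr_right.mp h).symm, hbc (Sym2.congr_right.mp h).symm]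

theorem two_le_card_privateChildren (hS : G.ThetaFreeOn S) {v z : V} (hv : G.Reachable u v)
    (hSv : ∀ y, G.Reachable u y → G.dist u y ≤ G.dist u v + 2 → y ∈ S) (hdv : G.degree v = 3)
    (hdz : G.degree z = 3) (hz : G.privateChildren u v = {z}) :
    2 ≤ (G.privateChildren u z).card := by
  obtain ⟨hvz, hdvz⟩ := adj_and_dist_of_mem_privateChildren (hz ▸ Finset.mem_singleton_self z)
  -- a cycle `K'` through `v` and its two neighbours other than `z`, which avoids `z`
  obtain ⟨a, ha, b, hb, hab⟩ := (Finset.one_lt_card (s := (G.neighborFinset v).erase z)).mp (by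
    rw [Finset.card_erase_of_mem ((mem_neighborFinset G v z).mpr hvz),
      card_neighborFinset_eq_degree, hdv]
    norm_num)
  have hnbr {x : V} (hx : x ∈ (G.neighborFinset v).erase z) :
      x ≠ z ∧ G.Adj v x ∧ x ∉ G.privateChildren u v := by
    obtain ⟨hxz, hx⟩ := Finset.mem_erase.mp hx
    exact ⟨hxz, (mem_neighborFinset G v x).mp hx, by simpa [hz] using hxz⟩
  obtain ⟨K', hK', -, -, -, hK'S⟩ := exists_isCycle_of_not_mem_privateChildren hv
    (hnbr ha).2.1 (hnbr hb).2.1 hab (hnbr ha).2.2 (hnbr hb).2.2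
  have hzK' : z ∉ K'.support := fun hz' => by
    rcases (hK'S z hz').2.2 hdvz with rfl | rfl
    exacts [(hnbr ha).1 rfl, (hnbr hb).1 rfl]
  -- otherwise a neighbour `x ≠ v` of `z` is no private child, giving a cycle `K` through `z, v`
  by_contra! hlt
  obtain ⟨x, hx, hxz⟩ := Finset.exists_mem_notMem_of_card_lt_card
    (s := G.privateChildren u z) (t := (G.neighborFinset z).erase v) (by
      rw [Finset.card_erase_of_mem ((mem_neighborFinset G z v).mpr hvz.symm),
        card_neighborFinset_eq_degree, hdz]
      omega)
  obtain ⟨hxv, hzx⟩ := Finset.mem_erase.mp hx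
  have hvz' : v ∉ G.privateChildren u z := fun h => by
    have := (adj_and_dist_of_mem_privateChildren h).2
    omega
  obtain ⟨K, hK, hKv, -, -, hKS⟩ := exists_isCycle_of_not_mem_privateChildren
    (hv.trans hvz.reachable) hvz.symm ((mem_neighborFinset G z x).mp hzx) hxv.symm hvz' hxz
  have hzv := hS.edges_subset_of_mem_support hdv.le hK hK'
    (fun y hy => hSv y (hKS y hy).1 (by have := (hKS y hy).2.1; omega))
    (fun y hy => hSv y (hK'S y hy).1 (by have := (hK'S y hy).2.1; omega))
    (K.snd_mem_support_of_mem_edges hKv) K'.start_mem_support hKv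
  exact hzK' (K'.fst_mem_support_of_mem_edges hzv)

variable {N : ℕ}

theorem two_le_sum_card_privateChildren
    (hS : G.ThetaFreeOn {y | G.Reachable u y ∧ G.dist u y ≤ N})
    (hdeg : ∀ y, G.Reachable u y → G.dist u y ≤ N → G.degree y = 3) {v : V}
    (hv : G.Reachable u v) (hvN : G.dist u v + 2 ≤ N) :
    2 ≤ ∑ y ∈ G.privateChildren u v, (G.privateChildren u y).card := by
  have hSv {w : V} (n : ℕ) (hw : G.dist u w + n ≤ N) (y : V) (hy : G.Reachable u y)
      (hyw : G.dist u y ≤ G.dist u w + n) : y ∈ {y | G.Reachable u y ∧ G.dist u y ≤ N} :=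
    ⟨hy, by omega⟩
  have hv1 := hS.privateChildren_nonempty hv (hSv 1 (by omega)) (hdeg v hv (by omega))
  rcases Nat.lt_or_ge (G.privateChildren u v).card 2 with h | h
  · obtain ⟨z, hz⟩ := Finset.card_eq_one.mp (show (G.privateChildren u v).card = 1 by
      have := hv1.card_pos
      omega)
    obtain ⟨hvz, hdz⟩ := adj_and_dist_of_mem_privateChildren (hz ▸ Finset.mem_singleton_self z)
    rw [hz, Finset.sum_singleton]
    exact hS.two_le_card_privateChildren hv (hSv 2 hvN) (hdeg v hv (by omega))
      (hdeg z (hv.trans hvz.reachable) (by omega)) hz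
  · calc 2 ≤ (G.privateChildren u v).card := h
      _ = ∑ _y ∈ G.privateChildren u v, 1 := Finset.card_eq_sum_ones _
      _ ≤ _ := Finset.sum_le_sum fun y hy => by
        obtain ⟨hvy, hdy⟩ := adj_and_dist_of_mem_privateChildren hy
        have hry := hv.trans hvy.reachable
        exact (hS.privateChildren_nonempty hry (hSv 1 (by omega)) (hdeg y hry (by omega))).card_pos

end ThetaFreeOn

theorem biUnion_privateChildren_subset_distLayer (j : ℕ) :
    (G.distLayer u j).biUnion (G.privateChildren u) ⊆ G.distLayer u (j + 1) := by
  intro y hy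
  obtain ⟨v, hv, hy⟩ := Finset.mem_biUnion.mp hy
  rw [mem_distLayer] at hv ⊢
  rw [(adj_and_dist_of_mem_privateChildren hy).2, hv]

theorem pairwiseDisjoint_privateChildren (s : Set V) :
    s.PairwiseDisjoint (G.privateChildren u) := by
  intro v _ w _ hvw
  refine Finset.disjoint_left.mpr fun y hyv hyw => hvw ?_
  rw [mem_privateChildren] at hyv hyw
  exact Finset.singleton_injective (hyv.symm.trans hyw)

theorem sum_card_privateChildren_le (j : ℕ) :
    ∑ v ∈ G.distLayer u j, (G.privateChildren u v).card ≤ (G.distLayer u (j + 1)).card := by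
  rw [← Finset.card_biUnion (pairwiseDisjoint_privateChildren _)]
  exact Finset.card_le_card (biUnion_privateChildren_subset_distLayer j)

namespace ThetaFreeOn

theorem two_mul_card_distLayer_le
    (hS : G.ThetaFreeOn {y | G.Reachable u y ∧ G.dist u y ≤ N})
    (hdeg : ∀ y, G.Reachable u y → G.dist u y ≤ N → G.degree y = 3) {j : ℕ} (hj : 1 ≤ j)
    (hjN : j + 2 ≤ N) : 2 * (G.distLayer u j).card ≤ (G.distLayer u (j + 2)).card :=
  calc 2 * (G.distLayer u j).card
      = ∑ _v ∈ G.distLayer u j, 2 := by rw [Finset.sum_const, smul_eq_mul, mul_comm]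
    _ ≤ ∑ v ∈ G.distLayer u j, ∑ y ∈ G.privateChildren u v, (G.privateChildren u y).card :=
        Finset.sum_le_sum fun v hv => by
          have hdv := mem_distLayer.mp hv
          exact hS.two_le_sum_card_privateChildren hdeg (Reachable.of_dist_ne_zero (by omega))
            (by omega)
    _ = ∑ y ∈ (G.distLayer u j).biUnion (G.privateChildren u), (G.privateChildren u y).card :=
        (Finset.sum_biUnion (pairwiseDisjoint_privateChildren _)).symm
    _ ≤ ∑ y ∈ G.distLayer u (j + 1), (G.privateChildren u y).card :=
        Finset.sum_le_sum_of_subset (biUnion_privateChildren_subset_distLayer j)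
    _ ≤ (G.distLayer u (j + 2)).card := sum_card_privateChildren_le (j + 1)

theorem three_mul_two_pow_le_card_distLayer
    (hS : G.ThetaFreeOn {y | G.Reachable u y ∧ G.dist u y ≤ N})
    (hdeg : ∀ y, G.Reachable u y → G.dist u y ≤ N → G.degree y = 3) (t : ℕ)
    (ht : 2 * t + 1 ≤ N) : 3 * 2 ^ t ≤ (G.distLayer u (2 * t + 1)).card := by
  induction t with
  | zero =>
    have hlayer : G.distLayer u 1 = G.neighborFinset u := by
      ext v
      simp [mem_distLayer]
    simp [hlayer, hdeg u .rfl (by simp)]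
  | succ t ih =>
    have hstep := hS.two_mul_card_distLayer_le hdeg (j := 2 * t + 1) (by omega) (by omega)
    rw [show 2 * t + 1 + 2 = 2 * (t + 1) + 1 by ring] at hstep
    have := ih (by omega)
    rw [pow_succ]
    omega

end ThetaFreeOn

end SimpleGraph

/-- In a subcubic graph on `n ≥ 2` vertices, the ball of radius `2⌈log₂ n⌉` around any vertex
`u` contains a vertex of degree at most 2 or all vertices of a theta. -/
theorem stmt_15 {V : Type*} [Fintype V] (G : SimpleGraph V) [DecidableRel G.Adj]
    (hn : 2 ≤ Fintype.card V) (hdeg : ∀ v : V, G.degree v ≤ 3) (u : V) :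
    (∃ v : V, G.Reachable u v ∧ G.dist u v ≤ 2 * Nat.clog 2 (Fintype.card V) ∧
      G.degree v ≤ 2) ∨
    (∃ (a b : V) (p₁ p₂ p₃ : G.Walk a b), IsTheta G a b p₁ p₂ p₃ ∧
      ∀ x : V, (x ∈ p₁.support ∨ x ∈ p₂.support ∨ x ∈ p₃.support) →
        G.Reachable u x ∧ G.dist u x ≤ 2 * Nat.clog 2 (Fintype.card V)) := by
  classical
  set R := Nat.clog 2 (Fintype.card V)
  refine or_iff_not_imp_left.mpr fun hsmall => ?_
  by_contra htheta
  have hS : G.ThetaFreeOn {x | G.Reachable u x ∧ G.dist u x ≤ 2 * R} :=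
    fun a b p₁ p₂ p₃ hθ => by
      by_contra! hx
      exact htheta ⟨a, b, p₁, p₂, p₃, hθ, hx⟩
  have hdeg₃ (y : V) (hy : G.Reachable u y) (hyR : G.dist u y ≤ 2 * R) : G.degree y = 3 := by
    have := hdeg y
    by_contra
    exact hsmall ⟨y, hy, hyR, by omega⟩
  have hR : 1 ≤ R := Nat.clog_pos one_lt_two hn
  have hlayer := hS.three_mul_two_pow_le_card_distLayer hdeg₃ (R - 1) (by omega)
  have hu : u ∉ G.distLayer u (2 * (R - 1) + 1) := by simp [mem_distLayer]
  have hcard := Finset.card_lt_univ_of_notMem hu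
  have hpow : Fintype.card V ≤ 2 ^ R := Nat.le_pow_clog one_lt_two _
  have : 2 ^ R = 2 * 2 ^ (R - 1) := by rw [← pow_succ']; congr; omega
  omega
end

section
/- There is an absolute constant C such that for every w ≥ 3 and any two proper 3-colorings s and t of the 4×w toroidal grid, there exists a recoloring schedule from s to t of length at most C using colors {1,2,3,4}. -/
open SimpleGraph

/-- The `h × w` toroidal grid: vertices `(a, b) ∈ (ℤ/hℤ) × (ℤ/wℤ)`, with `(a, b)` adjacent to
`(c, d)` iff either `a = c` and `b - d ≡ ±1 (mod w)`, or `b = d` and `a - c ≡ ±1 (mod h)`. -/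
def torGrid (h w : ℕ) : SimpleGraph (ZMod h × ZMod w) where
  Adj x y := x ≠ y ∧
    ((x.1 = y.1 ∧ (x.2 - y.2 = 1 ∨ y.2 - x.2 = 1)) ∨
     (x.2 = y.2 ∧ (x.1 - y.1 = 1 ∨ y.1 - x.1 = 1)))
  symm := by
    constructor
    rintro x y ⟨hne, (⟨h1, h2⟩ | ⟨h1, h2⟩)⟩
    · exact ⟨hne.symm, Or.inl ⟨h1.symm, h2.symm⟩⟩
    · exact ⟨hne.symm, Or.inr ⟨h1.symm, h2.symm⟩⟩
  loopless := by
    constructor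
    rintro x ⟨hne, -⟩
    exact hne rfl

/-!
If `w` is even the torus is bipartite, and three steps suffice: move the vertices of one side
on which `s` and `t` differ to the spare colour 4, recolour the differing vertices of the other
side, and move the parked vertices to their `t`-colour.

If `w` is odd, the torus minus column 0 is still bipartite, so the same three steps finish once
column 0 already carries `t`. To get there, colour 4 is first placed on an independent "shield"
that cuts column 0, together with one pendant neighbour per row, off from the rest of the grid.
Behind the shield, column 0 is a 4-cycle with a pendant at each vertex, and six moves, each
recolouring the cycle on the rows of one parity and the pendants on the rows of the other,
bring it to `t`'s column. In total `1 + 6 + 3 = 10` steps.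
-/

section Schedules

variable {V : Type*} {G : SimpleGraph V} {m : ℕ}

def HasRecolorSchedule (G : SimpleGraph V) (m : ℕ) (s t : V → ℕ) (ℓ : ℕ) : Prop :=
  ∃ X : ℕ → V → ℕ, IsRecolorSchedule G m s t ℓ X

theorem IsProperColoring.mono {m' : ℕ} {x : V → ℕ} (hx : IsProperColoring G m x) (h : m ≤ m') :
    IsProperColoring G m' x :=
  ⟨fun v => Finset.Icc_subset_Icc_right h (hx.1 v), hx.2⟩

theorem IsProperColoring.ne_of_lt {c : ℕ} {x : V → ℕ} (hx : IsProperColoring G m x) (hc : m < c)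
    (v : V) : x v ≠ c := by
  have := Finset.mem_Icc.1 (hx.1 v)
  omega

theorem IsProperColoring.piecewise_const {x : V → ℕ} {c : ℕ} {M : Set V} [DecidablePred (· ∈ M)]
    (hx : IsProperColoring G m x) (hc : c ∈ Finset.Icc 1 m) (hM : G.IsIndepSet M)
    (hxc : ∀ v, x v = c → v ∈ M) : IsProperColoring G m (M.piecewise (fun _ => c) x) := by
  refine ⟨fun v => ?_, fun u v huv => ?_⟩
  · by_cases hv : v ∈ M <;> simp [hv, hc, hx.1 v]
  · by_cases hu : u ∈ M <;> by_cases hv : v ∈ M <;>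
      simp only [Set.piecewise_eq_of_mem, Set.piecewise_eq_of_notMem, hu, hv, not_false_eq_true]
    · exact (hM hu hv huv.ne huv).elim
    · exact fun h => hv (hxc v h.symm)
    · exact fun h => hu (hxc u h)
    · exact hx.2 huv

theorem IsProperColoring.piecewise {y z : V → ℕ} {A : Set V} [DecidablePred (· ∈ A)]
    (hz : IsProperColoring G m z) (hyA : ∀ v ∈ A, y v ∈ Finset.Icc 1 m)
    (hy : ∀ ⦃u v⦄, u ∈ A → v ∈ A → G.Adj u v → y u ≠ y v)
    (hyz : ∀ ⦃u v⦄, u ∈ A → v ∉ A → G.Adj u v → y u ≠ z v) :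
    IsProperColoring G m (A.piecewise y z) := by
  refine ⟨fun v => ?_, fun u v huv => ?_⟩
  · by_cases hv : v ∈ A <;> simp [hv, hyA, hz.1 v]
  · by_cases hu : u ∈ A <;> by_cases hv : v ∈ A <;>
      simp only [Set.piecewise_eq_of_mem, Set.piecewise_eq_of_notMem, hu, hv, not_false_eq_true]
    · exact hy hu hv huv
    · exact hyz hu hv huv
    · exact (hyz hv hu huv.symm).symm
    · exact hz.2 huv

theorem HasRecolorSchedule.single {x y : V → ℕ} (hx : IsProperColoring G m x)
    (hy : IsProperColoring G m y) {S : Set V} (hS : G.IsIndepSet S)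
    (hxy : ∀ v, x v ≠ y v → v ∈ S) : HasRecolorSchedule G m x y 1 := by
  refine ⟨fun i => if i = 0 then x else y, rfl, rfl, fun i _ => ?_, fun i hi₁ hi₂ u v huv => ?_⟩
  · dsimp only
    split_ifs
    exacts [hx, hy]
  · obtain rfl : i = 1 := by omega
    by_contra! h
    exact hS (hxy u h.1) (hxy v h.2) huv.ne huv

theorem HasRecolorSchedule.trans {s r t : V → ℕ} {a b : ℕ} (h₁ : HasRecolorSchedule G m s r a)
    (h₂ : HasRecolorSchedule G m r t b) : HasRecolorSchedule G m s t (a + b) := by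
  obtain ⟨X, hX0, hXa, hXp, hXs⟩ := h₁
  obtain ⟨Y, hY0, hYb, hYp, hYs⟩ := h₂
  set Z := fun i => if i ≤ a then X i else Y (i - a)
  have hZ : ∀ i, a ≤ i → Z i = Y (i - a) := by
    intro i hi
    by_cases h : i ≤ a
    · obtain rfl : i = a := le_antisymm h hi
      simp [Z, hXa, hY0]
    · simp [Z, h]
  refine ⟨Z, by simp [Z, hX0], ?_, fun i hi => ?_, fun i hi₁ hi₂ => ?_⟩
  · rw [hZ _ (by omega), Nat.add_sub_cancel_left, hYb]
  · by_cases h : i ≤ a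
    · simpa [Z, h] using hXp i h
    · rw [hZ _ (by omega)]
      exact hYp _ (by omega)
  · by_cases h : i ≤ a
    · simpa [Z, h, show i - 1 ≤ a by omega] using hXs i hi₁ h
    · rw [hZ i (by omega), hZ (i - 1) (by omega), show i - 1 - a = i - a - 1 by omega]
      exact hYs (i - a) (by omega) (by omega)

theorem hasRecolorSchedule_of_bipartition {c : ℕ} (hc : c ∈ Finset.Icc 1 m) {s t : V → ℕ}
    (hs : IsProperColoring G m s) (ht : IsProperColoring G m t) (K : Set V)
    (hK : ∀ ⦃u v⦄, G.Adj u v → s u ≠ t u → s v ≠ t v → (u ∈ K ↔ v ∉ K))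
    (hsc : ∀ v, s v = c → v ∈ K ∧ t v ≠ c) (htc : ∀ v, t v = c → v ∈ K ∧ s v ≠ c) :
    HasRecolorSchedule G m s t 3 := by
  classical
  set M := {v | s v ≠ t v ∧ v ∈ K}
  have hM : G.IsIndepSet M := fun u hu v hv _ huv => (hK huv hu.1 hv.1).1 hu.2 hv.2
  have hrest : G.IsIndepSet {v | s v ≠ t v ∧ v ∉ M} := fun u hu v hv _ huv =>
    hu.2 ⟨hu.1, (hK huv hu.1 hv.1).2 fun h => hv.2 ⟨hv.1, h⟩⟩
  have hs' := hs.piecewise_const hc hM fun v hv =>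
    ⟨fun h => (hsc v hv).2 (h ▸ hv), (hsc v hv).1⟩
  have ht' := ht.piecewise_const hc hM fun v hv =>
    ⟨fun h => (htc v hv).2 (h ▸ hv), (htc v hv).1⟩
  refine (HasRecolorSchedule.single hs hs' hM fun v hv => ?_).trans <|
    (HasRecolorSchedule.single hs' ht' hrest fun v hv => ?_).trans <|
    HasRecolorSchedule.single ht' ht hM fun v hv => ?_
  · by_contra h
    simp [h] at hv
  · by_cases h : v ∈ M
    · simp [h] at hv
    · simp only [Set.piecewise_eq_of_notMem _ _ _ h] at hv
      exact ⟨hv, h⟩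
  · by_contra h
    simp [h] at hv

end Schedules

def freeColor (a b : ℕ) : ℕ := if a ≠ 1 ∧ b ≠ 1 then 1 else if a ≠ 2 ∧ b ≠ 2 then 2 else 3

section FreeColor

variable (a b : ℕ)

@[simp] theorem freeColor_ne_left : freeColor a b ≠ a := by unfold freeColor; split_ifs <;> omega

@[simp] theorem freeColor_ne_right : freeColor a b ≠ b := by unfold freeColor; split_ifs <;> omega

@[simp] theorem left_ne_freeColor : a ≠ freeColor a b := (freeColor_ne_left a b).symm

@[simp] theorem right_ne_freeColor : b ≠ freeColor a b := (freeColor_ne_right a b).symm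

@[simp] theorem one_le_freeColor : 1 ≤ freeColor a b := by unfold freeColor; split_ifs <;> omega

@[simp] theorem freeColor_le_three : freeColor a b ≤ 3 := by
  unfold freeColor; split_ifs <;> omega

end FreeColor

theorem ZMod.val_add_one_or {n : ℕ} (hn : 1 < n) (b : ZMod n) :
    (b + 1).val = b.val + 1 ∧ b.val + 1 < n ∨ b.val + 1 = n ∧ (b + 1).val = 0 := by
  have : NeZero n := ⟨by omega⟩
  have : Fact (1 < n) := ⟨hn⟩
  rw [ZMod.val_add, ZMod.val_one]
  rcases Nat.lt_or_ge (b.val + 1) n with h | h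
  · exact .inl ⟨Nat.mod_eq_of_lt h, h⟩
  · have : b.val + 1 = n := le_antisymm (ZMod.val_lt b) h
    exact .inr ⟨this, by rw [this, Nat.mod_self]⟩

theorem torGrid_adj_add_one_fst {h w : ℕ} (hh : 1 < h) (a : ZMod h) (b : ZMod w) :
    (torGrid h w).Adj (a, b) (a + 1, b) := by
  have : Fact (1 < h) := ⟨hh⟩
  exact ⟨by simp, .inr ⟨rfl, .inr (by simp)⟩⟩

theorem torGrid_adj_add_one_snd {h w : ℕ} (hw : 1 < w) (a : ZMod h) (b : ZMod w) :
    (torGrid h w).Adj (a, b) (a, b + 1) := by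
  have : Fact (1 < w) := ⟨hw⟩
  exact ⟨by simp, .inl ⟨rfl, .inr (by simp)⟩⟩

section Torus

variable {w : ℕ}

theorem torGrid_adj_val_cases (hw : 3 ≤ w) {a a' : ZMod 4} {b b' : ZMod w}
    (h : (torGrid 4 w).Adj (a, b) (a', b')) :
    (a = a' ∧ (b'.val = b.val + 1 ∨ b.val = b'.val + 1 ∨ b.val + 1 = w ∧ b'.val = 0 ∨
        b'.val + 1 = w ∧ b.val = 0)) ∨
      (b = b' ∧ a.val % 2 ≠ a'.val % 2 ∧ (a' = a + 1 ∨ a = a' + 1)) := by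
  have parity : ∀ a : ZMod 4, (a + 1).val % 2 ≠ a.val % 2 := by decide
  obtain ⟨-, ⟨rfl, hb⟩ | ⟨rfl, ha⟩⟩ := h
  · refine .inl ⟨rfl, ?_⟩
    dsimp only at hb
    rcases hb with hb | hb <;> rw [sub_eq_iff_eq_add'] at hb <;> subst hb
    · rcases ZMod.val_add_one_or (by omega) b' with h | h <;> omega
    · rcases ZMod.val_add_one_or (by omega) b with h | h <;> omega
  · refine .inr ⟨rfl, ?_⟩
    dsimp only at ha
    rcases ha with ha | ha <;> rw [sub_eq_iff_eq_add'] at ha <;> subst ha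
    · exact ⟨parity a', .inr rfl⟩
    · exact ⟨(parity a).symm, .inl rfl⟩

def oddCells (w : ℕ) : Set (ZMod 4 × ZMod w) := {v | (v.1.val + v.2.val) % 2 = 1}

theorem mem_oddCells_iff_not_of_adj (hw : 3 ≤ w) {u v : ZMod 4 × ZMod w}
    (h : (torGrid 4 w).Adj u v) (hseam : w % 2 = 0 ∨ u.2.val ≠ 0 ∧ v.2.val ≠ 0) :
    u ∈ oddCells w ↔ v ∉ oddCells w := by
  obtain ⟨a, b⟩ := u
  obtain ⟨a', b'⟩ := v
  simp only [oddCells, Set.mem_ofPred_eq] at *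
  rcases torGrid_adj_val_cases hw h with ⟨rfl, hb⟩ | ⟨rfl, ha, -⟩ <;> omega

theorem hasRecolorSchedule_of_even (hw : 3 ≤ w) (heven : w % 2 = 0) {s t : ZMod 4 × ZMod w → ℕ}
    (hs : IsProperColoring (torGrid 4 w) 3 s) (ht : IsProperColoring (torGrid 4 w) 3 t) :
    HasRecolorSchedule (torGrid 4 w) 4 s t 3 :=
  hasRecolorSchedule_of_bipartition (c := 4) (by simp) (hs.mono (by norm_num))
    (ht.mono (by norm_num)) (oddCells w)
    (fun u v huv _ _ => mem_oddCells_iff_not_of_adj hw huv (.inl heven))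
    (fun v hv => (hs.ne_of_lt (by norm_num) v hv).elim)
    fun v hv => (ht.ne_of_lt (by norm_num) v hv).elim

/- Columns are given by `val` so that adjacency facts reduce to `omega`. For `w = 3` the columns
`2` and `w - 1` coincide, as do `1` and `w - 2`. -/

def pendants (w : ℕ) : Set (ZMod 4 × ZMod w) :=
  {v | v.1.val % 2 = 1 ∧ v.2.val = 1 ∨ v.1.val % 2 = 0 ∧ v.2.val + 1 = w}

def core (w : ℕ) : Set (ZMod 4 × ZMod w) := {v | v.2.val = 0} ∪ pendants w

def shield (w : ℕ) : Set (ZMod 4 × ZMod w) :=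
  {v | v.1.val % 2 = 1 ∧ (v.2.val = 2 ∨ v.2.val + 1 = w) ∨
    v.1.val % 2 = 0 ∧ (v.2.val = 1 ∨ v.2.val + 2 = w)}

def pendantCol (w : ℕ) (a : ZMod 4) : ZMod w := if a.val % 2 = 1 then 1 else -1

theorem snd_eq_of_mem_pendants (hw : 3 ≤ w) {v : ZMod 4 × ZMod w} (hv : v ∈ pendants w) :
    v.2 = pendantCol w v.1 := by
  have : NeZero w := ⟨by omega⟩
  have : Fact (1 < w) := ⟨by omega⟩
  simp only [pendants, Set.mem_ofPred_eq] at hv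
  unfold pendantCol
  split_ifs with h
  · exact ZMod.val_injective _ (by rw [ZMod.val_one]; omega)
  · rw [eq_neg_iff_add_eq_zero, ← ZMod.val_eq_zero]
    rcases ZMod.val_add_one_or (by omega) v.2 with h' | h' <;> omega

theorem mem_shield_of_adj_core (hw : 3 ≤ w) {u v : ZMod 4 × ZMod w} (hu : u ∈ core w)
    (hv : v ∉ core w) (h : (torGrid 4 w).Adj u v) : v ∈ shield w := by
  obtain ⟨a, b⟩ := u
  obtain ⟨a', b'⟩ := v
  have : NeZero w := ⟨by omega⟩
  have := b.val_lt
  have := b'.val_lt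
  simp only [core, pendants, shield, Set.mem_union, Set.mem_ofPred_eq] at *
  rcases torGrid_adj_val_cases hw h with ⟨rfl, hb⟩ | ⟨rfl, ha, -⟩ <;> omega

theorem adj_cases_of_mem_core (hw : 3 ≤ w) {u v : ZMod 4 × ZMod w} (hu : u ∈ core w)
    (hv : v ∈ core w) (h : (torGrid 4 w).Adj u v) :
    (u.2.val = 0 ∧ v.2.val = 0 ∧ (v.1 = u.1 + 1 ∨ u.1 = v.1 + 1)) ∨
      (u.1 = v.1 ∧ (u.2.val = 0 ↔ v.2.val ≠ 0)) := by
  obtain ⟨a, b⟩ := u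
  obtain ⟨a', b'⟩ := v
  have : NeZero w := ⟨by omega⟩
  have := b.val_lt
  have := b'.val_lt
  simp only [core, pendants, Set.mem_union, Set.mem_ofPred_eq] at *
  rcases torGrid_adj_val_cases hw h with ⟨rfl, hb⟩ | ⟨rfl, ha, hrow⟩
  · exact .inr ⟨rfl, by omega⟩
  · exact .inl ⟨by omega, by omega, hrow⟩

theorem shield_subset_oddCells (hodd : w % 2 = 1) : shield w ⊆ oddCells w := by
  intro v hv
  simp only [shield, oddCells, Set.mem_ofPred_eq] at *
  omega

theorem isIndepSet_shield (hw : 3 ≤ w) (hodd : w % 2 = 1) :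
    (torGrid 4 w).IsIndepSet (shield w) := by
  intro u hu v hv _ huv
  have hcol : ∀ x ∈ shield w, x.2.val ≠ 0 := fun x hx => by
    simp only [shield, Set.mem_ofPred_eq] at hx
    omega
  exact (mem_oddCells_iff_not_of_adj hw huv (.inr ⟨hcol u hu, hcol v hv⟩)).1
    (shield_subset_oddCells hodd hu) (shield_subset_oddCells hodd hv)

def coreMoveSet (w p : ℕ) : Set (ZMod 4 × ZMod w) :=
  {v | v.2.val = 0 ∧ v.1.val % 2 = p ∨ v ∈ pendants w ∧ v.1.val % 2 ≠ p}

theorem isIndepSet_coreMoveSet (hw : 3 ≤ w) (p : ℕ) :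
    (torGrid 4 w).IsIndepSet (coreMoveSet w p) := by
  rintro ⟨a, b⟩ hu ⟨a', b'⟩ hv - h
  have : NeZero w := ⟨by omega⟩
  have := b.val_lt
  have := b'.val_lt
  simp only [coreMoveSet, pendants, Set.mem_ofPred_eq] at *
  rcases torGrid_adj_val_cases hw h with ⟨rfl, hb⟩ | ⟨rfl, ha, -⟩ <;> omega

def IsCycleColoring (g : ZMod 4 → ℕ) : Prop :=
  g 0 ≠ g 1 ∧ g 1 ≠ g 2 ∧ g 2 ≠ g 3 ∧ g 3 ≠ g 0 ∧ ∀ a, g a ∈ Finset.Icc 1 3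

theorem IsCycleColoring.ne_add_one {g : ZMod 4 → ℕ} (hg : IsCycleColoring g) (a : ZMod 4) :
    g a ≠ g (a + 1) := by
  obtain ⟨h01, h12, h23, h30, -⟩ := hg
  have : a = 0 ∨ a = 1 ∨ a = 2 ∨ a = 3 := by revert a; decide
  rcases this with rfl | rfl | rfl | rfl
  exacts [h01, h12, h23, h30]

theorem isCycleColoring_column {t : ZMod 4 × ZMod w → ℕ}
    (ht : IsProperColoring (torGrid 4 w) 3 t) (b : ZMod w) : IsCycleColoring fun a => t (a, b) :=
  ⟨ht.2 (torGrid_adj_add_one_fst (by norm_num) 0 b),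
    ht.2 (torGrid_adj_add_one_fst (by norm_num) 1 b),
    ht.2 (torGrid_adj_add_one_fst (by norm_num) 2 b),
    ht.2 (torGrid_adj_add_one_fst (by norm_num) 3 b), fun a => ht.1 _⟩

def IsCoreColoring (g e : ZMod 4 → ℕ) : Prop :=
  IsCycleColoring g ∧ ∀ a, e a ≠ g a ∧ e a ∈ Finset.Icc 1 3

def coreColoring (g e : ZMod 4 → ℕ) (v : ZMod 4 × ZMod w) : ℕ :=
  if v.2.val = 0 then g v.1 else e v.1

theorem IsCoreColoring.coreColoring_mem {g e : ZMod 4 → ℕ} (hge : IsCoreColoring g e)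
    (v : ZMod 4 × ZMod w) : coreColoring g e v ∈ Finset.Icc 1 3 := by
  unfold coreColoring
  split_ifs
  exacts [hge.1.2.2.2.2 _, (hge.2 _).2]

theorem isCoreColoring_self (hw : 3 ≤ w) {s : ZMod 4 × ZMod w → ℕ}
    (hs : IsProperColoring (torGrid 4 w) 3 s) :
    IsCoreColoring (fun a => s (a, 0)) fun a => s (a, pendantCol w a) := by
  refine ⟨isCycleColoring_column hs 0, fun a => ⟨?_, hs.1 _⟩⟩
  dsimp only [pendantCol]
  split_ifs
  · simpa using (hs.2 (torGrid_adj_add_one_snd (by omega) a 0)).symm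
  · simpa using hs.2 (torGrid_adj_add_one_snd (by omega) a (-1))

open Classical in
noncomputable def shielded (s : ZMod 4 × ZMod w → ℕ) (g e : ZMod 4 → ℕ) :
    ZMod 4 × ZMod w → ℕ :=
  (core w).piecewise (coreColoring g e) ((shield w).piecewise (fun _ => 4) s)

theorem isProperColoring_shielded (hw : 3 ≤ w) (hodd : w % 2 = 1) {s : ZMod 4 × ZMod w → ℕ}
    (hs : IsProperColoring (torGrid 4 w) 3 s) {g e : ZMod 4 → ℕ} (hge : IsCoreColoring g e) :
    IsProperColoring (torGrid 4 w) 4 (shielded s g e) := by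
  classical
  have hy := hge.coreColoring_mem (w := w)
  refine IsProperColoring.piecewise (IsProperColoring.piecewise_const (hs.mono (by norm_num))
    (by simp) (isIndepSet_shield hw hodd) fun v hv => (hs.ne_of_lt (by norm_num) v hv).elim)
    (fun v _ => Finset.Icc_subset_Icc_right (by norm_num) (hy v)) (fun u v hu hv huv => ?_)
    fun u v hu hv huv => ?_
  · rcases adj_cases_of_mem_core hw hu hv huv with ⟨hu0, hv0, hrow | hrow⟩ | ⟨hrow, h0⟩
    · simp only [coreColoring, hu0, hv0, if_true, hrow]
      exact hge.1.ne_add_one _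
    · simp only [coreColoring, hu0, hv0, if_true, hrow]
      exact (hge.1.ne_add_one _).symm
    · by_cases hu0 : u.2.val = 0
      · simp [coreColoring, hu0, h0.1 hu0, hrow, (hge.2 _).1.symm]
      · simp [coreColoring, hu0, show v.2.val = 0 by tauto, hrow, (hge.2 _).1]
  · rw [Set.piecewise_eq_of_mem _ _ _ (mem_shield_of_adj_core hw hu hv huv)]
    have := Finset.mem_Icc.1 (hy u)
    omega

theorem hasRecolorSchedule_shielded_self (hw : 3 ≤ w) (hodd : w % 2 = 1)
    {s : ZMod 4 × ZMod w → ℕ} (hs : IsProperColoring (torGrid 4 w) 3 s) :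
    HasRecolorSchedule (torGrid 4 w) 4 s
      (shielded s (fun a => s (a, 0)) fun a => s (a, pendantCol w a)) 1 := by
  classical
  refine .single (hs.mono (by norm_num))
    (isProperColoring_shielded hw hodd hs (isCoreColoring_self hw hs)) (isIndepSet_shield hw hodd)
    fun v hv => ?_
  have : NeZero w := ⟨by omega⟩
  by_cases hc : v ∈ core w
  · refine (hv ?_).elim
    simp only [shielded, Set.piecewise_eq_of_mem _ _ _ hc, coreColoring]
    split_ifs with h0
    · rw [ZMod.val_eq_zero] at h0
      rw [← h0]
    · rw [← snd_eq_of_mem_pendants hw (hc.resolve_left h0)]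
  · by_contra hF
    simp [shielded, Set.piecewise_eq_of_notMem _ _ _ hc, Set.piecewise_eq_of_notMem _ _ _ hF] at hv

theorem hasRecolorSchedule_shielded_move (hw : 3 ≤ w) (hodd : w % 2 = 1)
    {s : ZMod 4 × ZMod w → ℕ} (hs : IsProperColoring (torGrid 4 w) 3 s)
    {g e g' e' : ZMod 4 → ℕ} (hge : IsCoreColoring g e) (hge' : IsCoreColoring g' e') (p : ℕ)
    (hg : ∀ a : ZMod 4, a.val % 2 ≠ p → g' a = g a)
    (he : ∀ a : ZMod 4, a.val % 2 = p → e' a = e a) :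
    HasRecolorSchedule (torGrid 4 w) 4 (shielded s g e) (shielded s g' e') 1 := by
  classical
  refine .single (isProperColoring_shielded hw hodd hs hge)
    (isProperColoring_shielded hw hodd hs hge') (isIndepSet_coreMoveSet hw p) fun v hv => ?_
  by_cases hc : v ∈ core w
  · simp only [shielded, Set.piecewise_eq_of_mem _ _ _ hc, coreColoring] at hv
    by_cases h0 : v.2.val = 0
    · simp only [h0, if_true] at hv
      exact .inl ⟨h0, by_contra fun hp => hv (hg _ hp).symm⟩
    · simp only [h0, if_false] at hv
      exact .inr ⟨hc.resolve_left h0, fun hp => hv (he _ hp).symm⟩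
  · simp [shielded, Set.piecewise_eq_of_notMem _ _ _ hc] at hv

def alternate (x y : ZMod 4 → ℕ) (a : ZMod 4) : ℕ := if a.val % 2 = 0 then x a else y a

/- The cycle passes through `g → (g, p) → (q, p) → (q, u) → (g', u) → g'`, listing the colours
on (even, odd) rows, where `p` avoids `g` on even rows, `u` avoids `g'` on even rows and `q`
avoids `p` and `u`. Before a class of cycle vertices changes from `x` to `y`, its pendants are
moved to `freeColor x y`, in the preceding move. -/
theorem exists_hasRecolorSchedule_shielded (hw : 3 ≤ w) (hodd : w % 2 = 1)
    {s : ZMod 4 × ZMod w → ℕ} (hs : IsProperColoring (torGrid 4 w) 3 s) {g e g' : ZMod 4 → ℕ}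
    (hge : IsCoreColoring g e) (hg' : IsCycleColoring g') :
    ∃ e', IsCoreColoring g' e' ∧
      HasRecolorSchedule (torGrid 4 w) 4 (shielded s g e) (shielded s g' e') 6 := by
  set p := freeColor (g 0) (g 2)
  set u := freeColor (g' 0) (g' 2)
  set q := freeColor p u
  set e₁ := alternate e fun a => freeColor (g a) p
  set g₂ := alternate g fun _ => p
  set e₂ := alternate (fun a => freeColor (g a) q) fun a => freeColor (g a) p
  set g₃ := alternate (fun _ => q) fun _ => p
  set e₃ := alternate (fun a => freeColor (g a) q) fun _ => freeColor p u
  set g₄ := alternate (fun _ => q) fun _ => u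
  set e₄ := alternate (fun a => freeColor q (g' a)) fun _ => freeColor p u
  set g₅ := alternate g' fun _ => u
  set e₅ := alternate (fun a => freeColor q (g' a)) fun a => freeColor u (g' a)
  obtain ⟨⟨h01, h12, h23, h30, hg⟩, he⟩ := hge
  obtain ⟨h01', h12', h23', h30', hg'⟩ := hg'
  simp only [Finset.mem_Icc] at hg hg' he
  obtain ⟨v₀, v₁, v₂, v₃, v₄, v₅, v₆⟩ : IsCoreColoring g e ∧ IsCoreColoring g e₁ ∧
      IsCoreColoring g₂ e₂ ∧ IsCoreColoring g₃ e₃ ∧ IsCoreColoring g₄ e₄ ∧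
      IsCoreColoring g₅ e₅ ∧ IsCoreColoring g' e₅ := by
    refine ⟨?_, ?_, ?_, ?_, ?_, ?_, ?_⟩ <;>
      refine ⟨⟨?_, ?_, ?_, ?_, fun a => ?_⟩, fun a => ⟨?_, ?_⟩⟩ <;>
      (try simp +decide only [e₁, g₂, e₂, g₃, e₃, g₄, e₄, g₅, e₅, alternate, ↓reduceIte,
        Finset.mem_Icc]) <;> (try split_ifs) <;> simp [p, q, u, *]
  have move := @hasRecolorSchedule_shielded_move _ hw hodd _ hs
  refine ⟨e₅, v₆, (move v₀ v₁ 0 ?_ ?_).trans <| (move v₁ v₂ 1 ?_ ?_).trans <|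
    (move v₂ v₃ 0 ?_ ?_).trans <| (move v₃ v₄ 1 ?_ ?_).trans <|
    (move v₄ v₅ 0 ?_ ?_).trans (move v₅ v₆ 1 ?_ ?_)⟩ <;>
    intro a ha <;> rcases Nat.mod_two_eq_zero_or_one a.val with h | h <;>
    first | omega | simp [e₁, g₂, e₂, g₃, e₃, g₄, e₄, g₅, e₅, alternate, h]

theorem hasRecolorSchedule_shielded_target (hw : 3 ≤ w) (hodd : w % 2 = 1)
    {s t : ZMod 4 × ZMod w → ℕ} (hs : IsProperColoring (torGrid 4 w) 3 s)
    (ht : IsProperColoring (torGrid 4 w) 3 t) {e : ZMod 4 → ℕ}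
    (he : IsCoreColoring (fun a => t (a, 0)) e) :
    HasRecolorSchedule (torGrid 4 w) 4 (shielded s (fun a => t (a, 0)) e) t 3 := by
  classical
  have : NeZero w := ⟨by omega⟩
  have hcol : ∀ v, shielded s (fun a => t (a, 0)) e v ≠ t v → v.2.val ≠ 0 := by
    intro v hv h0
    have hc : v ∈ core w := .inl h0
    simp only [shielded, Set.piecewise_eq_of_mem _ _ _ hc, coreColoring, h0, if_true] at hv
    rw [ZMod.val_eq_zero] at h0
    exact hv (by rw [← h0])
  refine hasRecolorSchedule_of_bipartition (c := 4) (by simp)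
    (isProperColoring_shielded hw hodd hs he) (ht.mono (by norm_num)) (oddCells w)
    (fun u v huv hu hv => mem_oddCells_iff_not_of_adj hw huv (.inr ⟨hcol u hu, hcol v hv⟩))
    (fun v hv => ⟨?_, ht.ne_of_lt (by norm_num) v⟩)
    fun v hv => (ht.ne_of_lt (by norm_num) v hv).elim
  have hc : v ∉ core w := fun hc => by
    simp only [shielded, Set.piecewise_eq_of_mem _ _ _ hc] at hv
    have := Finset.mem_Icc.1 (he.coreColoring_mem v)
    omega
  have hF : v ∈ shield w := by
    by_contra hF
    simp only [shielded, Set.piecewise_eq_of_notMem _ _ _ hc,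
      Set.piecewise_eq_of_notMem _ _ _ hF] at hv
    exact hs.ne_of_lt (by norm_num) v hv
  exact shield_subset_oddCells hodd hF

theorem hasRecolorSchedule_of_odd (hw : 3 ≤ w) (hodd : w % 2 = 1) {s t : ZMod 4 × ZMod w → ℕ}
    (hs : IsProperColoring (torGrid 4 w) 3 s) (ht : IsProperColoring (torGrid 4 w) 3 t) :
    HasRecolorSchedule (torGrid 4 w) 4 s t 10 := by
  obtain ⟨e, he, hcore⟩ := exists_hasRecolorSchedule_shielded hw hodd hs
    (isCoreColoring_self hw hs) (isCycleColoring_column ht 0)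
  exact ((hasRecolorSchedule_shielded_self hw hodd hs).trans hcore).trans
    (hasRecolorSchedule_shielded_target hw hodd hs ht he)

end Torus

/-- 3+1 recoloring in `4 × w` toroidal grids: a schedule of constant length always exists. -/
theorem stmt_17 :
    ∃ C : ℕ, ∀ w : ℕ, 3 ≤ w →
      ∀ s t : ZMod 4 × ZMod w → ℕ,
        IsProperColoring (torGrid 4 w) 3 s → IsProperColoring (torGrid 4 w) 3 t →
        ∃ ℓ ≤ C, ∃ X : ℕ → ZMod 4 × ZMod w → ℕ, IsRecolorSchedule (torGrid 4 w) 4 s t ℓ X := by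
  refine ⟨10, fun w hw s t hs ht => ?_⟩
  rcases Nat.mod_two_eq_zero_or_one w with heven | hodd
  · obtain ⟨X, hX⟩ := hasRecolorSchedule_of_even hw heven hs ht
    exact ⟨3, by norm_num, X, hX⟩
  · obtain ⟨X, hX⟩ := hasRecolorSchedule_of_odd hw hodd hs ht
    exact ⟨10, le_rfl, X, hX⟩
end
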